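/- arXiv:2403.19397 — 9 statements merged into one kernel-verified Lean document; each statement's English description precedes it below -/
import Mathlib

section
/- Let m ≥ 2 be an integer and A > 1 a real number. Then for every 0 < ε < 1/(m(m+1)), the sum over tuples (v_1,...,v_{m-1}) of positive integers satisfying ∏_{r=1}^{m-1} v_r^{m+r} > A of ∏_{r=1}^{m-1} v_r^{-(m+r)/m} is bounded by a constant (depending only on m and ε) times A^{-1/(m(m+1))+ε}. -/
open scoped ENNReal BigOperators

/-- Factorization of a tsum over a Pi type into a product of tsums, in `ℝ≥0∞`. -/
lemma aux_tsum_pi : ∀ (n : ℕ) (h : Fin n → ℕ → ℝ≥0∞),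
    ∑' v : Fin n → ℕ, ∏ r, h r (v r) = ∏ r, ∑' k, h r k := by
  intro n
  induction n with
  | zero =>
    intro h
    rw [tsum_eq_single (fun i : Fin 0 => i.elim0)]
    · simp
    · intro b hb
      exact absurd (funext fun i => i.elim0) hb
  | succ n ih =>
    intro h
    rw [← (Fin.consEquiv (fun _ : Fin (n + 1) => ℕ)).tsum_eq, ENNReal.tsum_prod']
    have key : ∀ (a : ℕ) (b : Fin n → ℕ),
        (∏ r, h r ((Fin.consEquiv (fun _ : Fin (n + 1) => ℕ)) (a, b) r))
          = h 0 a * ∏ r, h r.succ (b r) := by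
      intro a b
      rw [Fin.prod_univ_succ]
      simp [Fin.consEquiv]
    simp_rw [key, ENNReal.tsum_mul_left, ENNReal.tsum_mul_right]
    rw [ih fun r => h r.succ, Fin.prod_univ_succ]

set_option maxHeartbeats 1000000 in
/-- Lemma `lemdecay`, special case without gcd factor:
For `m ≥ 2` and `0 < ε < 1/(m(m+1))`, the sum over `(m-1)`-tuples of positive
integers `v` with `∏ v_r^{m+r} > A` of `∏ v_r^{-(m+r)/m}` is
`≪_{m,ε} A^{-1/(m(m+1))+ε}` uniformly in `A > 1`. -/
theorem stmt_0 (m : ℕ) (hm : 2 ≤ m) (ε : ℝ)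
    (hε : 0 < ε) (hε' : ε < 1 / (m * (m + 1))) :
    ∃ C : ℝ, 0 < C ∧ ∀ A : ℝ, 1 < A →
      (∑' v : {v : Fin (m - 1) → ℕ //
          (∀ r, 0 < v r) ∧ A < ∏ r, (v r : ℝ) ^ (m + 1 + (r : ℕ))},
        ∏ r, (v.1 r : ℝ) ^ (-(((m : ℝ) + 1 + (r : ℕ)) / m))) ≤
      C * A ^ (-(1 / ((m : ℝ) * (m + 1))) + ε) := by
  have hmR : (2 : ℝ) ≤ m := by exact_mod_cast hm
  have hm0 : (0 : ℝ) < m := by linarith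
  have hm1 : (0 : ℝ) < (m : ℝ) + 1 := by linarith
  set δ : ℝ := 1 / ((m : ℝ) * (m + 1)) - ε with hδdef
  have hδpos : 0 < δ := sub_pos.mpr hε'
  have hkey : 1 / (m : ℝ) - δ = 1 / ((m : ℝ) + 1) + ε := by
    rw [hδdef]
    field_simp
    ring
  set s : Fin (m - 1) → ℝ := fun r => ((m : ℝ) + 1 + (r : ℕ)) * (1 / (m : ℝ) - δ)
    with hsdef
  have hs1 : ∀ r, 1 < s r := by
    intro r
    have hr0 : (0 : ℝ) ≤ (r : ℕ) := Nat.cast_nonneg _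
    have hinv : ((m : ℝ) + 1) * (1 / ((m : ℝ) + 1)) = 1 := by field_simp
    have hpos : (0 : ℝ) < 1 / ((m : ℝ) + 1) + ε := by positivity
    rw [hsdef]
    simp only
    rw [hkey]
    nlinarith [mul_nonneg hr0 hpos.le, mul_pos hm1 hε]
  set Z : Fin (m - 1) → ℝ≥0∞ := fun r => ∑' k : ℕ, ENNReal.ofReal ((k : ℝ) ^ (-(s r)))
    with hZdef
  have hZsum : ∀ r, Summable (fun k : ℕ => (k : ℝ) ^ (-(s r))) := fun r =>
    Real.summable_nat_rpow.mpr (by linarith [hs1 r])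
  have hZne : ∀ r, Z r ≠ ⊤ := by
    intro r
    rw [hZdef]
    simp only
    rw [← ENNReal.ofReal_tsum_of_nonneg (fun k => Real.rpow_nonneg (Nat.cast_nonneg k) _)
      (hZsum r)]
    exact ENNReal.ofReal_ne_top
  have hZ1 : ∀ r, 1 ≤ Z r := by
    intro r
    have h := ENNReal.le_tsum (f := fun k : ℕ => ENNReal.ofReal ((k : ℝ) ^ (-(s r)))) 1
    simpa using h
  have hPne : (∏ r, Z r) ≠ ⊤ := ENNReal.prod_ne_top fun r _ => hZne r
  set C : ℝ := (∏ r, Z r).toReal with hCdef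
  have hC1 : 1 ≤ C := by
    have h1 : (1 : ℝ≥0∞) ≤ ∏ r, Z r := Finset.one_le_prod' fun r _ => hZ1 r
    have h2 := ENNReal.toReal_mono hPne h1
    rwa [ENNReal.toReal_one] at h2
  refine ⟨C, by linarith, ?_⟩
  intro A hA
  have hA0 : (0 : ℝ) < A := lt_trans one_pos hA
  have hexp : -(1 / ((m : ℝ) * (m + 1))) + ε = -δ := by rw [hδdef]; ring
  rw [hexp]
  have hRHS0 : (0 : ℝ) < C * A ^ (-δ) :=
    mul_pos (by linarith) (Real.rpow_pos_of_pos hA0 _)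
  -- key pointwise inequality
  have hterm : ∀ (v : {v : Fin (m - 1) → ℕ //
      (∀ r, 0 < v r) ∧ A < ∏ r, (v r : ℝ) ^ (m + 1 + (r : ℕ))}),
      (∏ r, (v.1 r : ℝ) ^ (-(((m : ℝ) + 1 + (r : ℕ)) / m)))
        ≤ A ^ (-δ) * ∏ r, (v.1 r : ℝ) ^ (-(s r)) := by
    rintro ⟨v, hv1, hv2⟩
    have hvpos : ∀ r, (0 : ℝ) < v r := fun r => by exact_mod_cast hv1 r
    have split : ∀ r : Fin (m - 1), ((v r : ℝ)) ^ (-(((m : ℝ) + 1 + (r : ℕ)) / m))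
        = (v r : ℝ) ^ (-(((m : ℝ) + 1 + (r : ℕ)) * δ)) * (v r : ℝ) ^ (-(s r)) := by
      intro r
      rw [← Real.rpow_add (hvpos r)]
      congr 1
      rw [hsdef]
      simp only
      field_simp
      ring
    calc (∏ r, (v r : ℝ) ^ (-(((m : ℝ) + 1 + (r : ℕ)) / m)))
        = (∏ r, (v r : ℝ) ^ (-(((m : ℝ) + 1 + (r : ℕ)) * δ)))
            * ∏ r, (v r : ℝ) ^ (-(s r)) := by
          rw [← Finset.prod_mul_distrib]
          exact Finset.prod_congr rfl fun r _ => split r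
      _ ≤ A ^ (-δ) * ∏ r, (v r : ℝ) ^ (-(s r)) := by
          refine mul_le_mul_of_nonneg_right ?_
            (Finset.prod_nonneg fun r _ => Real.rpow_nonneg (hvpos r).le _)
          have heq : ∀ r : Fin (m - 1), (v r : ℝ) ^ (-(((m : ℝ) + 1 + (r : ℕ)) * δ))
              = ((v r : ℝ) ^ (m + 1 + (r : ℕ))) ^ (-δ) := by
            intro r
            rw [← Real.rpow_natCast (v r : ℝ) (m + 1 + (r : ℕ)),
              ← Real.rpow_mul (hvpos r).le]
            congr 1
            push_cast
            ring
          rw [Finset.prod_congr rfl fun r _ => heq r,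
            Real.finset_prod_rpow _ _ (fun r _ => by positivity) (-δ)]
          exact Real.rpow_le_rpow_of_nonpos hA0 hv2.le (by linarith)
  set F : {v : Fin (m - 1) → ℕ //
      (∀ r, 0 < v r) ∧ A < ∏ r, (v r : ℝ) ^ (m + 1 + (r : ℕ))} → ℝ :=
    fun v => ∏ r, (v.1 r : ℝ) ^ (-(((m : ℝ) + 1 + (r : ℕ)) / m)) with hFdef
  have hFnonneg : ∀ x, 0 ≤ F x := fun x =>
    Finset.prod_nonneg fun r _ => Real.rpow_nonneg (Nat.cast_nonneg _) _
  have hENN : (∑' x, ENNReal.ofReal (F x)) ≤ ENNReal.ofReal (C * A ^ (-δ)) := by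
    have step1 : (∑' x, ENNReal.ofReal (F x))
        ≤ ∑' x : {v : Fin (m - 1) → ℕ //
            (∀ r, 0 < v r) ∧ A < ∏ r, (v r : ℝ) ^ (m + 1 + (r : ℕ))},
          ENNReal.ofReal (A ^ (-δ) * ∏ r, (x.1 r : ℝ) ^ (-(s r))) :=
      ENNReal.tsum_le_tsum fun x => ENNReal.ofReal_le_ofReal (hterm x)
    have step2 : (∑' x : {v : Fin (m - 1) → ℕ //
            (∀ r, 0 < v r) ∧ A < ∏ r, (v r : ℝ) ^ (m + 1 + (r : ℕ))},
          ENNReal.ofReal (A ^ (-δ) * ∏ r, (x.1 r : ℝ) ^ (-(s r))))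
        ≤ ∑' v : Fin (m - 1) → ℕ,
          ENNReal.ofReal (A ^ (-δ) * ∏ r, (v r : ℝ) ^ (-(s r))) := by
      exact ENNReal.tsum_comp_le_tsum_of_injective Subtype.val_injective
        (fun v : Fin (m - 1) → ℕ => ENNReal.ofReal (A ^ (-δ) * ∏ r, (v r : ℝ) ^ (-(s r))))
    have step3 : (∑' v : Fin (m - 1) → ℕ,
          ENNReal.ofReal (A ^ (-δ) * ∏ r, (v r : ℝ) ^ (-(s r))))
        = ENNReal.ofReal (A ^ (-δ)) * ∏ r, Z r := by
      have : ∀ v : Fin (m - 1) → ℕ,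
          ENNReal.ofReal (A ^ (-δ) * ∏ r, (v r : ℝ) ^ (-(s r)))
            = ENNReal.ofReal (A ^ (-δ))
              * ∏ r, ENNReal.ofReal ((v r : ℝ) ^ (-(s r))) := by
        intro v
        rw [ENNReal.ofReal_mul (Real.rpow_nonneg hA0.le _),
          ENNReal.ofReal_prod_of_nonneg fun r _ => Real.rpow_nonneg (Nat.cast_nonneg _) _]
      simp_rw [this]
      rw [ENNReal.tsum_mul_left,
        aux_tsum_pi (m - 1) (fun r k => ENNReal.ofReal ((k : ℝ) ^ (-(s r))))]
    calc (∑' x, ENNReal.ofReal (F x))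
        ≤ ENNReal.ofReal (A ^ (-δ)) * ∏ r, Z r := by
          rw [← step3]; exact le_trans step1 step2
      _ = ENNReal.ofReal (A ^ (-δ)) * ENNReal.ofReal C := by
          rw [hCdef, ENNReal.ofReal_toReal hPne]
      _ = ENNReal.ofReal (C * A ^ (-δ)) := by
          rw [← ENNReal.ofReal_mul (Real.rpow_nonneg hA0.le _), mul_comm]
  by_cases hsum : Summable F
  · have heq := ENNReal.ofReal_tsum_of_nonneg hFnonneg hsum
    rw [← heq] at hENN
    exact (ENNReal.ofReal_le_ofReal_iff hRHS0.le).mp hENN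
  · rw [tsum_eq_zero_of_not_summable hsum]
    exact hRHS0.le
end

section
/- Let m ≥ 2, e ≥ 1 be integers, q a positive integer, and A > 0 a real number. Then for every 0 < ε < 1/(m(m+1)), the sum over squarefree positive integers v_1,...,v_{m-1} with ∏_{r=1}^{m-1} v_r^{m+r} > A of ∏_{r=1}^{m-1} gcd(v_r^{e(m+r)}, q)^{1/(em)} / v_r^{(m+r)/m} is O_{m,ε}( A^{-1/(m(m+1))+ε} · q^{(m-1)/(em(m+1))+ε} ). -/
open scoped ENNReal

lemma tsum_pi_prod : ∀ {n : ℕ} (f : Fin n → ℕ → ℝ≥0∞),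
    ∑' v : Fin n → ℕ, ∏ r, f r (v r) = ∏ r, ∑' x, f r x := by
  intro n
  induction n with
  | zero =>
    intro f
    simp only [Finset.univ_eq_empty, Finset.prod_empty]
    exact tsum_eq_single (fun i => i.elim0) (fun b hb => absurd (funext fun i => i.elim0) hb)
  | succ n ih =>
    intro f
    rw [← (Fin.consEquiv (fun _ => ℕ)).tsum_eq]
    have h : ∀ p : ℕ × (Fin n → ℕ),
        (∏ r, f r ((Fin.consEquiv (fun _ => ℕ)) p r)) = f 0 p.1 * ∏ r, f r.succ (p.2 r) := by
      intro p
      rw [Fin.prod_univ_succ]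
      simp only [Fin.consEquiv_apply, Fin.cons_zero, Fin.cons_succ]
    simp_rw [h]
    rw [ENNReal.tsum_prod']
    simp_rw [ENNReal.tsum_mul_left, ENNReal.tsum_mul_right]
    rw [ih (fun r x => f r.succ x), Fin.prod_univ_succ]


lemma tau_le (ε₀ : ℝ) (hε₀ : 0 < ε₀) :
    ∃ C : ℝ, 1 ≤ C ∧ ∀ q : ℕ, 1 ≤ q → (q.divisors.card : ℝ) ≤ C * (q:ℝ) ^ ε₀ := by
  have hlog : (0:ℝ) < Real.log 2 := Real.log_pos (by norm_num)
  set L : ℝ := ε₀ * Real.log 2 with hL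
  have hLpos : 0 < L := mul_pos hε₀ hlog
  set B : ℝ := 1 + 1 / L with hB
  have hB1 : 1 ≤ B := le_add_of_nonneg_right (by positivity)
  set P : ℕ := ⌈(2:ℝ) ^ (1/ε₀)⌉₊ with hP
  refine ⟨B ^ P, one_le_pow₀ hB1, fun q hq => ?_⟩
  have hq0 : q ≠ 0 := by omega
  have hcard : (q.divisors.card : ℝ) =
      ∏ p ∈ q.primeFactors, ((q.factorization p : ℝ) + 1) := by
    rw [Nat.card_divisors hq0]; push_cast; rfl
  have hpt : ∀ p ∈ q.primeFactors,
      ((q.factorization p : ℝ) + 1) ≤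
        (if p < P then B else 1) * ((p:ℝ) ^ ((q.factorization p : ℝ) * ε₀)) := by
    intro p hp
    have hpprime : p.Prime := Nat.prime_of_mem_primeFactors hp
    have hp2 : (2:ℝ) ≤ (p:ℝ) := by exact_mod_cast hpprime.two_le
    set k : ℕ := q.factorization p with hk
    by_cases hcase : p < P
    · rw [if_pos hcase]
      have h2 : (2:ℝ) ^ ((k:ℝ) * ε₀) ≤ (p:ℝ) ^ ((k:ℝ) * ε₀) :=
        Real.rpow_le_rpow (by norm_num) hp2 (by positivity)
      have h1 : (k:ℝ) * L + 1 ≤ (2:ℝ) ^ ((k:ℝ) * ε₀) := by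
        have := Real.add_one_le_exp ((k:ℝ) * L)
        have heq : Real.exp ((k:ℝ) * L) = (2:ℝ) ^ ((k:ℝ) * ε₀) := by
          rw [Real.rpow_def_of_pos (by norm_num : (0:ℝ) < 2)]
          rw [hL]; ring_nf
        linarith [heq ▸ this]
      have hk0 : (0:ℝ) ≤ (k:ℝ) := Nat.cast_nonneg k
      have : (k:ℝ) + 1 ≤ B * ((k:ℝ) * L + 1) := by
        rw [hB]
        have h1L : 0 < 1 / L := by positivity
        have : (1 + 1 / L) * ((k:ℝ) * L + 1) = (k:ℝ) * L + 1 + (k:ℝ) * (L * (1/L)) + 1/L := by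
          ring
        rw [this, mul_one_div_cancel (ne_of_gt hLpos), mul_one]
        nlinarith
      calc (k:ℝ) + 1 ≤ B * ((k:ℝ) * L + 1) := this
        _ ≤ B * ((2:ℝ) ^ ((k:ℝ) * ε₀)) := by
            apply mul_le_mul_of_nonneg_left h1 (by linarith)
        _ ≤ B * ((p:ℝ) ^ ((k:ℝ) * ε₀)) := mul_le_mul_of_nonneg_left h2 (by linarith)
    · rw [if_neg hcase, one_mul]
      push_neg at hcase
      have hPp : ((2:ℝ) ^ (1/ε₀)) ≤ (p:ℝ) := (Nat.le_ceil _).trans (by exact_mod_cast hcase)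
      have hpe : (2:ℝ) ≤ (p:ℝ) ^ ε₀ := by
        calc (2:ℝ) = ((2:ℝ) ^ (1/ε₀)) ^ ε₀ := by
              rw [← Real.rpow_mul (by norm_num : (0:ℝ) ≤ 2), one_div_mul_cancel (ne_of_gt hε₀),
                Real.rpow_one]
            _ ≤ (p:ℝ) ^ ε₀ := Real.rpow_le_rpow (by positivity) hPp hε₀.le
      calc (k:ℝ) + 1 ≤ (2:ℝ) ^ k := by exact_mod_cast (Nat.lt_two_pow_self (n := k))
        _ ≤ ((p:ℝ) ^ ε₀) ^ k := pow_le_pow_left₀ (by norm_num) hpe k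
        _ = (p:ℝ) ^ ((k:ℝ) * ε₀) := by
            rw [← Real.rpow_natCast ((p:ℝ) ^ ε₀) k, ← Real.rpow_mul (by positivity), mul_comm]
  have hprodbound : (q.divisors.card : ℝ) ≤
      (∏ p ∈ q.primeFactors, (if p < P then B else 1)) *
        ∏ p ∈ q.primeFactors, (p:ℝ) ^ ((q.factorization p : ℝ) * ε₀) := by
    rw [hcard, ← Finset.prod_mul_distrib]
    exact Finset.prod_le_prod (fun p _ => by positivity) hpt
  have hB' : (∏ p ∈ q.primeFactors, (if p < P then B else 1)) ≤ B ^ P := by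
    rw [Finset.prod_ite, Finset.prod_const, Finset.prod_const, one_pow, mul_one]
    apply pow_le_pow_right₀ hB1
    calc (q.primeFactors.filter (fun p => p < P)).card ≤ (Finset.range P).card := by
          apply Finset.card_le_card
          intro p hp
          simp only [Finset.mem_filter] at hp
          exact Finset.mem_range.2 hp.2
      _ = P := Finset.card_range P
  have hqpow : (∏ p ∈ q.primeFactors, (p:ℝ) ^ ((q.factorization p : ℝ) * ε₀)) = (q:ℝ) ^ ε₀ := by
    have h1 : ∀ p ∈ q.primeFactors, (p:ℝ) ^ ((q.factorization p : ℝ) * ε₀)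
        = (((p ^ q.factorization p : ℕ) : ℝ)) ^ ε₀ := by
      intro p hp
      have hp0 : (0:ℝ) ≤ (p:ℝ) := Nat.cast_nonneg p
      rw [Real.rpow_mul hp0 _, Real.rpow_natCast]
      push_cast
      rfl
    rw [Finset.prod_congr rfl h1, Real.finset_prod_rpow _ _ (fun p _ => by positivity) ε₀]
    congr 1
    have := Nat.factorization_prod_pow_eq_self hq0
    rw [Finsupp.prod] at this
    rw [Nat.support_factorization] at this
    exact_mod_cast this
  have hq1 : (0:ℝ) ≤ ∏ p ∈ q.primeFactors, (p:ℝ) ^ ((q.factorization p : ℝ) * ε₀) :=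
    Finset.prod_nonneg fun p _ => Real.rpow_nonneg (Nat.cast_nonneg p) _
  calc (q.divisors.card : ℝ) ≤ _ := hprodbound
    _ ≤ B ^ P * ∏ p ∈ q.primeFactors, (p:ℝ) ^ ((q.factorization p : ℝ) * ε₀) :=
        mul_le_mul_of_nonneg_right hB' hq1
    _ = B ^ P * (q:ℝ) ^ ε₀ := by rw [hqpow]


lemma one_dim_bound (q : ℕ) (hq : 1 ≤ q) (a σ : ℝ) (ha : 0 ≤ a) (haσ : a ≤ σ) (hσ : 1 < σ) :
    ∑' v : ℕ, ENNReal.ofReal ((Nat.gcd v q : ℝ) ^ a * (v:ℝ) ^ (-σ)) ≤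
      (q.divisors.card : ℝ≥0∞) * ENNReal.ofReal (∑' w : ℕ, ((w:ℝ) ^ σ)⁻¹) := by
  have hq0 : q ≠ 0 := by omega
  have hZsum : Summable (fun w : ℕ => ((w:ℝ) ^ σ)⁻¹) := Real.summable_nat_rpow_inv.2 hσ
  set Z : ℝ≥0∞ := ENNReal.ofReal (∑' w : ℕ, ((w:ℝ) ^ σ)⁻¹) with hZ
  have hZeq : ∑' w : ℕ, ENNReal.ofReal ((w:ℝ) ^ (-σ)) = Z := by
    rw [hZ, ENNReal.ofReal_tsum_of_nonneg (fun w => by positivity) hZsum]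
    refine tsum_congr fun w => ?_
    rw [Real.rpow_neg (Nat.cast_nonneg w)]
  -- pointwise bound by sum over divisors
  have hpt : ∀ v : ℕ, ENNReal.ofReal ((Nat.gcd v q : ℝ) ^ a * (v:ℝ) ^ (-σ)) ≤
      ∑ d ∈ q.divisors, ({v : ℕ | d ∣ v}.indicator
        (fun v => ENNReal.ofReal ((d:ℝ) ^ a * (v:ℝ) ^ (-σ))) v) := by
    intro v
    have hmem : Nat.gcd v q ∈ q.divisors := Nat.mem_divisors.2 ⟨Nat.gcd_dvd_right v q, hq0⟩
    have : ({v' : ℕ | Nat.gcd v q ∣ v'}.indicator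
        (fun v' => ENNReal.ofReal ((Nat.gcd v q : ℝ) ^ a * (v':ℝ) ^ (-σ))) v)
        = ENNReal.ofReal ((Nat.gcd v q : ℝ) ^ a * (v:ℝ) ^ (-σ)) := by
      exact Set.indicator_of_mem (show v ∈ {v' : ℕ | Nat.gcd v q ∣ v'} from Nat.gcd_dvd_left v q) _
    rw [← this]
    exact Finset.single_le_sum (f := fun d => ({v' : ℕ | d ∣ v'}.indicator
      (fun v' => ENNReal.ofReal ((d:ℝ) ^ a * (v':ℝ) ^ (-σ))) v))
      (fun d _ => zero_le) hmem
  calc ∑' v : ℕ, ENNReal.ofReal ((Nat.gcd v q : ℝ) ^ a * (v:ℝ) ^ (-σ))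
      ≤ ∑' v : ℕ, ∑ d ∈ q.divisors, ({v' : ℕ | d ∣ v'}.indicator
          (fun v' => ENNReal.ofReal ((d:ℝ) ^ a * (v':ℝ) ^ (-σ))) v) :=
        ENNReal.tsum_le_tsum hpt
    _ = ∑ d ∈ q.divisors, ∑' v : ℕ, ({v' : ℕ | d ∣ v'}.indicator
          (fun v' => ENNReal.ofReal ((d:ℝ) ^ a * (v':ℝ) ^ (-σ))) v) :=
        Summable.tsum_finsetSum (fun d _ => ENNReal.summable)
    _ ≤ ∑ d ∈ q.divisors, Z := by
        apply Finset.sum_le_sum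
        intro d hd
        have hd1 : 1 ≤ d := Nat.pos_of_mem_divisors hd
        have hd1' : (1:ℝ) ≤ (d:ℝ) := by exact_mod_cast hd1
        -- sum over multiples of d
        have hsub : ∑' v : ℕ, ({v' : ℕ | d ∣ v'}.indicator
            (fun v' => ENNReal.ofReal ((d:ℝ) ^ a * (v':ℝ) ^ (-σ))) v)
            = ∑' x : {v' : ℕ | d ∣ v'}, ENNReal.ofReal ((d:ℝ) ^ a * ((x:ℕ):ℝ) ^ (-σ)) :=
          (tsum_subtype _ _).symm
        rw [hsub]
        have hsurj : Function.Surjective (fun w : ℕ => (⟨d * w, Dvd.intro w rfl⟩ :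
            {v' : ℕ | d ∣ v'})) := by
          rintro ⟨v, c, rfl⟩
          exact ⟨c, rfl⟩
        calc ∑' x : {v' : ℕ | d ∣ v'}, ENNReal.ofReal ((d:ℝ) ^ a * ((x:ℕ):ℝ) ^ (-σ))
            ≤ ∑' w : ℕ, ENNReal.ofReal ((d:ℝ) ^ a * (((d * w : ℕ)):ℝ) ^ (-σ)) :=
              ENNReal.tsum_le_tsum_comp_of_surjective hsurj _
          _ = ∑' w : ℕ, ENNReal.ofReal ((d:ℝ) ^ (a - σ)) * ENNReal.ofReal ((w:ℝ) ^ (-σ)) := by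
              refine tsum_congr fun w => ?_
              rw [← ENNReal.ofReal_mul (by positivity)]
              congr 1
              push_cast
              rw [Real.mul_rpow (by positivity) (Nat.cast_nonneg w), sub_eq_add_neg,
                Real.rpow_add (by linarith : (0:ℝ) < (d:ℝ))]
              ring
          _ = ENNReal.ofReal ((d:ℝ) ^ (a - σ)) * ∑' w : ℕ, ENNReal.ofReal ((w:ℝ) ^ (-σ)) :=
              ENNReal.tsum_mul_left
          _ ≤ 1 * Z := by
              rw [hZeq]
              apply mul_le_mul_left
              rw [← ENNReal.ofReal_one]
              exact ENNReal.ofReal_le_ofReal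
                (Real.rpow_le_one_of_one_le_of_nonpos hd1' (by linarith))
          _ = Z := one_mul Z
    _ = (q.divisors.card : ℝ≥0∞) * Z := by rw [Finset.sum_const, nsmul_eq_mul]

set_option maxHeartbeats 2000000 in
/-- Lemma `lemdecay`: for `m ≥ 2`, `e ≥ 1`, `q ≥ 1`, `A > 0` and
`0 < ε < 1/(m(m+1))`, the sum over squarefree tuples `v` with `∏ v_r^{m+r} > A` of
`∏ gcd(v_r^{e(m+r)}, q)^{1/(em)} / v_r^{(m+r)/m}` is
`≪_{m,ε} A^{-1/(m(m+1))+ε} q^{(m-1)/(em(m+1))+ε}`. -/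
theorem stmt_1 (m : ℕ) (hm : 2 ≤ m) (ε : ℝ)
    (hε : 0 < ε) (hε' : ε < 1 / (m * (m + 1))) :
    ∃ C : ℝ, 0 < C ∧ ∀ (e : ℕ), 1 ≤ e → ∀ (q : ℕ), 1 ≤ q → ∀ A : ℝ, 0 < A →
      (∑' v : {v : Fin (m - 1) → ℕ //
          (∀ r, Squarefree (v r)) ∧ A < ∏ r, (v r : ℝ) ^ (m + 1 + (r : ℕ))},
        ∏ r, (Nat.gcd ((v.1 r) ^ (e * (m + 1 + (r : ℕ)))) q : ℝ) ^
            ((1 : ℝ) / (e * m)) / (v.1 r : ℝ) ^ (((m : ℝ) + 1 + (r : ℕ)) / m)) ≤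
      C * A ^ (-(1 / ((m : ℝ) * (m + 1))) + ε) *
        (q : ℝ) ^ (((m : ℝ) - 1) / (e * m * (m + 1)) + ε) := by
  have hm0 : (0:ℝ) < (m:ℝ) := by exact_mod_cast (by omega : 0 < m)
  have hm1 : (0:ℝ) < (m:ℝ) + 1 := by linarith
  have hmne : (m:ℝ) ≠ 0 := ne_of_gt hm0
  have hm1ne : (m:ℝ) + 1 ≠ 0 := ne_of_gt hm1
  have hm2 : (2:ℝ) ≤ (m:ℝ) := by exact_mod_cast hm
  -- constants
  set δ : ℝ := 1 / ((m:ℝ) * ((m:ℝ)+1)) - ε with hδdef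
  have hδ0 : 0 < δ := by
    rw [hδdef]
    have : ε < 1 / ((m:ℝ) * ((m:ℝ)+1)) := by exact_mod_cast hε'
    linarith
  have hδm : δ - 1/(m:ℝ) = -(1/((m:ℝ)+1)) - ε := by
    rw [hδdef]; field_simp; ring
  set kR : Fin (m-1) → ℝ := fun r => (m:ℝ) + 1 + (r:ℕ) with hkR
  have hkR1 : ∀ r, (m:ℝ) + 1 ≤ kR r := fun r => le_add_of_nonneg_right (Nat.cast_nonneg _)
  have hkR0 : ∀ r, 0 < kR r := fun r => lt_of_lt_of_le hm1 (hkR1 r)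
  set σ : Fin (m-1) → ℝ := fun r => kR r * (1/((m:ℝ)+1) + ε) with hσdef
  set aa : Fin (m-1) → ℝ := fun r => kR r / ((m:ℝ)+1) with haadef
  have hσ1 : ∀ r, 1 < σ r := by
    intro r
    have h1 : ((m:ℝ)+1) * (1/((m:ℝ)+1) + ε) ≤ kR r * (1/((m:ℝ)+1) + ε) := by
      apply mul_le_mul_of_nonneg_right (hkR1 r); positivity
    have h2 : ((m:ℝ)+1) * (1/((m:ℝ)+1) + ε) = 1 + ((m:ℝ)+1)*ε := by field_simp
    have h3 : 0 < ((m:ℝ)+1)*ε := by positivity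
    calc (1:ℝ) < 1 + ((m:ℝ)+1)*ε := by linarith
      _ = ((m:ℝ)+1) * (1/((m:ℝ)+1) + ε) := h2.symm
      _ ≤ σ r := h1
  have haa0 : ∀ r, 0 ≤ aa r := fun r => div_nonneg (hkR0 r).le hm1.le
  have haaσ : ∀ r, aa r ≤ σ r := by
    intro r
    have : kR r / ((m:ℝ)+1) = kR r * (1/((m:ℝ)+1)) := by ring
    rw [haadef, hσdef]
    calc kR r / ((m:ℝ)+1) = kR r * (1/((m:ℝ)+1)) := by ring
      _ ≤ kR r * (1/((m:ℝ)+1) + ε) := by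
          apply mul_le_mul_of_nonneg_left _ (hkR0 r).le
          linarith
  set Z : Fin (m-1) → ℝ := fun r => ∑' w : ℕ, ((w:ℝ) ^ (σ r))⁻¹ with hZdef
  have hZsum : ∀ r, Summable (fun w : ℕ => ((w:ℝ) ^ (σ r))⁻¹) :=
    fun r => Real.summable_nat_rpow_inv.2 (hσ1 r)
  have hZ1 : ∀ r, 1 ≤ Z r := by
    intro r
    have := Summable.le_tsum (hZsum r) 1 (fun w _ => by positivity)
    simpa using this
  have hmm1 : (0:ℝ) < (m:ℝ) - 1 := by linarith
  obtain ⟨Cτ, hCτ1, hCτ⟩ := tau_le (ε / ((m:ℝ)-1)) (by positivity)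
  have hprodZ : 0 < ∏ r, Z r := Finset.prod_pos (fun r _ => lt_of_lt_of_le one_pos (hZ1 r))
  refine ⟨(∏ r, Z r) * Cτ ^ (m-1),
    mul_pos hprodZ (pow_pos (lt_of_lt_of_le one_pos hCτ1) _), ?_⟩
  intro e he q hq A hA
  have he0 : (0:ℝ) < (e:ℝ) := by exact_mod_cast (by omega : 0 < e)
  have hene : (e:ℝ) ≠ 0 := ne_of_gt he0
  have hq0 : q ≠ 0 := by omega
  have hq0R : (0:ℝ) < (q:ℝ) := by exact_mod_cast (by omega : 0 < q)
  have hq1R : (1:ℝ) ≤ (q:ℝ) := by exact_mod_cast hq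
  set ε₀ : ℝ := ε / ((m:ℝ)-1) with hε₀def
  set c : ℝ := 1/((e:ℝ)*(m:ℝ)*((m:ℝ)+1)) with hcdef
  set g : Fin (m-1) → ℕ → ℝ := fun r x =>
    (Nat.gcd (x ^ (e * (m + 1 + (r:ℕ)))) q : ℝ) ^ ((1:ℝ)/((e:ℝ)*(m:ℝ))) * (x:ℝ) ^ (-(σ r))
    with hgdef
  have hg0 : ∀ r x, 0 ≤ g r x := fun r x => mul_nonneg (Real.rpow_nonneg (Nat.cast_nonneg _) _)
    (Real.rpow_nonneg (Nat.cast_nonneg _) _)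
  set β : Fin (m-1) → ℝ := fun r => (q:ℝ)^c * (Cτ * (q:ℝ)^ε₀ * Z r) with hβdef
  -- K2 : per-coordinate bound
  have K2 : ∀ r, ∑' x : ℕ, ENNReal.ofReal (g r x) ≤ ENNReal.ofReal (β r) := by
    intro r
    have hσ0 : 0 < σ r := lt_trans one_pos (hσ1 r)
    have hpt : ∀ x : ℕ, g r x ≤ (q:ℝ)^c * ((Nat.gcd x q : ℝ) ^ (aa r) * (x:ℝ) ^ (-(σ r))) := by
      intro x
      rcases Nat.eq_zero_or_pos x with hx | hx
      · subst hx
        rw [hgdef]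
        simp only [Nat.cast_zero]
        rw [Real.zero_rpow (ne_of_lt (by linarith [hσ1 r]) : -(σ r) ≠ 0)]
        rw [mul_zero, mul_zero, mul_zero]
      · have hx1 : (1:ℝ) ≤ (x:ℝ) := by exact_mod_cast hx
        set N : ℕ := e * (m + 1 + (r:ℕ)) with hNdef
        have hNR : (N:ℝ) = (e:ℝ) * kR r := by rw [hNdef, hkR]; push_cast; ring
        have hG1 : 1 ≤ Nat.gcd (x^N) q := Nat.gcd_pos_of_pos_right _ (by omega)
        have hG1R : (1:ℝ) ≤ (Nat.gcd (x^N) q : ℝ) := by exact_mod_cast hG1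
        have hGqR : (Nat.gcd (x^N) q : ℝ) ≤ (q:ℝ) := by
          exact_mod_cast Nat.le_of_dvd (by omega) (Nat.gcd_dvd_right _ _)
        have hgcd1 : 1 ≤ Nat.gcd x q := Nat.gcd_pos_of_pos_right _ (by omega)
        have hGdR : (Nat.gcd (x^N) q : ℝ) ≤ ((Nat.gcd x q : ℝ)) ^ N := by
          have hdvd : Nat.gcd (x^N) q ∣ Nat.gcd x q ^ N := gcd_pow_left_dvd_pow_gcd
          have := Nat.le_of_dvd (pow_pos hgcd1 N) hdvd
          exact_mod_cast this
        have hsplit : (1:ℝ)/((e:ℝ)*(m:ℝ))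
            = ((m:ℝ)/((m:ℝ)+1))/((e:ℝ)*(m:ℝ)) + c := by
          rw [hcdef]; field_simp
        have hgcd1R : (1:ℝ) ≤ (Nat.gcd x q : ℝ) := by exact_mod_cast hgcd1
        have hstep : (Nat.gcd (x^N) q : ℝ) ^ ((1:ℝ)/((e:ℝ)*(m:ℝ)))
            ≤ (Nat.gcd x q : ℝ) ^ (aa r) * (q:ℝ)^c := by
          rw [hsplit, Real.rpow_add (by linarith : (0:ℝ) < (Nat.gcd (x^N) q : ℝ))]
          apply mul_le_mul
          · calc (Nat.gcd (x^N) q : ℝ) ^ (((m:ℝ)/((m:ℝ)+1))/((e:ℝ)*(m:ℝ)))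
                ≤ (((Nat.gcd x q : ℝ)) ^ N) ^ (((m:ℝ)/((m:ℝ)+1))/((e:ℝ)*(m:ℝ))) :=
                  Real.rpow_le_rpow (by linarith) hGdR (by positivity)
              _ = (Nat.gcd x q : ℝ) ^ (aa r) := by
                  rw [← Real.rpow_natCast ((Nat.gcd x q : ℝ)) N,
                    ← Real.rpow_mul (by linarith : (0:ℝ) ≤ (Nat.gcd x q : ℝ)), hNR, haadef]
                  congr 1
                  field_simp
          · exact Real.rpow_le_rpow (by linarith) hGqR (by rw [hcdef]; positivity)
          · positivity
          · positivity
        calc g r x = (Nat.gcd (x^N) q : ℝ) ^ ((1:ℝ)/((e:ℝ)*(m:ℝ))) * (x:ℝ) ^ (-(σ r)) := by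
              rw [hgdef]
          _ ≤ ((Nat.gcd x q : ℝ) ^ (aa r) * (q:ℝ)^c) * (x:ℝ) ^ (-(σ r)) :=
              mul_le_mul_of_nonneg_right hstep (Real.rpow_nonneg (by positivity) _)
          _ = (q:ℝ)^c * ((Nat.gcd x q : ℝ) ^ (aa r) * (x:ℝ) ^ (-(σ r))) := by ring
    calc ∑' x : ℕ, ENNReal.ofReal (g r x)
        ≤ ∑' x : ℕ, (ENNReal.ofReal ((q:ℝ)^c) *
            ENNReal.ofReal ((Nat.gcd x q : ℝ) ^ (aa r) * (x:ℝ) ^ (-(σ r)))) := by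
          apply ENNReal.tsum_le_tsum
          intro x
          rw [← ENNReal.ofReal_mul (by positivity)]
          exact ENNReal.ofReal_le_ofReal (hpt x)
      _ = ENNReal.ofReal ((q:ℝ)^c) *
            ∑' x : ℕ, ENNReal.ofReal ((Nat.gcd x q : ℝ) ^ (aa r) * (x:ℝ) ^ (-(σ r))) :=
          ENNReal.tsum_mul_left
      _ ≤ ENNReal.ofReal ((q:ℝ)^c) * ((q.divisors.card : ℝ≥0∞) * ENNReal.ofReal (Z r)) := by
          apply mul_le_mul_right
          exact one_dim_bound q hq (aa r) (σ r) (haa0 r) (haaσ r) (hσ1 r)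
      _ ≤ ENNReal.ofReal ((q:ℝ)^c) * (ENNReal.ofReal (Cτ * (q:ℝ)^ε₀) * ENNReal.ofReal (Z r)) := by
          apply mul_le_mul_right
          apply mul_le_mul_left
          rw [← ENNReal.ofReal_natCast (q.divisors.card)]
          exact ENNReal.ofReal_le_ofReal (hCτ q hq)
      _ = ENNReal.ofReal (β r) := by
          rw [hβdef, ← ENNReal.ofReal_mul (by positivity), ← ENNReal.ofReal_mul (by positivity)]
  -- the summand
  set S := {v : Fin (m - 1) → ℕ //
      (∀ r, Squarefree (v r)) ∧ A < ∏ r, ((v r : ℝ)) ^ (m + 1 + (r : ℕ))} with hSdef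
  set f : S → ℝ := fun v => ∏ r, (Nat.gcd ((v.1 r) ^ (e * (m + 1 + (r : ℕ)))) q : ℝ) ^
      ((1 : ℝ) / ((e:ℝ) * (m:ℝ))) / (v.1 r : ℝ) ^ (((m : ℝ) + 1 + (r : ℕ)) / m) with hfdef
  have hf0 : ∀ v : S, 0 ≤ f v := by
    intro v
    apply Finset.prod_nonneg
    intro r _
    positivity
  -- K1 : pointwise bound on subtype
  have K1 : ∀ v : S, f v ≤ A ^ (-δ) * ∏ r, g r (v.1 r) := by
    intro v
    have hx1 : ∀ r, 1 ≤ v.1 r := fun r => Nat.one_le_iff_ne_zero.2 (v.2.1 r).ne_zero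
    have hx0R : ∀ r, (0:ℝ) < (v.1 r : ℝ) := fun r => by exact_mod_cast hx1 r
    have step1 : A ^ δ ≤ ∏ r, (((v.1 r : ℝ)) ^ (m + 1 + (r:ℕ))) ^ δ := by
      calc A ^ δ ≤ (∏ r, ((v.1 r : ℝ)) ^ (m + 1 + (r:ℕ))) ^ δ :=
            Real.rpow_le_rpow hA.le (le_of_lt v.2.2) hδ0.le
        _ = ∏ r, (((v.1 r : ℝ)) ^ (m + 1 + (r:ℕ))) ^ δ :=
            (Real.finset_prod_rpow _ _ (fun r _ => by positivity) δ).symm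
    have step2 : (1:ℝ) ≤ A ^ (-δ) * ∏ r, (((v.1 r : ℝ)) ^ (m + 1 + (r:ℕ))) ^ δ := by
      have h1 : A ^ (-δ) * A ^ δ = 1 := by
        rw [← Real.rpow_add hA]; simp
      calc (1:ℝ) = A ^ (-δ) * A ^ δ := h1.symm
        _ ≤ A ^ (-δ) * ∏ r, (((v.1 r : ℝ)) ^ (m + 1 + (r:ℕ))) ^ δ :=
            mul_le_mul_of_nonneg_left step1 (Real.rpow_nonneg hA.le _)
    have step5 : ∀ r : Fin (m-1),
        ((Nat.gcd ((v.1 r) ^ (e * (m + 1 + (r : ℕ)))) q : ℝ) ^ ((1 : ℝ) / ((e:ℝ) * (m:ℝ))) /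
          (v.1 r : ℝ) ^ (((m : ℝ) + 1 + (r : ℕ)) / m)) * (((v.1 r : ℝ)) ^ (m + 1 + (r:ℕ))) ^ δ
          = g r (v.1 r) := by
      intro r
      have hpow : (((v.1 r : ℝ)) ^ (m + 1 + (r:ℕ))) ^ δ = (v.1 r : ℝ) ^ (kR r * δ) := by
        rw [← Real.rpow_natCast ((v.1 r : ℝ)) (m + 1 + (r:ℕ)),
          ← Real.rpow_mul (hx0R r).le, hkR]
        push_cast
        ring_nf
      have hexp : kR r * δ - ((m:ℝ) + 1 + (r:ℕ)) / m = -(σ r) := by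
        have h1 : ((m:ℝ) + 1 + (r:ℕ)) / m = kR r * (1/(m:ℝ)) := by
          rw [hkR]; ring
        rw [h1, hσdef]
        have : kR r * δ - kR r * (1/(m:ℝ)) = kR r * (δ - 1/(m:ℝ)) := by ring
        rw [this, hδm]
        ring
      rw [hpow, div_mul_eq_mul_div, mul_div_assoc, ← Real.rpow_sub (hx0R r), hexp, hgdef]
    calc f v = f v * 1 := (mul_one _).symm
      _ ≤ f v * (A ^ (-δ) * ∏ r, (((v.1 r : ℝ)) ^ (m + 1 + (r:ℕ))) ^ δ) :=
          mul_le_mul_of_nonneg_left step2 (hf0 v)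
      _ = A ^ (-δ) * ∏ r, ((Nat.gcd ((v.1 r) ^ (e * (m + 1 + (r : ℕ)))) q : ℝ) ^
            ((1 : ℝ) / ((e:ℝ) * (m:ℝ))) / (v.1 r : ℝ) ^ (((m : ℝ) + 1 + (r : ℕ)) / m) *
            (((v.1 r : ℝ)) ^ (m + 1 + (r:ℕ))) ^ δ) := by
          rw [hfdef, mul_left_comm]
          congr 1
          exact Finset.prod_mul_distrib.symm
      _ = A ^ (-δ) * ∏ r, g r (v.1 r) := by
          rw [Finset.prod_congr rfl (fun r _ => step5 r)]
  -- nonnegativity facts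
  have hβ0 : ∀ r, 0 ≤ β r := by
    intro r
    rw [hβdef]
    have h1 := hZ1 r
    exact mul_nonneg (Real.rpow_nonneg hq0R.le _)
      (mul_nonneg (mul_nonneg (by linarith) (Real.rpow_nonneg hq0R.le _)) (by linarith))
  have hRHS0' : 0 ≤ A ^ (-δ) * ∏ r, β r :=
    mul_nonneg (Real.rpow_nonneg hA.le _) (Finset.prod_nonneg fun r _ => hβ0 r)
  -- main ENNReal chain
  have hENN : (∑' v : S, ENNReal.ofReal (f v)) ≤ ENNReal.ofReal (A ^ (-δ) * ∏ r, β r) := by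
    calc ∑' v : S, ENNReal.ofReal (f v)
        ≤ ∑' v : S, (ENNReal.ofReal (A ^ (-δ)) * ∏ r, ENNReal.ofReal (g r (v.1 r))) := by
          apply ENNReal.tsum_le_tsum
          intro v
          calc ENNReal.ofReal (f v) ≤ ENNReal.ofReal (A ^ (-δ) * ∏ r, g r (v.1 r)) :=
                ENNReal.ofReal_le_ofReal (K1 v)
            _ = ENNReal.ofReal (A ^ (-δ)) * ∏ r, ENNReal.ofReal (g r (v.1 r)) := by
                rw [ENNReal.ofReal_mul (Real.rpow_nonneg hA.le _),
                  ENNReal.ofReal_prod_of_nonneg (fun r _ => hg0 r _)]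
      _ ≤ ∑' u : Fin (m-1) → ℕ,
            (ENNReal.ofReal (A ^ (-δ)) * ∏ r, ENNReal.ofReal (g r (u r))) :=
          ENNReal.tsum_comp_le_tsum_of_injective Subtype.val_injective
            (fun u : Fin (m-1) → ℕ => ENNReal.ofReal (A ^ (-δ)) * ∏ r, ENNReal.ofReal (g r (u r)))
      _ = ENNReal.ofReal (A ^ (-δ)) * ∏ r, ∑' x : ℕ, ENNReal.ofReal (g r x) := by
          rw [ENNReal.tsum_mul_left, tsum_pi_prod (fun r x => ENNReal.ofReal (g r x))]
      _ ≤ ENNReal.ofReal (A ^ (-δ)) * ∏ r, ENNReal.ofReal (β r) := by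
          exact mul_le_mul_right (Finset.prod_le_prod' fun r _ => K2 r) _
      _ = ENNReal.ofReal (A ^ (-δ) * ∏ r, β r) := by
          rw [← ENNReal.ofReal_prod_of_nonneg (fun r _ => hβ0 r),
            ← ENNReal.ofReal_mul (Real.rpow_nonneg hA.le _)]
  have hfinal : (∑' v : S, f v) ≤ A ^ (-δ) * ∏ r, β r := by
    by_cases hsum : Summable f
    · have h1 := ENNReal.ofReal_tsum_of_nonneg hf0 hsum
      have h2 : ENNReal.ofReal (∑' v, f v) ≤ ENNReal.ofReal (A ^ (-δ) * ∏ r, β r) :=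
        h1 ▸ hENN
      exact (ENNReal.ofReal_le_ofReal_iff hRHS0').1 h2
    · rw [tsum_eq_zero_of_not_summable hsum]
      exact hRHS0'
  -- convert to the stated bound
  have hcast : ((m - 1 : ℕ) : ℝ) = (m:ℝ) - 1 := by
    have h1 : 1 ≤ m := by omega
    push_cast [Nat.cast_sub h1]
    ring
  have hδ' : -(1 / ((m:ℝ) * ((m:ℝ)+1))) + ε = -δ := by rw [hδdef]; ring
  have h1 : ((q:ℝ)^c)^((m-1:ℕ)) * ((q:ℝ)^ε₀)^((m-1:ℕ))
      = (q:ℝ) ^ (((m:ℝ)-1)/((e:ℝ)*(m:ℝ)*((m:ℝ)+1)) + ε) := by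
    rw [← Real.rpow_natCast ((q:ℝ)^c), ← Real.rpow_natCast ((q:ℝ)^ε₀),
      ← Real.rpow_mul hq0R.le, ← Real.rpow_mul hq0R.le, ← Real.rpow_add hq0R, hcast]
    congr 1
    rw [hcdef, hε₀def]
    field_simp
  have hprodβ : ∏ r, β r = (∏ r, Z r) * Cτ ^ (m-1) *
      (q:ℝ) ^ (((m:ℝ)-1)/((e:ℝ)*(m:ℝ)*((m:ℝ)+1)) + ε) := by
    rw [hβdef]
    simp only [Finset.prod_mul_distrib, Finset.prod_const, Finset.card_univ, Fintype.card_fin]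
    rw [← h1]
    ring
  have hconv : A ^ (-δ) * ∏ r, β r = (∏ r, Z r) * Cτ ^ (m-1) *
      A ^ (-(1 / ((m:ℝ) * ((m:ℝ)+1))) + ε) *
      (q:ℝ) ^ (((m:ℝ)-1)/((e:ℝ)*(m:ℝ)*((m:ℝ)+1)) + ε) := by
    rw [hprodβ, hδ']
    ring
  exact le_trans hfinal (le_of_eq hconv)
end

section
/- Fix an integer m ≥ 2. Every nonzero integer x that is m-full admits a unique representation |x| = u^m · ∏_{r=1}^{m-1} v_r^{m+r}, where u, v_1, ..., v_{m-1} are positive integers, each v_r is squarefree, and the v_r are pairwise coprime. -/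
open Finset

private lemma fact_prod_primes' {S : Finset ℕ} (hS : ∀ p ∈ S, p.Prime) (q : ℕ) :
    (∏ p ∈ S, p).factorization q = if q ∈ S then 1 else 0 := by
  rw [Nat.factorization_prod (fun p hp => (hS p hp).pos.ne')]
  rw [Finsupp.finset_sum_apply]
  rw [Finset.sum_congr rfl (fun p hp => by
    rw [(hS p hp).factorization, Finsupp.single_apply])]
  exact Finset.sum_ite_eq' S q (fun _ => 1)

private lemma fact_mul_prod' {m u : ℕ} (hu : u ≠ 0) {v : Fin (m - 1) → ℕ}
    (hv : ∀ r, v r ≠ 0) (p : ℕ) :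
    (u ^ m * ∏ r, v r ^ (m + 1 + (r : ℕ))).factorization p =
      m * u.factorization p +
        ∑ r : Fin (m - 1), (m + 1 + (r : ℕ)) * (v r).factorization p := by
  have hprod : (∏ r, v r ^ (m + 1 + (r : ℕ))) ≠ 0 :=
    Finset.prod_ne_zero_iff.mpr fun r _ => pow_ne_zero _ (hv r)
  rw [Nat.factorization_mul (pow_ne_zero _ hu) hprod, Nat.factorization_pow,
    Nat.factorization_prod (fun r _ => pow_ne_zero _ (hv r))]
  simp only [Finsupp.coe_add, Finsupp.coe_smul, Pi.add_apply, Pi.smul_apply, smul_eq_mul,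
    Finsupp.finset_sum_apply, Nat.factorization_pow]

private lemma repr_fact' {m n u : ℕ} {v : Fin (m - 1) → ℕ} (hm : 2 ≤ m) (hn : n ≠ 0)
    (hv : ∀ r, 0 < v r) (hsf : ∀ r, Squarefree (v r))
    (hcop : ∀ r r', r ≠ r' → Nat.Coprime (v r) (v r'))
    (heq : n = u ^ m * ∏ r, v r ^ (m + 1 + (r : ℕ))) (p : ℕ) (hp : p.Prime) :
    u.factorization p =
      n.factorization p / m - (if n.factorization p % m = 0 then 0 else 1) ∧
    ∀ r, (v r).factorization p =
      if n.factorization p % m = (r : ℕ) + 1 then 1 else 0 := by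
  have hm0 : 0 < m := by omega
  have hu : u ≠ 0 := by
    intro h
    rw [h, Nat.zero_pow hm0, zero_mul] at heq
    exact hn heq
  have hkey : n.factorization p =
      m * u.factorization p +
        ∑ r : Fin (m - 1), (m + 1 + (r : ℕ)) * (v r).factorization p := by
    rw [heq]; exact fact_mul_prod' hu (fun r => (hv r).ne') p
  have hle : ∀ r, (v r).factorization p ≤ 1 := fun r =>
    (Nat.squarefree_iff_factorization_le_one (hv r).ne').mp (hsf r) p
  by_cases hall : ∀ r, (v r).factorization p = 0
  · have hsum : ∑ r : Fin (m-1), (m + 1 + (r : ℕ)) * (v r).factorization p = 0 := by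
      simp [hall]
    rw [hsum, add_zero] at hkey
    have hmod : n.factorization p % m = 0 := by rw [hkey]; exact Nat.mul_mod_right m _
    refine ⟨?_, fun r => ?_⟩
    · rw [hmod, if_pos rfl, Nat.sub_zero, hkey, Nat.mul_div_cancel_left _ hm0]
    · rw [hall r, hmod, if_neg (by omega)]
  · push_neg at hall
    obtain ⟨r₀, hr₀⟩ := hall
    have hr₀1 : (v r₀).factorization p = 1 := by have := hle r₀; omega
    have hother : ∀ r, r ≠ r₀ → (v r).factorization p = 0 := by
      intro r hne
      by_contra h
      have h1 : p ∣ v r := Nat.dvd_of_factorization_pos h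
      have h2 : p ∣ v r₀ := Nat.dvd_of_factorization_pos (by omega)
      have := Nat.Prime.not_coprime_iff_dvd.mpr ⟨p, hp, h1, h2⟩
      exact this (hcop r r₀ hne)
    have hsum : ∑ r : Fin (m-1), (m + 1 + (r : ℕ)) * (v r).factorization p
        = m + 1 + (r₀ : ℕ) := by
      rw [Finset.sum_eq_single r₀ (fun r _ hne => by rw [hother r hne, mul_zero])
        (fun h => absurd (Finset.mem_univ r₀) h), hr₀1, mul_one]
    rw [hsum] at hkey
    have hlt : (r₀ : ℕ) + 1 < m := by have := r₀.isLt; omega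
    have hkey' : n.factorization p = m * (u.factorization p + 1) + ((r₀ : ℕ) + 1) := by
      rw [hkey]; ring
    have hmod : n.factorization p % m = (r₀ : ℕ) + 1 := by
      rw [hkey', Nat.mul_add_mod, Nat.mod_eq_of_lt hlt]
    have hdiv : n.factorization p / m = u.factorization p + 1 := by
      rw [hkey', Nat.mul_add_div hm0, Nat.div_eq_of_lt hlt, add_zero]
    refine ⟨?_, fun r => ?_⟩
    · rw [hmod, if_neg (by omega), hdiv]; omega
    · by_cases hrr : r = r₀
      · subst hrr; rw [hmod, if_pos rfl, hr₀1]
      · rw [hother r hrr, hmod, if_neg (fun h => hrr (Fin.ext (by omega)))]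

private lemma nat_main' (m : ℕ) (hm : 2 ≤ m) (n : ℕ) (hn : n ≠ 0)
    (hfull : ∀ p : ℕ, p.Prime → p ∣ n → m ≤ n.factorization p) :
    ∃! uv : ℕ × (Fin (m - 1) → ℕ),
      0 < uv.1 ∧ (∀ r, 0 < uv.2 r) ∧ (∀ r, Squarefree (uv.2 r)) ∧
      (∀ r r', r ≠ r' → Nat.Coprime (uv.2 r) (uv.2 r')) ∧
      n = uv.1 ^ m * ∏ r, (uv.2 r) ^ (m + 1 + (r : ℕ)) := by
  have hm0 : 0 < m := by omega
  set e : ℕ → ℕ := fun p => n.factorization p with he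
  set u : ℕ := ∏ p ∈ n.primeFactors, p ^ (e p / m - if e p % m = 0 then 0 else 1) with hudef
  set S : Fin (m - 1) → Finset ℕ :=
    fun r => n.primeFactors.filter (fun p => e p % m = (r : ℕ) + 1) with hSdef
  set v : Fin (m - 1) → ℕ := fun r => ∏ p ∈ S r, p with hvdef
  have hSprime : ∀ r, ∀ p ∈ S r, p.Prime := fun r p hp =>
    Nat.prime_of_mem_primeFactors (Finset.mem_filter.mp hp).1
  have hu0 : 0 < u :=
    Finset.prod_pos fun p hp => pow_pos (Nat.prime_of_mem_primeFactors hp).pos _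
  have hv0 : ∀ r, 0 < v r := fun r =>
    Finset.prod_pos fun p hp => (hSprime r p hp).pos
  have hvfact : ∀ r q, (v r).factorization q = if q ∈ S r then 1 else 0 :=
    fun r q => fact_prod_primes' (hSprime r) q
  have hsf : ∀ r, Squarefree (v r) := fun r =>
    (Nat.squarefree_iff_factorization_le_one (hv0 r).ne').mpr fun q => by
      rw [hvfact]; split <;> omega
  have hcop : ∀ r r', r ≠ r' → Nat.Coprime (v r) (v r') := by
    intro r r' hne
    by_contra h
    obtain ⟨p, hp, h1, h2⟩ := Nat.Prime.not_coprime_iff_dvd.mp h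
    have m1 : p ∈ S r := by
      have := hp.factorization_pos_of_dvd (hv0 r).ne' h1
      rw [hvfact] at this; by_contra hc; simp [hc] at this
    have m2 : p ∈ S r' := by
      have := hp.factorization_pos_of_dvd (hv0 r').ne' h2
      rw [hvfact] at this; by_contra hc; simp [hc] at this
    have e1 := (Finset.mem_filter.mp m1).2
    have e2 := (Finset.mem_filter.mp m2).2
    exact hne (Fin.ext (by omega))
  have hufact : ∀ q, u.factorization q =
      if q ∈ n.primeFactors then e q / m - (if e q % m = 0 then 0 else 1) else 0 := by
    intro q
    rw [hudef, Nat.factorization_prod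
      (fun p hp => pow_ne_zero _ (Nat.prime_of_mem_primeFactors hp).pos.ne')]
    rw [Finsupp.finset_sum_apply]
    rw [Finset.sum_congr rfl (fun p hp => by
      rw [Nat.factorization_pow, Finsupp.smul_apply,
        (Nat.prime_of_mem_primeFactors hp).factorization, Finsupp.single_apply,
        smul_eq_mul, mul_ite, mul_one, mul_zero])]
    exact Finset.sum_ite_eq' _ q _
  have hmain : n = u ^ m * ∏ r, v r ^ (m + 1 + (r : ℕ)) := by
    have h2 : (u ^ m * ∏ r, v r ^ (m + 1 + (r : ℕ))) ≠ 0 :=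
      Nat.mul_ne_zero (pow_ne_zero _ hu0.ne')
        (Finset.prod_ne_zero_iff.mpr fun r _ => pow_ne_zero _ (hv0 r).ne')
    refine Nat.factorization_inj hn h2 ?_
    ext q
    by_cases hq : q.Prime
    case neg =>
      rw [Nat.factorization_eq_zero_of_not_prime _ hq,
        Nat.factorization_eq_zero_of_not_prime _ hq]
    rw [fact_mul_prod' hu0.ne' (fun r => (hv0 r).ne') q]
    by_cases hmem : q ∈ n.primeFactors
    case neg =>
      have h0 : e q = 0 := by
        rw [he]
        exact Finsupp.notMem_support_iff.mp (by rwa [Nat.support_factorization])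
      have hs0 : ∀ r, (v r).factorization q = 0 := fun r => by
        rw [hvfact, if_neg (fun hc => hmem (Finset.filter_subset _ _ hc))]
      rw [hufact, if_neg hmem]
      simp only [hs0, mul_zero, Finset.sum_const_zero, add_zero]
      exact h0
    have hdvd : q ∣ n := (Nat.mem_primeFactors.mp hmem).2.1
    have he' : m ≤ e q := hfull q hq hdvd
    rw [hufact, if_pos hmem]
    by_cases h0 : e q % m = 0
    case pos =>
      have hs0 : ∀ r, (v r).factorization q = 0 := fun r => by
        rw [hvfact, if_neg (fun hc => by
          have := (Finset.mem_filter.mp hc).2; omega)]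
      have : ∑ r : Fin (m - 1), (m + 1 + (r : ℕ)) * (v r).factorization q = 0 := by
        simp [hs0]
      rw [this, if_pos h0, Nat.sub_zero, add_zero,
        Nat.mul_div_cancel' (Nat.dvd_of_mod_eq_zero h0)]
    case neg =>
      have hslt : e q % m < m := Nat.mod_lt _ hm0
      have hs1 : 1 ≤ e q % m := by omega
      set s := e q % m with hs
      have hr₀lt : s - 1 < m - 1 := by omega
      set r₀ : Fin (m - 1) := ⟨s - 1, hr₀lt⟩ with hr₀
      have hmemS : q ∈ S r₀ := by
        rw [hSdef]
        exact Finset.mem_filter.mpr ⟨hmem, by simp [hr₀]; omega⟩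
      have hsum : ∑ r : Fin (m - 1), (m + 1 + (r : ℕ)) * (v r).factorization q
          = m + 1 + (s - 1) := by
        rw [Finset.sum_eq_single r₀ (fun r _ hne => by
            rw [hvfact, if_neg (fun hc => by
              have := (Finset.mem_filter.mp hc).2
              exact hne (Fin.ext (by simp [hr₀]; omega))), mul_zero])
          (fun h => absurd (Finset.mem_univ r₀) h)]
        rw [hvfact, if_pos hmemS, mul_one]
      rw [hsum, if_neg h0]
      have hk1 : 1 ≤ e q / m := (Nat.one_le_div_iff hm0).mpr he'
      obtain ⟨k, hk⟩ : ∃ k, e q / m = k + 1 := ⟨e q / m - 1, by omega⟩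
      have hdm := Nat.div_add_mod (e q) m
      rw [hk, ← hs] at hdm
      have h1 : m * (k + 1) = m * k + m := by ring
      rw [h1] at hdm
      rw [hk]
      simp only [Nat.add_sub_cancel]
      obtain ⟨t, ht⟩ : ∃ t, m * k = t := ⟨_, rfl⟩
      rw [ht] at hdm ⊢
      have hnq : n.factorization q = e q := rfl
      rw [hnq]
      omega
  refine ⟨⟨u, v⟩, ⟨hu0, hv0, hsf, hcop, hmain⟩, ?_⟩
  rintro ⟨u', v'⟩ ⟨hu0', hv0', hsf', hcop', hmain'⟩
  have H := fun p hp => repr_fact' hm hn hv0' hsf' hcop' hmain' p hp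
  have H2 := fun p hp => repr_fact' hm hn hv0 hsf hcop hmain p hp
  have hueq : u' = u := by
    refine Nat.factorization_inj hu0'.ne' hu0.ne' (Finsupp.ext fun p => ?_)
    by_cases hp : p.Prime
    · rw [(H p hp).1, (H2 p hp).1]
    · rw [Nat.factorization_eq_zero_of_not_prime _ hp,
        Nat.factorization_eq_zero_of_not_prime _ hp]
  have hveq : v' = v := by
    funext r
    refine Nat.factorization_inj (hv0' r).ne' (hv0 r).ne' (Finsupp.ext fun p => ?_)
    by_cases hp : p.Prime
    · rw [(H p hp).2 r, (H2 p hp).2 r]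
    · rw [Nat.factorization_eq_zero_of_not_prime _ hp,
        Nat.factorization_eq_zero_of_not_prime _ hp]
  exact Prod.ext hueq hveq

/-- A nonzero integer `x` is `m`-full if every prime dividing `x` divides it to
order at least `m`. -/
def IsMFullInt (m : ℕ) (x : ℤ) : Prop :=
  ∀ p : ℕ, p.Prime → (p : ℤ) ∣ x → (p : ℤ) ^ m ∣ x

/-- every nonzero `m`-full integer `x` has a unique representation
`|x| = u^m ∏_{r=1}^{m-1} v_r^{m+r}` with `u, v_r` positive, the `v_r` squarefree and
pairwise coprime. -/
theorem stmt_2 (m : ℕ) (hm : 2 ≤ m) (x : ℤ) (hx : x ≠ 0)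
    (hfull : IsMFullInt m x) :
    ∃! uv : ℕ × (Fin (m - 1) → ℕ),
      0 < uv.1 ∧ (∀ r, 0 < uv.2 r) ∧ (∀ r, Squarefree (uv.2 r)) ∧
      (∀ r r', r ≠ r' → Nat.Coprime (uv.2 r) (uv.2 r')) ∧
      x.natAbs = uv.1 ^ m * ∏ r, (uv.2 r) ^ (m + 1 + (r : ℕ)) := by
  have hn : x.natAbs ≠ 0 := Int.natAbs_ne_zero.mpr hx
  refine nat_main' m hm x.natAbs hn ?_
  intro p hp hdvd
  have h1 : (p : ℤ) ∣ x := Int.natAbs_dvd_natAbs.mp (by simpa using hdvd)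
  have h2 : (p : ℤ) ^ m ∣ x := hfull p hp h1
  have h3 : p ^ m ∣ x.natAbs := by
    have h4 := Int.natAbs_dvd_natAbs.mpr h2
    rwa [Int.natAbs_pow, Int.natAbs_natCast] at h4
  exact (Nat.Prime.pow_dvd_iff_le_factorization hp hn).mp h3
end

section
/- Let d be a squarefree positive integer and m ≥ 2 an integer. Suppose x is a nonzero m-full integer with decomposition |x| = u^m ∏_{r=1}^{m-1} v_r^{m+r} (with v_r squarefree and pairwise coprime) and d | x. Then there exist unique positive integers s, t_1, ..., t_{m-1} such that d = s ∏_{r=1}^{m-1} t_r, all of s, t_1,...,t_{m-1} are squarefree, s is coprime to each v_r and each t_r, the t_r are pairwise coprime, s | u, and t_r | v_r for each r. -/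
/-- A prime cannot divide both members of a coprime pair. -/
lemma prime_not_dvd_both {p a b : ℕ} (hp : p.Prime) (h : Nat.Coprime a b)
    (ha : p ∣ a) (hb : p ∣ b) : False := by
  have hg : p ∣ Nat.gcd a b := Nat.dvd_gcd ha hb
  rw [Nat.Coprime] at h
  rw [h] at hg
  exact hp.ne_one (Nat.dvd_one.mp hg)

/-- A squarefree number divides `k` as soon as each of its prime divisors does. -/
lemma sqf_dvd_of_primes {n k : ℕ} (hn : Squarefree n) (hk : k ≠ 0)
    (h : ∀ p : ℕ, p.Prime → p ∣ n → p ∣ k) : n ∣ k := by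
  rw [← Nat.factorization_le_iff_dvd hn.ne_zero hk]
  intro p
  by_cases hp : p.Prime
  · have h1 : n.factorization p ≤ 1 := hn.natFactorization_le_one p
    by_cases hpn : p ∣ n
    · have : 1 ≤ k.factorization p :=
        (Nat.Prime.factorization_pos_of_dvd hp hk (h p hp hpn))
      omega
    · simp [Nat.factorization_eq_zero_of_not_dvd hpn]
  · simp [Nat.factorization_eq_zero_of_not_prime _ hp]

/-- if `d` is a squarefree positive integer dividing a nonzero
`m`-full integer `x` with canonical decomposition `|x| = u^m ∏ v_r^{m+r}`, then
`d` factors uniquely as `d = s ∏ t_r` with `s, t_r` squarefree, `s` coprime to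
each `v_r` and each `t_r`, the `t_r` pairwise coprime, `s ∣ u` and `t_r ∣ v_r`. -/
theorem stmt_3 (m : ℕ) (hm : 2 ≤ m) (d : ℕ) (hd : Squarefree d)
    (x : ℤ) (hx : x ≠ 0) (hfull : IsMFullInt m x)
    (u : ℕ) (v : Fin (m - 1) → ℕ) (hu : 0 < u) (hv : ∀ r, 0 < v r)
    (hvsq : ∀ r, Squarefree (v r))
    (hvcop : ∀ r r', r ≠ r' → Nat.Coprime (v r) (v r'))
    (hdec : x.natAbs = u ^ m * ∏ r, (v r) ^ (m + 1 + (r : ℕ)))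
    (hdvd : (d : ℤ) ∣ x) :
    ∃! st : ℕ × (Fin (m - 1) → ℕ),
      d = st.1 * ∏ r, st.2 r ∧
      Squarefree st.1 ∧ (∀ r, Squarefree (st.2 r)) ∧
      (∀ r, Nat.Coprime st.1 (v r)) ∧
      (∀ r, Nat.Coprime st.1 (st.2 r)) ∧
      (∀ r r', r ≠ r' → Nat.Coprime (st.2 r) (st.2 r')) ∧
      st.1 ∣ u ∧ (∀ r, st.2 r ∣ v r) := by
  have hd0 : d ≠ 0 := hd.ne_zero
  have hdna : d ∣ x.natAbs := Int.natCast_dvd_natCast.mp (hdvd.trans (Int.dvd_natAbs.mpr dvd_rfl))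
  -- the canonical choice of `t r`
  set t : Fin (m - 1) → ℕ := fun r => Nat.gcd d (v r) with ht
  have htd : ∀ r, t r ∣ d := fun r => Nat.gcd_dvd_left _ _
  have htv : ∀ r, t r ∣ v r := fun r => Nat.gcd_dvd_right _ _
  have htcop : ∀ r r', r ≠ r' → Nat.Coprime (t r) (t r') := fun r r' hrr' =>
    ((hvcop r r' hrr').coprime_dvd_left (htv r)).coprime_dvd_right (htv r')
  have hTd : (∏ r, t r) ∣ d := by
    apply Fintype.prod_dvd_of_isRelPrime
    · intro r r' hrr'
      exact Nat.coprime_iff_isRelPrime.mp (htcop r r' hrr')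
    · exact htd
  obtain ⟨s, hs⟩ := hTd
  have hT0 : (∏ r, t r) ≠ 0 := by
    intro h
    rw [h, zero_mul] at hs
    exact hd0 hs
  have hds : d = s * ∏ r, t r := by rw [hs, mul_comm]
  have hsT : Squarefree (s * ∏ r, t r) := hds ▸ hd
  obtain ⟨hscopT, hssq, hTsq⟩ := Nat.squarefree_mul_iff.mp hsT
  have hsd : s ∣ d := ⟨∏ r, t r, hds⟩
  have hscopt : ∀ r, Nat.Coprime s (t r) :=
    fun r => hscopT.coprime_dvd_right (Finset.dvd_prod_of_mem _ (Finset.mem_univ r))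
  have hscopv : ∀ r, Nat.Coprime s (v r) := by
    intro r
    by_contra hcon
    obtain ⟨p, hp, hps, hpv⟩ := Nat.Prime.not_coprime_iff_dvd.mp hcon
    exact prime_not_dvd_both hp (hscopt r) hps (Nat.dvd_gcd (hps.trans hsd) hpv)
  have hsu : s ∣ u := by
    apply sqf_dvd_of_primes hssq hu.ne'
    intro p hp hps
    have hpd : p ∣ x.natAbs := (hps.trans hsd).trans hdna
    rw [hdec] at hpd
    rcases (Nat.Prime.dvd_mul hp).mp hpd with h | h
    · exact hp.dvd_of_dvd_pow h
    · exfalso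
      obtain ⟨r, -, hr⟩ := Prime.exists_mem_finset_dvd hp.prime h
      exact prime_not_dvd_both hp (hscopv r) hps (hp.dvd_of_dvd_pow hr)
  refine ⟨⟨s, t⟩, ⟨hds, hssq, fun r => hTsq.squarefree_of_dvd
      (Finset.dvd_prod_of_mem _ (Finset.mem_univ r)), hscopv, hscopt, htcop, hsu, htv⟩, ?_⟩
  -- uniqueness
  rintro ⟨s', t'⟩ ⟨hds', hs'sq, ht'sq, hs'copv, hs'copt, ht'cop, hs'u, ht'v⟩
  have ht'eq : t' = t := by
    funext r
    have hT'd : t' r ∣ d := hds' ▸ (Finset.dvd_prod_of_mem _ (Finset.mem_univ r)).mul_left _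
    have h1 : t' r ∣ t r := Nat.dvd_gcd hT'd (ht'v r)
    have h2 : t r ∣ t' r := by
      apply sqf_dvd_of_primes (hd.squarefree_of_dvd (htd r))
        (Nat.pos_of_dvd_of_pos (ht'v r) (hv r)).ne'
      intro p hp hpt
      have hpd : p ∣ d := hpt.trans (htd r)
      have hpv : p ∣ v r := hpt.trans (htv r)
      rw [hds'] at hpd
      rcases (Nat.Prime.dvd_mul hp).mp hpd with h | h
      · exact absurd (prime_not_dvd_both hp (hs'copv r) h hpv) not_false
      · obtain ⟨r', -, hr'⟩ := Prime.exists_mem_finset_dvd hp.prime h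
        rcases eq_or_ne r' r with rfl | hne
        · exact hr'
        · exact absurd (prime_not_dvd_both hp (hvcop r' r hne) ((hr'.trans (ht'v r'))) hpv)
            not_false
    exact Nat.dvd_antisymm h1 h2
  have hs'eq : s' = s := by
    have : s' * ∏ r, t r = s * ∏ r, t r := by
      rw [← hds, hds', ht'eq]
    exact Nat.eq_of_mul_eq_mul_right (Nat.pos_of_ne_zero hT0) this
  simp [ht'eq, hs'eq]
end

section
/- Let m ≥ 2 be an integer. For B ≥ 1, the number of m-full positive integers x ≤ B is asymptotic to c · B^{1/m} for some constant c > 0, with error term O(B^{1/(m+1)}). -/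
open Finset
open scoped Classical

/-- A positive integer `x` is `m`-full if every prime dividing `x` divides it to
order at least `m`. -/
def IsMFull (m x : ℕ) : Prop := ∀ p : ℕ, p.Prime → p ∣ x → p ^ m ∣ x



/-- `b` is positive and all prime exponents of `b` lie in `[m+r, 2m-1]`. -/
def InS (m r b : ℕ) : Prop :=
  0 < b ∧ ∀ p : ℕ, p.Prime → p ∣ b →
    (m + r ≤ b.factorization p ∧ b.factorization p ≤ 2 * m - 1)

lemma InS_one (m r : ℕ) : InS m r 1 := by
  refine ⟨one_pos, fun p hp hpd => ?_⟩
  exact absurd (Nat.eq_one_of_dvd_one hpd) hp.one_lt.ne'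

/-- squarefree part of S-decomposition -/
noncomputable def uPart (m r b : ℕ) : ℕ :=
  ∏ p ∈ b.primeFactors.filter (fun p => b.factorization p = m + r), p

noncomputable def wPart (m r b : ℕ) : ℕ := b / (uPart m r b) ^ (m + r)

lemma uPart_pos (m r b : ℕ) : 0 < uPart m r b :=
  Finset.prod_pos fun p hp => (Nat.prime_of_mem_primeFactors (Finset.mem_filter.mp hp).1).pos

lemma uPart_factorization (m r b : ℕ) (q : ℕ) :
    (uPart m r b).factorization q =
      if q ∈ b.primeFactors.filter (fun p => b.factorization p = m + r) then 1 else 0 := by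
  classical
  set P := b.primeFactors.filter (fun p => b.factorization p = m + r) with hP
  have h1 : (uPart m r b).factorization = ∑ p ∈ P, Nat.factorization p := by
    rw [uPart, ← hP]
    exact Nat.factorization_prod (fun p hp =>
      (Nat.prime_of_mem_primeFactors (Finset.mem_filter.mp hp).1).pos.ne')
  rw [h1, Finsupp.finset_sum_apply]
  have h2 : ∀ p ∈ P, (Nat.factorization p) q = if p = q then 1 else 0 := by
    intro p hp
    rw [(Nat.prime_of_mem_primeFactors (Finset.mem_filter.mp hp).1).factorization]
    exact Finsupp.single_apply
  rw [Finset.sum_congr rfl h2, Finset.sum_ite_eq' P q (fun _ => 1)]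

lemma uPart_pow_dvd (m r b : ℕ) (hb : 0 < b) : (uPart m r b) ^ (m + r) ∣ b := by
  classical
  rw [← Nat.factorization_le_iff_dvd (pow_ne_zero _ (uPart_pos m r b).ne') hb.ne']
  rw [Finsupp.le_def]
  intro q
  rw [Nat.factorization_pow, Finsupp.smul_apply, uPart_factorization]
  by_cases h : q ∈ b.primeFactors.filter (fun p => b.factorization p = m + r)
  · rw [if_pos h]
    have h2 : b.factorization q = m + r := (Finset.mem_filter.mp h).2
    simp [h2]
  · rw [if_neg h]; simp

lemma decomp (m r b : ℕ) (hb : InS m r b) :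
    b = (uPart m r b) ^ (m + r) * wPart m r b ∧ InS m (r + 1) (wPart m r b) := by
  classical
  obtain ⟨hb0, hbf⟩ := hb
  have hdvd := uPart_pow_dvd m r b hb0
  have heq : b = (uPart m r b) ^ (m + r) * wPart m r b := (Nat.mul_div_cancel' hdvd).symm
  have hw0 : 0 < wPart m r b := by
    rcases Nat.eq_zero_or_pos (wPart m r b) with h | h
    · rw [h, mul_zero] at heq; omega
    · exact h
  refine ⟨heq, hw0, fun q hq hqd => ?_⟩
  have hwfact : (wPart m r b).factorization q
      = b.factorization q - ((uPart m r b) ^ (m + r)).factorization q := by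
    rw [wPart, Nat.factorization_div hdvd]; rfl
  have hupow : ((uPart m r b) ^ (m + r)).factorization q
      = if q ∈ b.primeFactors.filter (fun p => b.factorization p = m + r) then m + r else 0 := by
    rw [Nat.factorization_pow, Finsupp.smul_apply, uPart_factorization]
    by_cases h : q ∈ b.primeFactors.filter (fun p => b.factorization p = m + r)
    · rw [if_pos h, if_pos h]; simp
    · rw [if_neg h, if_neg h]; simp
  have hqb : q ∣ b := hqd.trans (Dvd.intro_left _ heq.symm)
  have hqpos : 0 < (wPart m r b).factorization q :=
    hq.factorization_pos_of_dvd hw0.ne' hqd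
  have hqmem : q ∈ b.primeFactors := Nat.mem_primeFactors.mpr ⟨hq, hqb, hb0.ne'⟩
  rw [hwfact, hupow] at hqpos
  by_cases hcase : b.factorization q = m + r
  · exfalso
    have hmm : q ∈ b.primeFactors.filter (fun p => b.factorization p = m + r) :=
      Finset.mem_filter.mpr ⟨hqmem, hcase⟩
    rw [if_pos hmm, hcase] at hqpos
    omega
  · have hnotmem : q ∉ b.primeFactors.filter (fun p => b.factorization p = m + r) := by
      simp only [Finset.mem_filter]
      tauto
    rw [if_neg hnotmem, Nat.sub_zero] at hqpos
    rw [hwfact, hupow, if_neg hnotmem, Nat.sub_zero]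
    have := hbf q hq hqb
    omega


lemma InS_pos (m r b : ℕ) (hb : InS m r b) : 0 < b := hb.1

lemma InS_factor (m r b : ℕ) (hb : InS m r b) : ∀ p : ℕ, p.Prime → p ∣ b →
    (m + r ≤ b.factorization p ∧ b.factorization p ≤ 2 * m - 1) := hb.2

lemma InS_eq_one (m r b : ℕ) (hm : 1 ≤ m) (hr : m ≤ r) (hb : InS m r b) : b = 1 := by
  by_contra h
  obtain ⟨p, hp, hpd⟩ := Nat.exists_prime_and_dvd h
  have := InS_factor m r b hb p hp hpd
  omega

/-- the value of `(b:ℝ)^(-s)` splits along the decomposition -/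
lemma rpow_decomp (m r b : ℕ) (s : ℝ) (hb : InS m r b) :
    (b : ℝ) ^ (-s) = ((uPart m r b : ℝ) ^ (((m + r : ℕ) : ℝ) * (-s))) *
      ((wPart m r b : ℝ) ^ (-s)) := by
  obtain ⟨heq, -⟩ := decomp m r b hb
  set u := uPart m r b with hu
  set w := wPart m r b with hw
  rw [heq]
  push_cast
  rw [Real.mul_rpow (by positivity) (by positivity)]
  congr 1
  rw [← Real.rpow_natCast (u : ℝ) (m+r), ← Real.rpow_mul (by positivity)]
  push_cast
  ring_nf

lemma summable_InS (m : ℕ) (hm : 2 ≤ m) (s : ℝ) (hs : 0 < s) :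
    ∀ k r : ℕ, m ≤ r + k → 1 ≤ r → 1 < ((m + r : ℕ) : ℝ) * s →
      Summable (fun b : ℕ => if InS m r b then (b : ℝ) ^ (-s) else 0) := by
  classical
  intro k
  induction k with
  | zero =>
      intro r hmr h1r hrs
      apply summable_of_ne_finset_zero (s := {1})
      intro b hb
      simp only [Finset.mem_singleton] at hb
      exact if_neg (fun hIn => hb (InS_eq_one m r b (by omega) (by omega) hIn))
  | succ k ih =>
      intro r hmr h1r hrs
      have hcast : (1:ℝ) ≤ ((m + r : ℕ) : ℝ) := by exact_mod_cast Nat.one_le_iff_ne_zero.mpr (by omega)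
      have hf' : Summable (fun w : ℕ => if InS m (r+1) w then (w : ℝ) ^ (-s) else 0) := by
        apply ih (r+1) (by omega) (by omega)
        calc (1:ℝ) < ((m + r : ℕ) : ℝ) * s := hrs
        _ ≤ ((m + (r+1) : ℕ) : ℝ) * s := by
            apply mul_le_mul_of_nonneg_right _ hs.le
            exact_mod_cast Nat.le_succ _
      have hg : Summable (fun u : ℕ => (u : ℝ) ^ (((m + r : ℕ) : ℝ) * (-s))) := by
        apply Real.summable_nat_rpow.mpr
        nlinarith
      have hf'0 : ∀ w, 0 ≤ (if InS m (r+1) w then (w : ℝ) ^ (-s) else 0) := by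
        intro w; split
        · positivity
        · exact le_rfl
      have hh : Summable (fun q : ℕ × ℕ =>
          ((q.1 : ℝ) ^ (((m + r : ℕ) : ℝ) * (-s))) *
          (if InS m (r+1) q.2 then (q.2 : ℝ) ^ (-s) else 0)) :=
        hg.mul_of_nonneg hf' (fun u => by positivity) hf'0
      set h : ℕ × ℕ → ℝ := fun q =>
          ((q.1 : ℝ) ^ (((m + r : ℕ) : ℝ) * (-s))) *
          (if InS m (r+1) q.2 then (q.2 : ℝ) ^ (-s) else 0) with hhdef
      have hh0 : ∀ q, 0 ≤ h q := fun q => mul_nonneg (by positivity) (hf'0 _)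
      apply summable_of_sum_le (c := ∑' q, h q)
      · intro b; dsimp only; split
        · positivity
        · exact le_rfl
      · intro t
        rw [← Finset.sum_filter]
        set t' := t.filter (fun b => InS m r b) with ht'
        have hmem : ∀ b ∈ t', InS m r b := fun b hb => (Finset.mem_filter.mp hb).2
        have key : ∀ b ∈ t', (b:ℝ) ^ (-s) = h (uPart m r b, wPart m r b) := by
          intro b hb
          rw [rpow_decomp m r b s (hmem b hb), hhdef]
          dsimp only
          rw [if_pos (decomp m r b (hmem b hb)).2]
        rw [Finset.sum_congr rfl key]
        have hinj : ∀ b₁ ∈ t', ∀ b₂ ∈ t',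
            (fun b => (uPart m r b, wPart m r b)) b₁ = (fun b => (uPart m r b, wPart m r b)) b₂ → b₁ = b₂ := by
          intro b₁ h₁ b₂ h₂ heq
          have e₁ := (decomp m r b₁ (hmem b₁ h₁)).1
          have e₂ := (decomp m r b₂ (hmem b₂ h₂)).1
          simp only [Prod.mk.injEq] at heq
          rw [e₁, e₂, heq.1, heq.2]
        have himg := Finset.sum_image (f := h) (g := fun b => (uPart m r b, wPart m r b)) (s := t') hinj
        rw [← himg]
        exact Summable.sum_le_tsum _ (fun q _ => hh0 q) hh


lemma summable_f2 (m : ℕ) (hm : 2 ≤ m) :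
    Summable (fun w : ℕ => if InS m 2 w then (w : ℝ) ^ (-((1:ℝ)/((m:ℝ)+1))) else 0) := by
  have h1 : (0:ℝ) < (m:ℝ)+1 := by positivity
  apply summable_InS m hm _ (by positivity) m 2 (by omega) (by omega)
  have h2 : ((m+2:ℕ):ℝ) = (m:ℝ)+2 := by push_cast; ring
  rw [h2, mul_one_div, lt_div_iff₀ h1]
  linarith

lemma card_S_le (m : ℕ) (hm : 2 ≤ m) :
    ∃ K : ℝ, 0 ≤ K ∧ ∀ B : ℝ, 1 ≤ B →
      (((Finset.Icc 1 ⌊B⌋₊).filter (fun b => InS m 1 b)).card : ℝ)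
        ≤ K * B ^ ((1:ℝ)/((m:ℝ)+1)) := by
  have h1 : (0:ℝ) < (m:ℝ)+1 := by positivity
  set e : ℝ := (1:ℝ)/((m:ℝ)+1) with he
  have he0 : 0 ≤ e := by positivity
  set f2 : ℕ → ℝ := fun w => if InS m 2 w then (w : ℝ) ^ (-e) else 0 with hf2
  have hf2sum : Summable f2 := summable_f2 m hm
  have hf2nn : ∀ w, 0 ≤ f2 w := by
    intro w; rw [hf2]; dsimp only; split
    · positivity
    · exact le_rfl
  refine ⟨∑' w, f2 w, tsum_nonneg hf2nn, fun B hB => ?_⟩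
  have hB0 : (0:ℝ) < B := by linarith
  set N := ⌊B⌋₊ with hN
  have hNB : (N:ℝ) ≤ B := Nat.floor_le hB0.le
  set tgt : Finset ((_ : ℕ) × ℕ) :=
    ((Finset.Icc 1 N).filter (fun w => InS m 2 w)).sigma
      (fun w => Finset.Icc 1 ⌊(B/(w:ℝ)) ^ e⌋₊) with htgt
  have hcard : ((Finset.Icc 1 N).filter (fun b => InS m 1 b)).card ≤ tgt.card := by
    apply Finset.card_le_card_of_injOn (fun b => ⟨wPart m 1 b, uPart m 1 b⟩)
    · intro b hb
      obtain ⟨hbI, hbS⟩ := Finset.mem_filter.mp hb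
      obtain ⟨hb1, hbN⟩ := Finset.mem_Icc.mp hbI
      obtain ⟨heq, hw⟩ := decomp m 1 b hbS
      have hu1 : 1 ≤ uPart m 1 b := uPart_pos m 1 b
      have hw1 : 1 ≤ wPart m 1 b := InS_pos m 2 _ hw
      have hwb : wPart m 1 b ≤ b := by
        calc wPart m 1 b ≤ (uPart m 1 b)^(m+1) * wPart m 1 b :=
          Nat.le_mul_of_pos_left _ (by positivity)
        _ = b := heq.symm
      rw [Finset.mem_coe, htgt, Finset.mem_sigma]
      constructor
      · exact Finset.mem_filter.mpr ⟨Finset.mem_Icc.mpr ⟨hw1, hwb.trans hbN⟩, hw⟩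
      · rw [Finset.mem_Icc]
        refine ⟨hu1, Nat.le_floor ?_⟩
        set u := uPart m 1 b
        set w := wPart m 1 b
        have hple : ((u:ℝ))^(m+1) ≤ B / (w:ℝ) := by
          rw [le_div_iff₀ (by exact_mod_cast hw1)]
          calc ((u:ℝ))^(m+1) * (w:ℝ) = ((u^(m+1) * w : ℕ) : ℝ) := by push_cast; ring
          _ = (b:ℝ) := by rw [← heq]
          _ ≤ (N:ℝ) := by exact_mod_cast hbN
          _ ≤ B := hNB
        have hcast : e = ((m+1:ℕ):ℝ)⁻¹ := by rw [he]; push_cast; ring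
        calc (u:ℝ) = (((u:ℝ))^(m+1)) ^ (((m+1:ℕ):ℝ))⁻¹ :=
            (Real.pow_rpow_inv_natCast (by positivity) (by omega)).symm
        _ ≤ (B / (w:ℝ)) ^ (((m+1:ℕ):ℝ))⁻¹ := by
            apply Real.rpow_le_rpow (by positivity) hple (by positivity)
        _ = (B / (w:ℝ)) ^ e := by rw [hcast]
    · intro b₁ h₁ b₂ h₂ heq
      simp only [Finset.coe_filter, Set.mem_setOf_eq] at h₁ h₂
      have e₁ := (decomp m 1 b₁ h₁.2).1
      have e₂ := (decomp m 1 b₂ h₂.2).1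
      have hws : wPart m 1 b₁ = wPart m 1 b₂ := congrArg Sigma.fst heq
      have hus : uPart m 1 b₁ = uPart m 1 b₂ := congrArg Sigma.snd heq
      rw [e₁, e₂, hws, hus]
  calc (((Finset.Icc 1 N).filter (fun b => InS m 1 b)).card : ℝ) ≤ (tgt.card : ℝ) := by
        exact_mod_cast hcard
  _ = ∑ w ∈ (Finset.Icc 1 N).filter (fun w => InS m 2 w), ((⌊(B/(w:ℝ)) ^ e⌋₊ : ℕ) : ℝ) := by
        rw [htgt, Finset.card_sigma]
        push_cast
        apply Finset.sum_congr rfl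
        intro w hw
        rw [Nat.card_Icc]
        push_cast [Nat.add_sub_cancel]
        ring
  _ ≤ ∑ w ∈ (Finset.Icc 1 N).filter (fun w => InS m 2 w), B ^ e * (w:ℝ) ^ (-e) := by
        apply Finset.sum_le_sum
        intro w hw
        obtain ⟨hwI, hwS⟩ := Finset.mem_filter.mp hw
        have hw1 : 1 ≤ w := (Finset.mem_Icc.mp hwI).1
        have hw0 : (0:ℝ) < (w:ℝ) := by exact_mod_cast hw1
        calc ((⌊(B/(w:ℝ)) ^ e⌋₊ : ℕ) : ℝ) ≤ (B/(w:ℝ)) ^ e := Nat.floor_le (by positivity)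
        _ = B ^ e * (w:ℝ) ^ (-e) := by
            rw [Real.div_rpow hB0.le hw0.le, Real.rpow_neg hw0.le, div_eq_mul_inv]
  _ = B ^ e * ∑ w ∈ Finset.Icc 1 N, f2 w := by
        rw [← Finset.mul_sum]
        congr 1
        rw [hf2, Finset.sum_filter]
  _ ≤ (∑' w, f2 w) * B ^ e := by
        rw [mul_comm]
        apply mul_le_mul_of_nonneg_right _ (by positivity)
        exact Summable.sum_le_tsum _ (fun w _ => hf2nn w) hf2sum


lemma summable_f1 (m : ℕ) (hm : 2 ≤ m) :
    Summable (fun b : ℕ => if InS m 1 b then (b : ℝ) ^ (-((1:ℝ)/(m:ℝ))) else 0) := by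
  have h1 : (0:ℝ) < (m:ℝ) := by exact_mod_cast (show 0 < m by omega)
  apply summable_InS m hm _ (by positivity) m 1 (by omega) (by omega)
  have h2 : ((m+1:ℕ):ℝ) = (m:ℝ)+1 := by push_cast; ring
  rw [h2, mul_one_div, lt_div_iff₀ h1]
  linarith

lemma tail_le (m : ℕ) (hm : 2 ≤ m) :
    ∃ K : ℝ, 0 ≤ K ∧ ∀ B : ℝ, 1 ≤ B →
      (∑' b : ℕ, if ⌊B⌋₊ < b ∧ InS m 1 b then (b:ℝ) ^ (-((1:ℝ)/(m:ℝ))) else 0)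
        ≤ K * B ^ ((1:ℝ)/((m:ℝ)+1) - (1:ℝ)/(m:ℝ)) := by
  have hm0 : (0:ℝ) < (m:ℝ) := by exact_mod_cast (show 0 < m by omega)
  obtain ⟨K1, hK1nn, hK1⟩ := card_S_le m hm
  set e1 : ℝ := (1:ℝ)/((m:ℝ)+1) with he1
  set e2 : ℝ := (1:ℝ)/(m:ℝ) with he2
  have hee : e1 - e2 < 0 := by
    rw [he1, he2, sub_neg, div_lt_div_iff₀ (by positivity) hm0]
    linarith
  have he10 : 0 < e1 := by positivity
  have he20 : 0 < e2 := by positivity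
  set ρ : ℝ := (2:ℝ) ^ (e1 - e2) with hρ
  have hρ0 : 0 ≤ ρ := by positivity
  have hρ1 : ρ < 1 := Real.rpow_lt_one_of_one_lt_of_neg one_lt_two hee
  have h1ρ : 0 < 1 - ρ := by linarith
  refine ⟨K1 * (2:ℝ) ^ e1 * (1 - ρ)⁻¹, by positivity, fun B hB => ?_⟩
  have hB0 : (0:ℝ) < B := by linarith
  set N := ⌊B⌋₊ with hN
  set g : ℕ → ℝ := fun b => if N < b ∧ InS m 1 b then (b:ℝ) ^ (-e2) else 0 with hg
  have hgnn : ∀ b, 0 ≤ g b := by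
    intro b; rw [hg]; dsimp only; split
    · positivity
    · exact le_rfl
  have hgsum : Summable g := by
    apply Summable.of_nonneg_of_le hgnn _ (summable_f1 m hm)
    intro b
    rw [hg]; dsimp only
    split
    · next h => rw [if_pos h.2]
    · split
      · positivity
      · exact le_rfl
  apply Summable.tsum_le_of_sum_le hgsum
  intro t
  rw [hg, ← Finset.sum_filter]
  set t' := t.filter (fun b => N < b ∧ InS m 1 b) with ht'
  set jdx : ℕ → ℕ := fun b => ⌊Real.logb 2 ((b:ℝ)/B)⌋₊ with hjdx
  set J := t'.sup jdx + 1 with hJ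
  have hmaps : ∀ b ∈ t', jdx b ∈ Finset.range J :=
    fun b hb => Finset.mem_range.mpr (by
      have := Finset.le_sup (f := jdx) hb; omega)
  rw [← Finset.sum_fiberwise_of_maps_to hmaps]
  -- bound each fiber
  have hfiber : ∀ j ∈ Finset.range J,
      ∑ b ∈ t'.filter (fun b => jdx b = j), (b:ℝ) ^ (-e2)
        ≤ (K1 * (2:ℝ) ^ e1 * B ^ (e1 - e2)) * ρ ^ j := by
    intro j _
    set F := t'.filter (fun b => jdx b = j) with hF
    have hbnds : ∀ b ∈ F, (2:ℝ) ^ (j:ℝ) * B ≤ (b:ℝ) ∧ (b:ℝ) ≤ (2:ℝ) ^ ((j:ℝ)+1) * B := by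
      intro b hb
      obtain ⟨hbt', hbj⟩ := Finset.mem_filter.mp hb
      simp only [hjdx] at hbj
      obtain ⟨-, hNb, -⟩ := Finset.mem_filter.mp hbt'
      have hBb : B < (b:ℝ) := by
        calc B < (N:ℝ) + 1 := Nat.lt_floor_add_one B
        _ ≤ (b:ℝ) := by exact_mod_cast hNb
      have hyp : (1:ℝ) ≤ (b:ℝ)/B := by
        rw [le_div_iff₀ hB0]; linarith
      have hlog0 : 0 ≤ Real.logb 2 ((b:ℝ)/B) := Real.logb_nonneg one_lt_two hyp
      have hjle : (j:ℝ) ≤ Real.logb 2 ((b:ℝ)/B) := by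
        rw [← hbj]; exact_mod_cast Nat.floor_le hlog0
      have hjlt : Real.logb 2 ((b:ℝ)/B) < (j:ℝ) + 1 := by
        rw [← hbj]; push_cast; exact Nat.lt_floor_add_one _
      have hx0 : (0:ℝ) < (b:ℝ)/B := by linarith
      have hrw : (2:ℝ) ^ Real.logb 2 ((b:ℝ)/B) = (b:ℝ)/B :=
        Real.rpow_logb two_pos (by norm_num) hx0
      constructor
      · have := Real.rpow_le_rpow_of_exponent_le one_le_two hjle
        rw [hrw] at this
        calc (2:ℝ) ^ (j:ℝ) * B ≤ ((b:ℝ)/B) * B := by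
              apply mul_le_mul_of_nonneg_right this hB0.le
        _ = (b:ℝ) := by field_simp
      · have := Real.rpow_le_rpow_of_exponent_le one_le_two hjlt.le
        rw [hrw] at this
        calc (b:ℝ) = ((b:ℝ)/B) * B := by field_simp
        _ ≤ (2:ℝ) ^ ((j:ℝ)+1) * B := by
              apply mul_le_mul_of_nonneg_right this hB0.le
    have hterm : ∀ b ∈ F, (b:ℝ) ^ (-e2) ≤ ((2:ℝ) ^ (j:ℝ) * B) ^ (-e2) := by
      intro b hb
      exact Real.rpow_le_rpow_of_nonpos (by positivity) (hbnds b hb).1 (by linarith)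
    have hcardF : (F.card : ℝ) ≤ K1 * ((2:ℝ) ^ ((j:ℝ)+1) * B) ^ e1 := by
      have hsub : F ⊆ (Finset.Icc 1 ⌊(2:ℝ) ^ ((j:ℝ)+1) * B⌋₊).filter (fun b => InS m 1 b) := by
        intro b hb
        obtain ⟨hbt', hbj⟩ := Finset.mem_filter.mp hb
        obtain ⟨-, hNb, hbS⟩ := Finset.mem_filter.mp hbt'
        refine Finset.mem_filter.mpr ⟨Finset.mem_Icc.mpr ⟨InS_pos m 1 b hbS, Nat.le_floor (hbnds b hb).2⟩, hbS⟩
      have h2B : (1:ℝ) ≤ (2:ℝ) ^ ((j:ℝ)+1) * B := by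
        have : (1:ℝ) ≤ (2:ℝ) ^ ((j:ℝ)+1) := Real.one_le_rpow one_le_two (by positivity)
        nlinarith
      calc (F.card : ℝ) ≤ _ := by exact_mod_cast Finset.card_le_card hsub
      _ ≤ K1 * ((2:ℝ) ^ ((j:ℝ)+1) * B) ^ e1 := hK1 _ h2B
    calc ∑ b ∈ F, (b:ℝ) ^ (-e2) ≤ ∑ b ∈ F, ((2:ℝ) ^ (j:ℝ) * B) ^ (-e2) :=
          Finset.sum_le_sum hterm
    _ = (F.card : ℝ) * ((2:ℝ) ^ (j:ℝ) * B) ^ (-e2) := by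
          rw [Finset.sum_const, nsmul_eq_mul]
    _ ≤ (K1 * ((2:ℝ) ^ ((j:ℝ)+1) * B) ^ e1) * ((2:ℝ) ^ (j:ℝ) * B) ^ (-e2) := by
          apply mul_le_mul_of_nonneg_right hcardF (by positivity)
    _ = (K1 * (2:ℝ) ^ e1 * B ^ (e1 - e2)) * ρ ^ j := by
          rw [Real.mul_rpow (by positivity) hB0.le, Real.mul_rpow (by positivity) hB0.le]
          rw [hρ, ← Real.rpow_natCast ((2:ℝ) ^ (e1 - e2)) j, ← Real.rpow_mul (by norm_num)]
          rw [← Real.rpow_mul (by norm_num), ← Real.rpow_mul (by norm_num)]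
          rw [show B ^ (e1 - e2) = B ^ e1 * B ^ (-e2) by
            rw [← Real.rpow_add hB0]; ring_nf]
          rw [show ((j:ℝ)+1) * e1 = (j:ℝ)*e1 + e1 by ring,
              show (j:ℝ) * (-e2) = -((j:ℝ)*e2) by ring,
              show (e1 - e2) * (j:ℝ) = (j:ℝ)*e1 - (j:ℝ)*e2 by ring]
          rw [Real.rpow_add two_pos, Real.rpow_sub two_pos, Real.rpow_neg (by norm_num)]
          field_simp
  calc ∑ j ∈ Finset.range J, ∑ b ∈ t'.filter (fun b => jdx b = j), (b:ℝ) ^ (-e2)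
      ≤ ∑ j ∈ Finset.range J, (K1 * (2:ℝ) ^ e1 * B ^ (e1 - e2)) * ρ ^ j :=
        Finset.sum_le_sum hfiber
  _ = (K1 * (2:ℝ) ^ e1 * B ^ (e1 - e2)) * ∑ j ∈ Finset.range J, ρ ^ j := by
        rw [Finset.mul_sum]
  _ ≤ (K1 * (2:ℝ) ^ e1 * B ^ (e1 - e2)) * (1 - ρ)⁻¹ := by
        apply mul_le_mul_of_nonneg_left _ (by positivity)
        calc ∑ j ∈ Finset.range J, ρ ^ j ≤ ∑' j : ℕ, ρ ^ j :=
              Summable.sum_le_tsum _ (fun j _ => by positivity) (summable_geometric_of_lt_one hρ0 hρ1)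
        _ = (1 - ρ)⁻¹ := tsum_geometric_of_lt_one hρ0 hρ1
  _ = K1 * (2:ℝ) ^ e1 * (1 - ρ)⁻¹ * B ^ (e1 - e2) := by ring




-- exponent of prime q in a^m * b
lemma fact_mul_pow (m a b q : ℕ) (ha : 0 < a) (hb : 0 < b) :
    (a ^ m * b).factorization q = m * a.factorization q + b.factorization q := by
  rw [Nat.factorization_mul (pow_ne_zero m ha.ne') hb.ne', Nat.factorization_pow]
  simp [Finsupp.add_apply, Finsupp.smul_apply]

lemma mfull_of (m a b : ℕ) (hm : 1 ≤ m) (ha : 0 < a) (hb : InS m 1 b) :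
    IsMFull m (a ^ m * b) := by
  obtain ⟨hb0, hbf⟩ := hb
  have hx0 : 0 < a ^ m * b := by positivity
  intro p hp hpd
  rw [hp.pow_dvd_iff_le_factorization hx0.ne', fact_mul_pow m a b p ha hb0]
  rcases (hp.dvd_mul.mp hpd) with hpa | hpb
  · have hpa' : p ∣ a := hp.dvd_of_dvd_pow hpa
    have : 1 ≤ a.factorization p := hp.factorization_pos_of_dvd ha.ne' hpa'
    nlinarith
  · have := (hbf p hp hpb).1
    omega

lemma arith_aux (m e : ℕ) (hm : 2 ≤ m) (he : m ≤ e) :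
    m * ((e - (if e % m = 0 then 0 else m + e % m)) / m)
      + (if e % m = 0 then 0 else m + e % m) = e := by
  have hmod : e % m < m := Nat.mod_lt _ (by omega)
  have hdiv : m * (e / m) + e % m = e := Nat.div_add_mod e m
  by_cases hr : e % m = 0
  · rw [if_pos hr, Nat.sub_zero, Nat.add_zero]
    rw [Nat.mul_div_cancel' (Nat.dvd_of_mod_eq_zero hr)]
  · rw [if_neg hr]
    have h1 : 1 ≤ e / m := by
      rcases Nat.eq_zero_or_pos (e / m) with h | h
      · rw [h] at hdiv; omega
      · omega
    have hsub : e - (m + e % m) = m * (e / m - 1) := by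
      have : m * (e/m - 1) = m * (e/m) - m := by
        rw [Nat.mul_sub]; ring_nf
      omega
    rw [hsub, Nat.mul_div_cancel_left _ (by omega : 0 < m)]
    have h5 : m * (e / m - 1) = m * (e / m) - m := by
      rw [Nat.mul_sub]; ring_nf
    have h6 : m ≤ m * (e / m) := by nlinarith
    omega

lemma exists_rep (m x : ℕ) (hm : 2 ≤ m) (hx : 0 < x) (hfull : IsMFull m x) :
    ∃ a b : ℕ, 0 < a ∧ InS m 1 b ∧ x = a ^ m * b := by
  classical
  set β : ℕ → ℕ := fun p =>
    if x.factorization p % m = 0 then 0 else m + x.factorization p % m with hβ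
  set α : ℕ → ℕ := fun p => (x.factorization p - β p) / m with hα
  have hkey : ∀ p ∈ x.primeFactors, m * α p + β p = x.factorization p := by
    intro p hp
    have hpp : p.Prime := Nat.prime_of_mem_primeFactors hp
    have hpd : p ∣ x := Nat.dvd_of_mem_primeFactors hp
    have hem : m ≤ x.factorization p := by
      rw [← hpp.pow_dvd_iff_le_factorization hx.ne']
      exact hfull p hpp hpd
    rw [hα, hβ]
    dsimp only
    exact arith_aux m _ hm hem
  set a : ℕ := ∏ p ∈ x.primeFactors, p ^ α p with ha
  set b : ℕ := ∏ p ∈ x.primeFactors, p ^ β p with hb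
  have hppos : ∀ p ∈ x.primeFactors, 0 < p := fun p hp => (Nat.prime_of_mem_primeFactors hp).pos
  have ha0 : 0 < a := Finset.prod_pos (fun p hp => pow_pos (hppos p hp) _)
  have hb0 : 0 < b := Finset.prod_pos (fun p hp => pow_pos (hppos p hp) _)
  have hx' : x = a ^ m * b := by
    have hself := Nat.factorization_prod_pow_eq_self hx.ne'
    rw [Finsupp.prod, Nat.support_factorization] at hself
    rw [ha, ← Finset.prod_pow, ← Finset.prod_mul_distrib]
    rw [← Finset.prod_congr rfl (fun p hp => ?_), hself]
    rw [← pow_mul, ← pow_add, mul_comm (α p) m, hkey p hp]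
  -- factorization of b
  have hbfact : ∀ q : ℕ, b.factorization q = if q ∈ x.primeFactors then β q else 0 := by
    intro q
    rw [hb, Nat.factorization_prod (fun p hp => (pow_pos (hppos p hp) _).ne')]
    rw [Finsupp.finset_sum_apply]
    have : ∀ p ∈ x.primeFactors, ((p ^ β p).factorization) q
        = if p = q then β p else 0 := by
      intro p hp
      rw [(Nat.prime_of_mem_primeFactors hp).factorization_pow]
      exact Finsupp.single_apply
    rw [Finset.sum_congr rfl this, Finset.sum_ite_eq' _ q β]
  refine ⟨a, b, ha0, ⟨hb0, ?_⟩, hx'⟩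
  intro q hq hqb
  have hqpos : 0 < b.factorization q := hq.factorization_pos_of_dvd hb0.ne' hqb
  rw [hbfact q] at hqpos ⊢
  by_cases hmem : q ∈ x.primeFactors
  · rw [if_pos hmem] at hqpos ⊢
    rw [hβ] at hqpos ⊢
    dsimp only at hqpos ⊢
    by_cases hr : x.factorization q % m = 0
    · rw [if_pos hr] at hqpos; omega
    · rw [if_neg hr] at hqpos ⊢
      have : x.factorization q % m < m := Nat.mod_lt _ (by omega)
      omega
  · rw [if_neg hmem] at hqpos; omega

lemma rep_unique (m a b a' b' : ℕ) (hm : 2 ≤ m) (ha : 0 < a) (ha' : 0 < a')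
    (hb : InS m 1 b) (hb' : InS m 1 b') (heq : a ^ m * b = a' ^ m * b') :
    a = a' ∧ b = b' := by
  obtain ⟨hb0, hbf⟩ := hb
  obtain ⟨hb0', hbf'⟩ := hb'
  have hexp : ∀ q : ℕ, q.Prime →
      m * a.factorization q + b.factorization q
        = m * a'.factorization q + b'.factorization q := by
    intro q hq
    rw [← fact_mul_pow m a b q ha hb0, ← fact_mul_pow m a' b' q ha' hb0', heq]
  have hrange : ∀ (c : ℕ), 0 < c →
      (∀ p : ℕ, p.Prime → p ∣ c → (m + 1 ≤ c.factorization p ∧ c.factorization p ≤ 2*m - 1)) →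
      ∀ q : ℕ, q.Prime → c.factorization q = 0 ∨
        (m + 1 ≤ c.factorization q ∧ c.factorization q ≤ 2*m - 1) := by
    intro c hc hcf q hq
    by_cases hqc : q ∣ c
    · exact Or.inr (hcf q hq hqc)
    · exact Or.inl (Nat.factorization_eq_zero_of_not_dvd hqc)
  have hbeq : ∀ q : ℕ, b.factorization q = b'.factorization q := by
    intro q
    by_cases hq : q.Prime
    · have h1 := hrange b hb0 hbf q hq
      have h2 := hrange b' hb0' hbf' q hq
      have h3 := hexp q hq
      set vb := b.factorization q
      set vb' := b'.factorization q
      set va := a.factorization q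
      set va' := a'.factorization q
      -- prove vb = vb'
      rcases le_total va va' with hle | hle
      · obtain ⟨d, hd⟩ := Nat.exists_eq_add_of_le hle
        rw [hd] at h3
        have h4 : vb = m * d + vb' := by
          rw [Nat.mul_add] at h3; omega
        rcases d with _ | _ | n
        · omega
        · -- d = 1 : vb = m + vb'
          simp at h4
          rcases h1 with h | h <;> rcases h2 with h' | h' <;> omega
        · -- d ≥ 2 : vb ≥ 2m + vb', contradiction
          have h2m : 2 * m ≤ m * (n + 1 + 1) := by nlinarith
          rcases h1 with h | h <;> omega
      · obtain ⟨d, hd⟩ := Nat.exists_eq_add_of_le hle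
        rw [hd] at h3
        have h4 : vb' = m * d + vb := by
          rw [Nat.mul_add] at h3; omega
        rcases d with _ | _ | n
        · omega
        · simp at h4
          rcases h1 with h | h <;> rcases h2 with h' | h' <;> omega
        · have h2m : 2 * m ≤ m * (n + 1 + 1) := by nlinarith
          rcases h2 with h | h <;> omega
    · rw [Nat.factorization_eq_zero_of_not_prime _ hq,
          Nat.factorization_eq_zero_of_not_prime _ hq]
  have hbb : b = b' := by
    apply Nat.factorization_inj (by simp [hb0.ne'] : b ∈ {x : ℕ | x ≠ 0})
      (by simp [hb0'.ne'] : b' ∈ {x : ℕ | x ≠ 0})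
    exact Finsupp.ext hbeq
  subst hbb
  have haa : a ^ m = a' ^ m := Nat.eq_of_mul_eq_mul_right hb0 heq
  exact ⟨Nat.pow_left_injective (by omega) haa, rfl⟩



lemma mem_aux (m : ℕ) (hm : 1 ≤ m) (B : ℝ) (hB : 0 ≤ B) (a b : ℕ) (hb : 1 ≤ b) :
    (((a ^ m * b : ℕ) : ℝ) ≤ B) ↔ (a : ℝ) ≤ (B / (b : ℝ)) ^ ((1:ℝ)/(m:ℝ)) := by
  have hb0 : (0:ℝ) < (b:ℝ) := by exact_mod_cast hb
  have hm0 : m ≠ 0 := by omega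
  have hcast : (1:ℝ)/(m:ℝ) = ((m:ℕ):ℝ)⁻¹ := one_div _
  rw [hcast]
  constructor
  · intro h
    have h1 : ((a:ℝ)) ^ m ≤ B / (b:ℝ) := by
      rw [le_div_iff₀ hb0]
      calc ((a:ℝ)) ^ m * (b:ℝ) = ((a ^ m * b : ℕ) : ℝ) := by push_cast; ring
      _ ≤ B := h
    calc (a:ℝ) = (((a:ℝ)) ^ m) ^ (((m:ℕ):ℝ))⁻¹ :=
        (Real.pow_rpow_inv_natCast (by positivity) hm0).symm
    _ ≤ (B / (b:ℝ)) ^ (((m:ℕ):ℝ))⁻¹ :=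
        Real.rpow_le_rpow (by positivity) h1 (by positivity)
  · intro h
    have hBb : (0:ℝ) ≤ B / (b:ℝ) := div_nonneg hB hb0.le
    have h1 : ((a:ℝ)) ^ m ≤ B / (b:ℝ) := by
      calc ((a:ℝ)) ^ m ≤ ((B / (b:ℝ)) ^ (((m:ℕ):ℝ))⁻¹) ^ m :=
          pow_le_pow_left₀ (by positivity) h m
      _ = B / (b:ℝ) := Real.rpow_inv_natCast_pow hBb hm0
    rw [le_div_iff₀ hb0] at h1
    calc ((a ^ m * b : ℕ) : ℝ) = ((a:ℝ)) ^ m * (b:ℝ) := by push_cast; ring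
    _ ≤ B := h1

lemma count_eq (m : ℕ) (hm : 2 ≤ m) (B : ℝ) (hB : 1 ≤ B) :
    (Nat.card {x : ℕ // 0 < x ∧ (x : ℝ) ≤ B ∧ IsMFull m x} : ℕ)
      = ∑ b ∈ Finset.Icc 1 ⌊B⌋₊,
          (if InS m 1 b then ⌊(B / (b:ℝ)) ^ ((1:ℝ)/(m:ℝ))⌋₊ else 0) := by
  have hB0 : (0:ℝ) < B := by linarith
  set N := ⌊B⌋₊ with hN
  have hNB : (N:ℝ) ≤ B := Nat.floor_le hB0.le
  set T := (Finset.Icc 1 N).filter (fun x => IsMFull m x) with hT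
  have hcount : Nat.card {x : ℕ // 0 < x ∧ (x : ℝ) ≤ B ∧ IsMFull m x} = T.card := by
    rw [← Nat.card_eq_finsetCard]
    apply Nat.card_congr
    apply Equiv.subtypeEquivRight
    intro x
    rw [hT, Finset.mem_filter, Finset.mem_Icc]
    constructor
    · rintro ⟨h1, h2, h3⟩
      exact ⟨⟨h1, Nat.le_floor h2⟩, h3⟩
    · rintro ⟨⟨h1, h2⟩, h3⟩
      refine ⟨h1, ?_, h3⟩
      calc (x:ℝ) ≤ (N:ℝ) := by exact_mod_cast h2
      _ ≤ B := hNB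
  set U := ((Finset.Icc 1 N) ×ˢ (Finset.Icc 1 N)).filter
      (fun q : ℕ × ℕ => InS m 1 q.2 ∧ ((q.1 ^ m * q.2 : ℕ) : ℝ) ≤ B) with hU
  have hTU : U.card = T.card := by
    apply Finset.card_bij (fun q _ => q.1 ^ m * q.2)
    · rintro ⟨a, b⟩ hq
      obtain ⟨hmem, hS, hle⟩ := Finset.mem_filter.mp hq
      obtain ⟨haI, hbI⟩ := Finset.mem_product.mp hmem
      have ha1 : 1 ≤ a := (Finset.mem_Icc.mp haI).1
      have hb1 : 1 ≤ b := (Finset.mem_Icc.mp hbI).1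
      rw [hT, Finset.mem_filter, Finset.mem_Icc]
      exact ⟨⟨Nat.one_le_iff_ne_zero.mpr (by positivity), Nat.le_floor hle⟩, mfull_of m a b (by omega) (by omega) hS⟩
    · rintro ⟨a₁, b₁⟩ h₁ ⟨a₂, b₂⟩ h₂ heq
      obtain ⟨hmem₁, hS₁, -⟩ := Finset.mem_filter.mp h₁
      obtain ⟨hmem₂, hS₂, -⟩ := Finset.mem_filter.mp h₂
      obtain ⟨haI₁, -⟩ := Finset.mem_product.mp hmem₁
      obtain ⟨haI₂, -⟩ := Finset.mem_product.mp hmem₂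
      have ha₁ : 0 < a₁ := (Finset.mem_Icc.mp haI₁).1
      have ha₂ : 0 < a₂ := (Finset.mem_Icc.mp haI₂).1
      obtain ⟨he1, he2⟩ := rep_unique m a₁ b₁ a₂ b₂ hm ha₁ ha₂ hS₁ hS₂ heq
      exact Prod.ext he1 he2
    · intro x hx
      obtain ⟨hxI, hxF⟩ := Finset.mem_filter.mp hx
      obtain ⟨hx1, hxN⟩ := Finset.mem_Icc.mp hxI
      obtain ⟨a, b, ha0, hbS, hab⟩ := exists_rep m x hm (by omega) hxF
      have hb0 : 0 < b := InS_pos m 1 b hbS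
      have hax : a ≤ x := by
        calc a ≤ a ^ m := Nat.le_self_pow (by omega) a
        _ ≤ a ^ m * b := Nat.le_mul_of_pos_right _ hb0
        _ = x := hab.symm
      have hbx : b ≤ x := by
        calc b ≤ a ^ m * b := Nat.le_mul_of_pos_left _ (by positivity)
        _ = x := hab.symm
      refine ⟨(a, b), ?_, hab.symm⟩
      rw [hU, Finset.mem_filter, Finset.mem_product, Finset.mem_Icc, Finset.mem_Icc]
      refine ⟨⟨⟨ha0, hax.trans hxN⟩, ⟨hb0, hbx.trans hxN⟩⟩, hbS, ?_⟩
      rw [← hab]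
      calc (x:ℝ) ≤ (N:ℝ) := by exact_mod_cast hxN
      _ ≤ B := hNB
  have hfib : U.card = ∑ b ∈ Finset.Icc 1 N, (U.filter (fun q => q.2 = b)).card :=
    Finset.card_eq_sum_card_fiberwise (fun q hq =>
      (Finset.mem_product.mp (Finset.mem_filter.mp hq).1).2)
  have hper : ∀ b ∈ Finset.Icc 1 N, (U.filter (fun q => q.2 = b)).card
      = if InS m 1 b then ⌊(B / (b:ℝ)) ^ ((1:ℝ)/(m:ℝ))⌋₊ else 0 := by
    intro b hbI
    obtain ⟨hb1, hbN⟩ := Finset.mem_Icc.mp hbI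
    by_cases hbS : InS m 1 b
    · rw [if_pos hbS]
      set M := ⌊(B / (b:ℝ)) ^ ((1:ℝ)/(m:ℝ))⌋₊ with hM
      have hb0r : (0:ℝ) < (b:ℝ) := by exact_mod_cast hb1
      have hrnn : (0:ℝ) ≤ (B / (b:ℝ)) ^ ((1:ℝ)/(m:ℝ)) := Real.rpow_nonneg (by positivity) _
      have hcard : (U.filter (fun q => q.2 = b)).card = (Finset.Icc 1 M).card := by
        apply Finset.card_bij (fun q _ => q.1)
        · rintro ⟨a, b'⟩ hq
          obtain ⟨hqU, hqb⟩ := Finset.mem_filter.mp hq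
          obtain ⟨hmem, -, hle⟩ := Finset.mem_filter.mp hqU
          obtain ⟨haI, -⟩ := Finset.mem_product.mp hmem
          dsimp only at hqb
          subst hqb
          rw [Finset.mem_Icc]
          refine ⟨(Finset.mem_Icc.mp haI).1, Nat.le_floor ?_⟩
          exact (mem_aux m (by omega) B hB0.le a _ hb1).mp hle
        · rintro ⟨a₁, b₁⟩ h₁ ⟨a₂, b₂⟩ h₂ heq
          obtain ⟨-, hqb₁⟩ := Finset.mem_filter.mp h₁
          obtain ⟨-, hqb₂⟩ := Finset.mem_filter.mp h₂
          dsimp only at hqb₁ hqb₂ heq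
          exact Prod.ext heq (hqb₁.trans hqb₂.symm)
        · intro a haM
          obtain ⟨ha1, haM'⟩ := Finset.mem_Icc.mp haM
          have har : (a:ℝ) ≤ (B / (b:ℝ)) ^ ((1:ℝ)/(m:ℝ)) :=
            (Nat.le_floor_iff hrnn).mp haM'
          have hab : ((a ^ m * b : ℕ) : ℝ) ≤ B := (mem_aux m (by omega) B hB0.le a b hb1).mpr har
          have haN : a ≤ N := by
            apply Nat.le_floor
            calc (a:ℝ) ≤ ((a ^ m * b : ℕ) : ℝ) := by
                  have : a ≤ a ^ m * b := by
                    calc a ≤ a ^ m := Nat.le_self_pow (by omega) a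
                    _ ≤ a ^ m * b := Nat.le_mul_of_pos_right _ (by omega)
                  exact_mod_cast this
            _ ≤ B := hab
          refine ⟨(a, b), ?_, rfl⟩
          rw [Finset.mem_filter, hU, Finset.mem_filter, Finset.mem_product, Finset.mem_Icc,
              Finset.mem_Icc]
          exact ⟨⟨⟨⟨ha1, haN⟩, ⟨hb1, hbN⟩⟩, hbS, hab⟩, rfl⟩
      rw [hcard, Nat.card_Icc, Nat.add_sub_cancel]
    · rw [if_neg hbS]
      rw [Finset.card_eq_zero]
      apply Finset.filter_eq_empty_iff.mpr
      rintro ⟨a, b'⟩ hq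
      obtain ⟨-, hS, -⟩ := Finset.mem_filter.mp hq
      intro hes
      exact hbS (hes ▸ hS)
  rw [hcount, ← hTU, hfib]
  exact Finset.sum_congr rfl hper



/-- for `m ≥ 2`, the number of `m`-full positive integers up to `B`
is `c·B^{1/m} + O(B^{1/(m+1)})` for some constant `c > 0`. -/
theorem stmt_6 (m : ℕ) (hm : 2 ≤ m) :
    ∃ c : ℝ, 0 < c ∧ ∃ C : ℝ, ∀ B : ℝ, 1 ≤ B →
      |(Nat.card {x : ℕ // 0 < x ∧ (x : ℝ) ≤ B ∧ IsMFull m x} : ℝ) -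
        c * B ^ ((1 : ℝ) / m)| ≤ C * B ^ ((1 : ℝ) / (m + 1)) := by
  have hm0 : (0:ℝ) < (m:ℝ) := by exact_mod_cast (show 0 < m by omega)
  set f1 : ℕ → ℝ := fun b => if InS m 1 b then (b : ℝ) ^ (-((1:ℝ)/(m:ℝ))) else 0 with hf1
  have hf1sum : Summable f1 := summable_f1 m hm
  have hf1nn : ∀ b, 0 ≤ f1 b := by
    intro b; rw [hf1]; dsimp only; split
    · positivity
    · exact le_rfl
  set c : ℝ := ∑' b, f1 b with hc
  have hc1 : 1 ≤ c := by
    have h1 : f1 1 = 1 := by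
      rw [hf1]; dsimp only
      rw [if_pos (InS_one m 1)]
      simp [Real.one_rpow]
    calc (1:ℝ) = f1 1 := h1.symm
    _ ≤ c := Summable.le_tsum hf1sum 1 (fun j _ => hf1nn j)
  obtain ⟨K1, hK1nn, hK1⟩ := card_S_le m hm
  obtain ⟨K2, hK2nn, hK2⟩ := tail_le m hm
  refine ⟨c, by linarith, K1 + K2, fun B hB => ?_⟩
  have hB0 : (0:ℝ) < B := by linarith
  set N := ⌊B⌋₊ with hN
  -- the count as a real sum
  have hcount : (Nat.card {x : ℕ // 0 < x ∧ (x : ℝ) ≤ B ∧ IsMFull m x} : ℝ)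
      = ∑ b ∈ Finset.Icc 1 N, (if InS m 1 b then ((⌊(B / (b:ℝ)) ^ ((1:ℝ)/(m:ℝ))⌋₊ : ℕ) : ℝ) else 0) := by
    rw [count_eq m hm B hB]
    push_cast
    all_goals
      apply Finset.sum_congr rfl
      intro b _
      split <;> simp
  -- step A : floor error
  have hA : |∑ b ∈ Finset.Icc 1 N, (if InS m 1 b then ((⌊(B / (b:ℝ)) ^ ((1:ℝ)/(m:ℝ))⌋₊ : ℕ) : ℝ) else 0)
      - ∑ b ∈ Finset.Icc 1 N, (if InS m 1 b then (B / (b:ℝ)) ^ ((1:ℝ)/(m:ℝ)) else 0)|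
      ≤ K1 * B ^ ((1:ℝ)/((m:ℝ)+1)) := by
    rw [← Finset.sum_sub_distrib]
    calc |∑ b ∈ Finset.Icc 1 N, ((if InS m 1 b then ((⌊(B / (b:ℝ)) ^ ((1:ℝ)/(m:ℝ))⌋₊ : ℕ) : ℝ) else 0)
        - (if InS m 1 b then (B / (b:ℝ)) ^ ((1:ℝ)/(m:ℝ)) else 0))|
        ≤ ∑ b ∈ Finset.Icc 1 N, |(if InS m 1 b then ((⌊(B / (b:ℝ)) ^ ((1:ℝ)/(m:ℝ))⌋₊ : ℕ) : ℝ) else 0)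
        - (if InS m 1 b then (B / (b:ℝ)) ^ ((1:ℝ)/(m:ℝ)) else 0)| := Finset.abs_sum_le_sum_abs _ _
    _ ≤ ∑ b ∈ Finset.Icc 1 N, (if InS m 1 b then 1 else 0) := by
        apply Finset.sum_le_sum
        intro b _
        by_cases hbS : InS m 1 b
        · rw [if_pos hbS, if_pos hbS, if_pos hbS]
          set y := (B / (b:ℝ)) ^ ((1:ℝ)/(m:ℝ)) with hy
          have hy0 : 0 ≤ y := Real.rpow_nonneg (by positivity) _
          have h1 : ((⌊y⌋₊ : ℕ) : ℝ) ≤ y := Nat.floor_le hy0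
          have h2 : y < ((⌊y⌋₊ : ℕ) : ℝ) + 1 := Nat.lt_floor_add_one y
          rw [abs_le]
          constructor <;> linarith
        · rw [if_neg hbS, if_neg hbS, if_neg hbS]
          simp
    _ = (((Finset.Icc 1 N).filter (fun b => InS m 1 b)).card : ℝ) := by
        rw [← Finset.sum_filter]
        simp
    _ ≤ K1 * B ^ ((1:ℝ)/((m:ℝ)+1)) := hK1 B hB
  -- step B : main sum vs B^{1/m} * partial
  have hEB : ∀ b ∈ Finset.Icc 1 N,
      (if InS m 1 b then (B / (b:ℝ)) ^ ((1:ℝ)/(m:ℝ)) else 0) = B ^ ((1:ℝ)/(m:ℝ)) * f1 b := by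
    intro b hbI
    have hb1 : 1 ≤ b := (Finset.mem_Icc.mp hbI).1
    have hb0 : (0:ℝ) < (b:ℝ) := by exact_mod_cast hb1
    rw [hf1]; dsimp only
    split
    · rw [Real.div_rpow hB0.le hb0.le, Real.rpow_neg hb0.le, div_eq_mul_inv]
    · rw [mul_zero]
  -- step C : tail
  set tail : ℕ → ℝ := fun b => if N < b ∧ InS m 1 b then (b:ℝ) ^ (-((1:ℝ)/(m:ℝ))) else 0 with htail
  have htailnn : ∀ b, 0 ≤ tail b := by
    intro b; rw [htail]; dsimp only; split
    · positivity
    · exact le_rfl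
  have htailsum : Summable tail := by
    apply Summable.of_nonneg_of_le htailnn _ hf1sum
    intro b
    rw [htail, hf1]; dsimp only
    split
    · next h => rw [if_pos h.2]
    · split
      · positivity
      · exact le_rfl
  set head : ℕ → ℝ := fun b => if b ∈ Finset.Icc 1 N then f1 b else 0 with hhead
  have hheadsum : Summable head := by
    apply summable_of_ne_finset_zero (s := Finset.Icc 1 N)
    intro b hb
    rw [hhead]; dsimp only; rw [if_neg hb]
  have hsplit : ∀ b, f1 b = head b + tail b := by
    intro b
    rw [hhead, htail, hf1]; dsimp only
    by_cases h1 : b ∈ Finset.Icc 1 N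
    · rw [if_pos h1]
      obtain ⟨hb1, hbN⟩ := Finset.mem_Icc.mp h1
      have : ¬ (N < b ∧ InS m 1 b) := by
        rintro ⟨h, -⟩; omega
      rw [if_neg this, add_zero]
    · rw [if_neg h1]
      rw [Finset.mem_Icc] at h1
      push_neg at h1
      by_cases h2 : InS m 1 b
      · have hb1 : 1 ≤ b := InS_pos m 1 b h2
        have hNb : N < b := h1 hb1
        rw [if_pos h2, if_pos ⟨hNb, h2⟩, zero_add]
      · have : ¬ (N < b ∧ InS m 1 b) := fun h => h2 h.2
        rw [if_neg h2, if_neg this, add_zero]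
  have hcsplit : c = (∑ b ∈ Finset.Icc 1 N, f1 b) + ∑' b, tail b := by
    rw [hc]
    calc ∑' b, f1 b = ∑' b, (head b + tail b) := by
          apply tsum_congr hsplit
    _ = (∑' b, head b) + ∑' b, tail b := Summable.tsum_add hheadsum htailsum
    _ = (∑ b ∈ Finset.Icc 1 N, f1 b) + ∑' b, tail b := by
        congr 1
        rw [tsum_eq_sum (s := Finset.Icc 1 N) (fun b hb => by rw [hhead]; dsimp only; rw [if_neg hb])]
        apply Finset.sum_congr rfl
        intro b hb
        rw [hhead]; dsimp only; rw [if_pos hb]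
  have htbound : 0 ≤ ∑' b, tail b ∧ (∑' b, tail b) ≤ K2 * B ^ ((1:ℝ)/((m:ℝ)+1) - (1:ℝ)/(m:ℝ)) :=
    ⟨tsum_nonneg htailnn, hK2 B hB⟩
  -- assemble
  have hmain : ∑ b ∈ Finset.Icc 1 N, (if InS m 1 b then (B / (b:ℝ)) ^ ((1:ℝ)/(m:ℝ)) else 0)
      = B ^ ((1:ℝ)/(m:ℝ)) * ∑ b ∈ Finset.Icc 1 N, f1 b := by
    rw [Finset.mul_sum]
    exact Finset.sum_congr rfl hEB
  have hexp : B ^ ((1:ℝ)/(m:ℝ)) * B ^ ((1:ℝ)/((m:ℝ)+1) - (1:ℝ)/(m:ℝ)) = B ^ ((1:ℝ)/((m:ℝ)+1)) := by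
    rw [← Real.rpow_add hB0]
    ring_nf
  have hcast1 : B ^ ((1:ℝ)/(m:ℝ)) = B ^ ((1 : ℝ) / (m:ℝ)) := rfl
  rw [hcount]
  have hfinal : (∑ b ∈ Finset.Icc 1 N, (if InS m 1 b then ((⌊(B / (b:ℝ)) ^ ((1:ℝ)/(m:ℝ))⌋₊ : ℕ) : ℝ) else 0))
      - c * B ^ ((1:ℝ)/(m:ℝ))
      = ((∑ b ∈ Finset.Icc 1 N, (if InS m 1 b then ((⌊(B / (b:ℝ)) ^ ((1:ℝ)/(m:ℝ))⌋₊ : ℕ) : ℝ) else 0))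
        - ∑ b ∈ Finset.Icc 1 N, (if InS m 1 b then (B / (b:ℝ)) ^ ((1:ℝ)/(m:ℝ)) else 0))
        - B ^ ((1:ℝ)/(m:ℝ)) * ∑' b, tail b := by
    rw [hmain, hcsplit]
    ring
  rw [hfinal]
  have hb1 : |(∑ b ∈ Finset.Icc 1 N, (if InS m 1 b then ((⌊(B / (b:ℝ)) ^ ((1:ℝ)/(m:ℝ))⌋₊ : ℕ) : ℝ) else 0))
        - ∑ b ∈ Finset.Icc 1 N, (if InS m 1 b then (B / (b:ℝ)) ^ ((1:ℝ)/(m:ℝ)) else 0)|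
      ≤ K1 * B ^ ((1:ℝ)/((m:ℝ)+1)) := hA
  have hb2 : |B ^ ((1:ℝ)/(m:ℝ)) * ∑' b, tail b| ≤ K2 * B ^ ((1:ℝ)/((m:ℝ)+1)) := by
    rw [abs_of_nonneg (mul_nonneg (by positivity) htbound.1)]
    calc B ^ ((1:ℝ)/(m:ℝ)) * ∑' b, tail b
        ≤ B ^ ((1:ℝ)/(m:ℝ)) * (K2 * B ^ ((1:ℝ)/((m:ℝ)+1) - (1:ℝ)/(m:ℝ))) :=
          mul_le_mul_of_nonneg_left htbound.2 (by positivity)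
    _ = K2 * (B ^ ((1:ℝ)/(m:ℝ)) * B ^ ((1:ℝ)/((m:ℝ)+1) - (1:ℝ)/(m:ℝ))) := by ring
    _ = K2 * B ^ ((1:ℝ)/((m:ℝ)+1)) := by rw [hexp]
  calc |_ - _| ≤ |(∑ b ∈ Finset.Icc 1 N, (if InS m 1 b then ((⌊(B / (b:ℝ)) ^ ((1:ℝ)/(m:ℝ))⌋₊ : ℕ) : ℝ) else 0))
        - ∑ b ∈ Finset.Icc 1 N, (if InS m 1 b then (B / (b:ℝ)) ^ ((1:ℝ)/(m:ℝ)) else 0)|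
      + |B ^ ((1:ℝ)/(m:ℝ)) * ∑' b, tail b| := abs_sub _ _
  _ ≤ K1 * B ^ ((1:ℝ)/((m:ℝ)+1)) + K2 * B ^ ((1:ℝ)/((m:ℝ)+1)) := add_le_add hb1 hb2
  _ = (K1 + K2) * B ^ ((1 : ℝ) / (m + 1)) := by
      push_cast
      ring
end

section
/- Let m ≥ 2 be an integer and let d be a squarefree positive integer. For B ≥ 1, the number of m-full positive integers x ≤ B that are divisible by d is O(d^{-m/(m+1)+ε} B^{1/m}) for every ε > 0. -/
namespace Stmt7

def be (m e : ℕ) : ℕ := if e % m = 0 then 0 else m + e % m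

def bpart (m x : ℕ) : ℕ := ∏ p ∈ x.primeFactors, p ^ be m (x.factorization p)
def apart (m x : ℕ) : ℕ :=
  ∏ p ∈ x.primeFactors, p ^ ((x.factorization p - be m (x.factorization p)) / m)

lemma fact_prod_pow {s : Finset ℕ} (hs : ∀ p ∈ s, p.Prime) (e : ℕ → ℕ) (q : ℕ) :
    (∏ p ∈ s, p ^ e p).factorization q = if q ∈ s then e q else 0 := by
  rw [Nat.factorization_prod (fun p hp => pow_ne_zero _ (hs p hp).pos.ne')]
  rw [Finset.sum_apply']
  have : ∀ p ∈ s, ((p ^ e p).factorization) q = if p = q then e p else 0 := by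
    intro p hp
    rw [(hs p hp).factorization_pow, Finsupp.single_apply]
  rw [Finset.sum_congr rfl this, Finset.sum_ite_eq' s q e]

lemma bpart_pos (m x : ℕ) : 0 < bpart m x :=
  Finset.prod_pos fun _ hp => pow_pos (Nat.prime_of_mem_primeFactors hp).pos _

lemma apart_pos (m x : ℕ) : 0 < apart m x :=
  Finset.prod_pos fun _ hp => pow_pos (Nat.prime_of_mem_primeFactors hp).pos _

lemma bpart_fact (m x q : ℕ) :
    (bpart m x).factorization q =
      if q ∈ x.primeFactors then be m (x.factorization q) else 0 :=
  fact_prod_pow (fun _ hp => Nat.prime_of_mem_primeFactors hp) _ q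

lemma apart_fact (m x q : ℕ) :
    (apart m x).factorization q =
      if q ∈ x.primeFactors then (x.factorization q - be m (x.factorization q)) / m else 0 :=
  fact_prod_pow (fun _ hp => Nat.prime_of_mem_primeFactors hp) _ q

lemma mfull_fact {m x : ℕ} (hx : x ≠ 0) (hf : IsMFull m x) {q : ℕ} (hq : q.Prime)
    (hqx : q ∣ x) : m ≤ x.factorization q :=
  (Nat.Prime.pow_dvd_iff_le_factorization hq hx).mp (hf q hq hqx)

lemma key_exp {m e : ℕ} (hm : 2 ≤ m) (he : m ≤ e) :
    m * ((e - be m e) / m) + be m e = e := by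
  have hmod := Nat.div_add_mod e m
  have h1 : 1 ≤ e / m := (Nat.one_le_div_iff (by omega)).mpr he
  have h2 : m ≤ m * (e / m) := Nat.le_mul_of_pos_right m (by omega)
  unfold be
  by_cases h : e % m = 0
  · simp only [h, if_true, Nat.sub_zero, Nat.add_zero]
    rw [Nat.mul_div_cancel' (Nat.dvd_of_mod_eq_zero h)]
  · simp only [h, if_false]
    have hsub : e - (m + e % m) = m * (e / m - 1) := by
      rw [Nat.mul_sub, Nat.mul_one]; omega
    rw [hsub, Nat.mul_div_cancel_left _ (by omega : 0 < m), Nat.mul_sub, Nat.mul_one]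
    omega

/-- The decomposition identity. -/
lemma decomp {m x : ℕ} (hm : 2 ≤ m) (hx : x ≠ 0) (hf : IsMFull m x) :
    (apart m x) ^ m * bpart m x = x := by
  have ha := (apart_pos m x).ne'
  have hb := (bpart_pos m x).ne'
  refine Nat.eq_of_factorization_eq (by positivity) hx fun q => ?_
  rw [Nat.factorization_mul (pow_ne_zero _ ha) hb, Nat.factorization_pow]
  simp only [Finsupp.coe_add, Finsupp.coe_smul, Pi.add_apply, Pi.smul_apply, smul_eq_mul]
  rw [bpart_fact, apart_fact]
  by_cases hq : q ∈ x.primeFactors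
  · simp only [hq, if_true]
    exact key_exp hm (mfull_fact hx hf (Nat.prime_of_mem_primeFactors hq)
      (Nat.dvd_of_mem_primeFactors hq))
  · have h0 : x.factorization q = 0 := by
      rwa [← Nat.support_factorization, Finsupp.notMem_support_iff] at hq
    simp [hq, h0]


def Shape (m b : ℕ) : Prop :=
  0 < b ∧ ∀ q : ℕ, q.Prime → q ∣ b →
    m + 1 ≤ b.factorization q ∧ b.factorization q ≤ 2 * m - 1

def rad (b : ℕ) : ℕ := ∏ p ∈ b.primeFactors, p

lemma rad_pos (b : ℕ) : 0 < rad b :=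
  Finset.prod_pos fun _ hp => (Nat.prime_of_mem_primeFactors hp).pos

lemma rad_dvd (b : ℕ) : rad b ∣ b := Nat.prod_primeFactors_dvd b

lemma rad_fact (b q : ℕ) :
    (rad b).factorization q = if q ∈ b.primeFactors then 1 else 0 := by
  have h : rad b = ∏ p ∈ b.primeFactors, p ^ (1 : ℕ) := by simp [rad]
  rw [h, fact_prod_pow (fun _ hp => Nat.prime_of_mem_primeFactors hp)]

lemma rad_squarefree (b : ℕ) : Squarefree (rad b) := by
  refine Nat.squarefree_of_factorization_le_one (rad_pos b).ne' fun p => ?_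
  rw [rad_fact]; split <;> omega

/-- a squarefree number all of whose primes divide `n` divides `n`. -/
lemma sq_dvd {s n : ℕ} (hs : Squarefree s) (h : ∀ q : ℕ, q.Prime → q ∣ s → q ∣ n) :
    s ∣ n := by
  have hprod : ∏ p ∈ s.primeFactors, p = s := Nat.prod_primeFactors_of_squarefree hs
  rw [← hprod]
  exact Finset.prod_primes_dvd n
    (fun p hp => (Nat.prime_of_mem_primeFactors hp).prime)
    (fun p hp => h p (Nat.prime_of_mem_primeFactors hp) (Nat.dvd_of_mem_primeFactors hp))

/-- bpart is a Shape number. -/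
lemma bpart_shape {m x : ℕ} (hm : 2 ≤ m) (hx : x ≠ 0) (hf : IsMFull m x) :
    Shape m (bpart m x) := by
  refine ⟨bpart_pos m x, fun q hq hqb => ?_⟩
  rw [bpart_fact]
  have hqx : q ∈ x.primeFactors := by
    by_contra hc
    have h0 : (bpart m x).factorization q = 0 := by rw [bpart_fact]; simp [hc]
    have : 1 ≤ (bpart m x).factorization q :=
      (Nat.Prime.dvd_iff_one_le_factorization hq (bpart_pos m x).ne').mp hqb
    omega
  simp only [hqx, if_true]
  have hme : m ≤ x.factorization q :=
    mfull_fact hx hf hq (Nat.dvd_of_mem_primeFactors hqx)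
  have hbe : be m (x.factorization q) ≠ 0 := by
    intro h0
    have hd : q ∣ bpart m x := hqb
    have : (bpart m x).factorization q = 0 := by rw [bpart_fact]; simp [hqx, h0]
    have : 1 ≤ (bpart m x).factorization q :=
      (Nat.Prime.dvd_iff_one_le_factorization hq (bpart_pos m x).ne').mp hqb
    omega
  unfold be at *
  have hmod : x.factorization q % m < m := Nat.mod_lt _ (by omega)
  by_cases h : x.factorization q % m = 0
  · simp [h] at hbe
  · simp only [h, if_false]
    omega

/-- every prime of `x` not dividing `bpart` divides `apart`. -/
lemma dvd_apart {m x q : ℕ} (hm : 2 ≤ m) (hx : x ≠ 0) (hf : IsMFull m x) (hq : q.Prime)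
    (hqx : q ∣ x) (hqb : ¬ q ∣ bpart m x) : q ∣ apart m x := by
  have hmem : q ∈ x.primeFactors := Nat.mem_primeFactors.mpr ⟨hq, hqx, hx⟩
  have hb0 : be m (x.factorization q) = 0 := by
    by_contra hne
    apply hqb
    rw [hq.dvd_iff_one_le_factorization (bpart_pos m x).ne', bpart_fact]
    simp only [hmem, if_true]; omega
  rw [hq.dvd_iff_one_le_factorization (apart_pos m x).ne', apart_fact]
  simp only [hmem, if_true, hb0, Nat.sub_zero]
  have hme : m ≤ x.factorization q := mfull_fact hx hf hq hqx
  exact (Nat.one_le_div_iff (by omega)).mpr hme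

lemma rad_pow_dvd {m b : ℕ} (hb : Shape m b) : rad b ^ (m + 1) ∣ b := by
  rcases hb with ⟨hbpos, hsh⟩
  rw [← Nat.factorization_le_iff_dvd (pow_ne_zero _ (rad_pos b).ne') hbpos.ne']
  intro q
  rw [Nat.factorization_pow]
  simp only [Finsupp.coe_smul, Pi.smul_apply, smul_eq_mul]
  rw [rad_fact]
  by_cases hq : q ∈ b.primeFactors
  · simp only [hq, if_true, mul_one]
    exact (hsh q (Nat.prime_of_mem_primeFactors hq) (Nat.dvd_of_mem_primeFactors hq)).1
  · simp [hq]

lemma cofactor_dvd {m b : ℕ} (hm : 2 ≤ m) (hb : Shape m b) :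
    b / rad b ^ (m + 1) ∣ rad b ^ (m - 2) := by
  have hvd := rad_pow_dvd hb
  have hb0 : b ≠ 0 := hb.1.ne'
  have hv0 : rad b ^ (m + 1) ≠ 0 := pow_ne_zero _ (rad_pos b).ne'
  have hw0 : b / rad b ^ (m + 1) ≠ 0 := by
    intro h
    exact hb0 (by simpa [h] using (Nat.div_mul_cancel hvd).symm)
  rw [← Nat.factorization_le_iff_dvd hw0 (pow_ne_zero _ (rad_pos b).ne')]
  intro q
  rw [Nat.factorization_div hvd, Nat.factorization_pow, Nat.factorization_pow]
  simp only [Finsupp.coe_tsub, Pi.sub_apply, Finsupp.coe_smul, Pi.smul_apply, smul_eq_mul]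
  rw [rad_fact]
  by_cases hq : q ∈ b.primeFactors
  · simp only [hq, if_true, mul_one]
    have := (hb.2 q (Nat.prime_of_mem_primeFactors hq) (Nat.dvd_of_mem_primeFactors hq)).2
    omega
  · have h0 : b.factorization q = 0 := by
      rwa [← Nat.support_factorization, Finsupp.notMem_support_iff] at hq
    simp [hq, h0]


/-- divisor count of `v^k` for `v` squarefree. -/
lemma card_divisors_pow_le {v k : ℕ} (hv : Squarefree v) :
    (v ^ k).divisors.card ≤ (k + 1) ^ v.primeFactors.card := by
  have hv0 : v ≠ 0 := hv.ne_zero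
  have hvk : v ^ k ≠ 0 := pow_ne_zero _ hv0
  rw [Nat.card_divisors hvk]
  have hsub : (v ^ k).primeFactors ⊆ v.primeFactors := by
    rcases Nat.eq_zero_or_pos k with h | h
    · simp [h]
    · rw [Nat.primeFactors_pow v h.ne']
  calc ∏ p ∈ (v ^ k).primeFactors, ((v ^ k).factorization p + 1)
      ≤ ∏ p ∈ (v ^ k).primeFactors, (k + 1) := by
        refine Finset.prod_le_prod' fun p hp => ?_
        rw [Nat.factorization_pow]
        simp only [Finsupp.coe_smul, Pi.smul_apply, smul_eq_mul]
        have := hv.natFactorization_le_one p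
        have : k * v.factorization p ≤ k := by nlinarith
        omega
    _ = (k + 1) ^ (v ^ k).primeFactors.card := by rw [Finset.prod_const]
    _ ≤ (k + 1) ^ v.primeFactors.card :=
        Nat.pow_le_pow_right (by omega) (Finset.card_le_card hsub)

/-- `K^{ω(n)} ≤ C n^δ`. -/
lemma omega_bound (K : ℕ) (hK : 1 ≤ K) {δ : ℝ} (hδ : 0 < δ) :
    ∃ C : ℝ, 1 ≤ C ∧ ∀ n : ℕ, n ≠ 0 →
      ((K : ℝ) ^ n.primeFactors.card) ≤ C * (n : ℝ) ^ δ := by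
  classical
  set P : ℕ := ⌈(K : ℝ) ^ ((1:ℝ)/δ)⌉₊ with hP
  refine ⟨(K : ℝ) ^ (P + 1), one_le_pow₀ (by exact_mod_cast hK), fun n hn => ?_⟩
  set S : Finset ℕ := n.primeFactors.filter (fun p => P < p) with hS
  set Sc : Finset ℕ := n.primeFactors.filter (fun p => ¬ P < p) with hSc
  have hcard : Sc.card + S.card = n.primeFactors.card := by
    rw [hS, hSc, add_comm]
    exact Finset.card_filter_add_card_filter_not _
  have hScle : Sc.card ≤ P + 1 := by
    have : Sc ⊆ Finset.range (P + 1) := by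
      intro p hp
      rw [hSc, Finset.mem_filter] at hp
      simp [Finset.mem_range]; omega
    simpa using Finset.card_le_card this
  have hKpos : (0:ℝ) < K := by exact_mod_cast hK
  -- big primes
  have hbig : ((K:ℝ)) ^ S.card ≤ (n : ℝ) ^ δ := by
    have hprod_dvd : ∏ p ∈ S, p ∣ n := by
      refine Finset.prod_primes_dvd n (fun p hp => ?_) (fun p hp => ?_)
      · exact (Nat.prime_of_mem_primeFactors (Finset.mem_filter.mp hp).1).prime
      · exact Nat.dvd_of_mem_primeFactors (Finset.mem_filter.mp hp).1
    have hprod_le : ((∏ p ∈ S, p : ℕ) : ℝ) ≤ (n : ℝ) := by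
      exact_mod_cast Nat.le_of_dvd (Nat.pos_of_ne_zero hn) hprod_dvd
    have hterm : ∀ p ∈ S, (K : ℝ) ≤ (p : ℝ) ^ δ := by
      intro p hp
      have hpP : P < p := (Finset.mem_filter.mp hp).2
      have h1 : (K:ℝ) ^ ((1:ℝ)/δ) ≤ (p : ℝ) := by
        calc (K:ℝ) ^ ((1:ℝ)/δ) ≤ (P : ℕ) := Nat.le_ceil _
          _ ≤ (p : ℝ) := by exact_mod_cast hpP.le
      calc (K : ℝ) = ((K:ℝ) ^ ((1:ℝ)/δ)) ^ δ := by
            rw [← Real.rpow_mul hKpos.le, one_div_mul_cancel hδ.ne', Real.rpow_one]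
        _ ≤ (p : ℝ) ^ δ := by
            refine Real.rpow_le_rpow (Real.rpow_nonneg hKpos.le _) h1 hδ.le
    calc ((K:ℝ)) ^ S.card = ∏ _p ∈ S, (K : ℝ) := by rw [Finset.prod_const]
      _ ≤ ∏ p ∈ S, (p : ℝ) ^ δ := Finset.prod_le_prod (fun _ _ => hKpos.le) hterm
      _ = ((∏ p ∈ S, p : ℕ) : ℝ) ^ δ := by
          push_cast
          rw [← Real.finset_prod_rpow S _ (fun p _ => by positivity)]
      _ ≤ (n : ℝ) ^ δ := Real.rpow_le_rpow (by positivity) hprod_le hδ.le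
  calc ((K : ℝ)) ^ n.primeFactors.card = (K:ℝ) ^ Sc.card * (K:ℝ) ^ S.card := by
        rw [← pow_add, hcard]
    _ ≤ (K:ℝ) ^ (P + 1) * (n : ℝ) ^ δ := by
        refine mul_le_mul (pow_le_pow_right₀ (by exact_mod_cast hK) hScle) hbig
          (by positivity) (by positivity)


lemma rpow_nat_div (x : ℕ) {m : ℕ} (k : ℕ) (hm : m ≠ 0) :
    ((x : ℝ) ^ k) ^ ((1:ℝ)/m) = (x : ℝ) ^ ((k : ℝ)/m) := by
  rw [← Real.rpow_natCast (x:ℝ) k, ← Real.rpow_mul (Nat.cast_nonneg x), mul_one_div]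


lemma term_bound {m v b : ℕ} (hm : 2 ≤ m) (hv : 0 < v) (hb : 0 < b)
    (hdvd : v ^ (m + 1) ∣ b) :
    (b : ℝ) ^ (-(1:ℝ)/m) ≤ (v : ℝ) ^ (-((m:ℝ)+1)/m) := by
  have hm' : (m : ℕ) ≠ 0 := by omega
  have h1 : ((v:ℝ) ^ (m+1)) ≤ (b:ℝ) := by
    exact_mod_cast Nat.le_of_dvd hb hdvd
  have h2 : ((v:ℝ) ^ (m+1)) ^ ((1:ℝ)/m) ≤ (b:ℝ) ^ ((1:ℝ)/m) :=
    Real.rpow_le_rpow (by positivity) h1 (by positivity)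
  rw [rpow_nat_div v (m+1) hm'] at h2
  push_cast at h2
  rw [neg_div, Real.rpow_neg (by positivity), neg_div, Real.rpow_neg (by positivity)]
  exact inv_anti₀ (by positivity) h2

lemma count_multiples {M c : ℕ} (hc : 0 < c) (s : Finset ℕ)
    (hs : ∀ a ∈ s, 1 ≤ a ∧ c ∣ a ∧ a ≤ M) : s.card ≤ M / c := by
  have h := Finset.card_le_card_of_injOn (fun a => a / c) (t := Finset.Icc 1 (M / c))
    (fun a ha => by
      obtain ⟨h1, h2, h3⟩ := hs a ha
      simp only [Finset.mem_coe, Finset.mem_Icc]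
      exact ⟨(Nat.one_le_div_iff hc).mpr (Nat.le_of_dvd (by omega) h2),
        Nat.div_le_div_right h3⟩)
    (fun a ha b hb hab => by
      obtain ⟨_, h2, _⟩ := hs a ha
      obtain ⟨_, h2', _⟩ := hs b hb
      have : c * (a / c) = c * (b / c) := by simp only at hab; rw [hab]
      rwa [Nat.mul_div_cancel' h2, Nat.mul_div_cancel' h2'] at this)
  simpa [Nat.card_Icc] using h

end Stmt7

open Stmt7 Finset

/-- for `m ≥ 2`, `d` squarefree and any `ε > 0`, the number of
`m`-full positive integers `x ≤ B` divisible by `d` is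
`O_{m,ε}(d^{-m/(m+1)+ε} B^{1/m})`, uniformly in `d` and `B ≥ 1`. -/
theorem stmt_7 (m : ℕ) (hm : 2 ≤ m) (ε : ℝ) (hε : 0 < ε) :
    ∃ C : ℝ, 0 < C ∧ ∀ (d : ℕ), Squarefree d → ∀ B : ℝ, 1 ≤ B →
      (Nat.card {x : ℕ // 0 < x ∧ (x : ℝ) ≤ B ∧ IsMFull m x ∧ d ∣ x} : ℝ) ≤
        C * (d : ℝ) ^ (-(m : ℝ) / (m + 1) + ε) * B ^ ((1 : ℝ) / m) := by
  classical
  have hmne : (m:ℕ) ≠ 0 := by omega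
  have hmR : (0:ℝ) < m := by exact_mod_cast (by omega : 0 < m)
  have hK1 : (1:ℝ) ≤ ((m - 1 : ℕ) : ℝ) := by exact_mod_cast (by omega : 1 ≤ m - 1)
  -- constants
  obtain ⟨C₁, hC₁, hC₁b⟩ := Stmt7.omega_bound (m - 1) (by omega)
    (show (0:ℝ) < 1/(2*m) by positivity)
  obtain ⟨C₂, hC₂, hC₂b⟩ := Stmt7.omega_bound (2*(m - 1)) (by omega) hε
  set km : ℝ := -(2*(m:ℝ)+1)/(2*m) with hkm
  have hkmlt : km < -1 := by
    rw [hkm, div_lt_iff₀ (by positivity : (0:ℝ) < 2*m)]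
    linarith
  have hsum : Summable (fun n : ℕ => (n:ℝ) ^ km) := Real.summable_nat_rpow.mpr hkmlt
  set KS : ℝ := ∑' n : ℕ, (n:ℝ) ^ km with hKSdef
  have hKSnn : ∀ n : ℕ, 0 ≤ (n:ℝ) ^ km := fun n => Real.rpow_nonneg (Nat.cast_nonneg n) km
  have hKS1 : (1:ℝ) ≤ KS := by
    have h := hsum.sum_le_tsum {1} (fun i _ => hKSnn i)
    simpa using h
  have hKS0 : (0:ℝ) < KS := lt_of_lt_of_le one_pos hKS1
  have hC₁0 : (0:ℝ) < C₁ := lt_of_lt_of_le one_pos hC₁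
  have hC₂0 : (0:ℝ) < C₂ := lt_of_lt_of_le one_pos hC₂
  refine ⟨C₁ * KS * C₂, by positivity, fun d hd B hB => ?_⟩
  -- setup
  have hd0 : d ≠ 0 := hd.ne_zero
  have hd1 : 1 ≤ d := Nat.pos_of_ne_zero hd0
  have hdR : (0:ℝ) < d := by exact_mod_cast hd1
  have hdR1 : (1:ℝ) ≤ d := by exact_mod_cast hd1
  have hB0 : (0:ℝ) < B := by linarith
  set N := ⌊B⌋₊ with hNdef
  have hN1 : 1 ≤ N := Nat.le_floor (by simpa using hB)
  have hNB : (N:ℝ) ≤ B := Nat.floor_le hB0.le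
  set e1 : ℝ := -(1:ℝ)/m with he1
  set e2 : ℝ := -((m:ℝ)+1)/m with he2
  set T : Finset ℕ := (Finset.Icc 1 N).filter (fun x => IsMFull m x ∧ d ∣ x) with hT
  set SF : Finset ℕ := (Finset.Icc 1 N).filter (fun b => Shape m b) with hSF
  set fib : ℕ → Finset ℕ := fun b =>
    (Finset.Icc 1 N).filter (fun a => a ^ m * b ≤ N ∧ (d / d.gcd b) ∣ a) with hfib
  -- Step A
  have hstepA : Nat.card {x : ℕ // 0 < x ∧ (x : ℝ) ≤ B ∧ IsMFull m x ∧ d ∣ x} ≤ T.card := by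
    have h1 : {x : ℕ | 0 < x ∧ (x:ℝ) ≤ B ∧ IsMFull m x ∧ d ∣ x} ⊆ (T : Set ℕ) := by
      intro x hx
      obtain ⟨hx0, hxB, hxf, hxd⟩ := hx
      simp only [hT, Finset.coe_filter, Set.mem_setOf_eq, Finset.mem_Icc]
      exact ⟨⟨hx0, Nat.le_floor hxB⟩, hxf, hxd⟩
    calc Nat.card {x : ℕ // 0 < x ∧ (x : ℝ) ≤ B ∧ IsMFull m x ∧ d ∣ x}
        = {x : ℕ | 0 < x ∧ (x:ℝ) ≤ B ∧ IsMFull m x ∧ d ∣ x}.ncard :=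
          Nat.card_coe_set_eq _
      _ ≤ (T : Set ℕ).ncard := Set.ncard_le_ncard h1 T.finite_toSet
      _ = T.card := Set.ncard_coe_finset T
  -- facts about members of T
  have hTmem : ∀ x ∈ T, 1 ≤ x ∧ x ≤ N ∧ IsMFull m x ∧ d ∣ x := by
    intro x hx
    rw [hT, Finset.mem_filter, Finset.mem_Icc] at hx
    exact ⟨hx.1.1, hx.1.2, hx.2.1, hx.2.2⟩
  -- Step B : maps to SF
  have hmapsto : ∀ x ∈ T, Stmt7.bpart m x ∈ SF := by
    intro x hx
    obtain ⟨hx1, hxN, hxf, hxd⟩ := hTmem x hx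
    have hx0 : x ≠ 0 := by omega
    have hsh := Stmt7.bpart_shape hm hx0 hxf
    have hdvd : Stmt7.bpart m x ∣ x :=
      ⟨Stmt7.apart m x ^ m, by conv_lhs => rw [← Stmt7.decomp hm hx0 hxf, mul_comm]⟩
    rw [hSF, Finset.mem_filter, Finset.mem_Icc]
    exact ⟨⟨(Stmt7.bpart_pos m x), Nat.le_of_dvd (by omega) hdvd |>.trans hxN⟩, hsh⟩
  have hcardsum : T.card = ∑ b ∈ SF, ((T.filter (fun x => Stmt7.bpart m x = b)).card) :=
    Finset.card_eq_sum_card_fiberwise hmapsto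
  -- fiber injection into fib b
  have hfible : ∀ b ∈ SF, (T.filter (fun x => Stmt7.bpart m x = b)).card ≤ (fib b).card := by
    intro b hbSF
    have hbpos : 0 < b := ((Finset.mem_filter.mp hbSF).2).1
    apply Finset.card_le_card_of_injOn (Stmt7.apart m)
    · intro x hx
      rw [Finset.mem_coe, Finset.mem_filter] at hx
      obtain ⟨hxT, hbx⟩ := hx
      obtain ⟨hx1, hxN, hxf, hxd⟩ := hTmem x hxT
      have hx0 : x ≠ 0 := by omega
      have hxeq : Stmt7.apart m x ^ m * b = x := by
        rw [← hbx]; exact Stmt7.decomp hm hx0 hxf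
      have hapos := Stmt7.apart_pos m x
      have haleN : Stmt7.apart m x ≤ N := by
        calc Stmt7.apart m x ≤ Stmt7.apart m x ^ m := Nat.le_self_pow hmne _
          _ ≤ Stmt7.apart m x ^ m * b := Nat.le_mul_of_pos_right _ hbpos
          _ = x := hxeq
          _ ≤ N := hxN
      have hd0dvd : (d / d.gcd b) ∣ Stmt7.apart m x := by
        have hgdvd : d.gcd b ∣ d := Nat.gcd_dvd_left d b
        have hq0dvd : d / d.gcd b ∣ d := Nat.div_dvd_of_dvd hgdvd
        refine Stmt7.sq_dvd (hd.squarefree_of_dvd hq0dvd) (fun q hq hqd0 => ?_)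
        have hqd : q ∣ d := hqd0.trans hq0dvd
        have hqx : q ∣ x := hqd.trans hxd
        have hqnb : ¬ q ∣ Stmt7.bpart m x := by
          intro hqb
          rw [hbx] at hqb
          have hqg : q ∣ d.gcd b := Nat.dvd_gcd hqd hqb
          have : q * q ∣ (d / d.gcd b) * d.gcd b := mul_dvd_mul hqd0 hqg
          rw [Nat.div_mul_cancel hgdvd] at this
          exact hq.prime.not_unit (hd q this)
        exact Stmt7.dvd_apart hm hx0 hxf hq hqx hqnb
      rw [Finset.mem_coe, hfib, Finset.mem_filter, Finset.mem_Icc]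
      refine ⟨⟨hapos, haleN⟩, ?_, hd0dvd⟩
      rw [hxeq]; exact hxN
    · intro x hx y hy hxy
      simp only [Finset.mem_coe, Finset.mem_filter] at hx hy
      obtain ⟨hxT, hbx⟩ := hx
      obtain ⟨hyT, hby⟩ := hy
      obtain ⟨hx1, _, hxf, _⟩ := hTmem x hxT
      obtain ⟨hy1, _, hyf, _⟩ := hTmem y hyT
      have hx0 : x ≠ 0 := by omega
      have hy0 : y ≠ 0 := by omega
      calc x = Stmt7.apart m x ^ m * Stmt7.bpart m x := (Stmt7.decomp hm hx0 hxf).symm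
        _ = Stmt7.apart m y ^ m * Stmt7.bpart m y := by rw [hxy, hbx, hby]
        _ = y := Stmt7.decomp hm hy0 hyf
  have hTle : T.card ≤ ∑ b ∈ SF, (fib b).card :=
    hcardsum ▸ Finset.sum_le_sum hfible
  -- Step C : real bound on fib b
  have hstepC : ∀ b ∈ SF, ((fib b).card : ℝ) ≤
      B ^ ((1:ℝ)/m) / d * ((d.gcd b : ℝ) * (b:ℝ) ^ e1) := by
    intro b hbSF
    have hbpos : 0 < b := ((Finset.mem_filter.mp hbSF).2).1
    have hbR : (0:ℝ) < b := by exact_mod_cast hbpos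
    have hgdvd : d.gcd b ∣ d := Nat.gcd_dvd_left d b
    have hgpos : 0 < d.gcd b := Nat.gcd_pos_of_pos_left b (by omega)
    have hgR : (0:ℝ) < d.gcd b := by exact_mod_cast hgpos
    have hd0pos : 0 < d / d.gcd b := Nat.div_pos (Nat.le_of_dvd (by omega) hgdvd) hgpos
    set y : ℝ := (B / b) ^ ((1:ℝ)/m) with hy
    have hy0 : 0 ≤ y := Real.rpow_nonneg (by positivity) _
    have hcard : (fib b).card ≤ ⌊y⌋₊ / (d / d.gcd b) := by
      apply Stmt7.count_multiples hd0pos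
      intro a ha
      rw [hfib, Finset.mem_filter, Finset.mem_Icc] at ha
      obtain ⟨⟨ha1, haN⟩, hab, had⟩ := ha
      refine ⟨ha1, had, Nat.le_floor ?_⟩
      have h1 : ((a:ℝ)) ^ (m:ℕ) * b ≤ B := by
        calc ((a:ℝ)) ^ (m:ℕ) * b = ((a ^ m * b : ℕ) : ℝ) := by push_cast; ring
          _ ≤ (N : ℝ) := by exact_mod_cast hab
          _ ≤ B := hNB
      have h2 : ((a:ℝ)) ^ (m:ℕ) ≤ B / b := (le_div_iff₀ hbR).mpr h1
      have h3 := Real.rpow_le_rpow (by positivity) h2 (by positivity : (0:ℝ) ≤ 1/m)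
      rwa [Stmt7.rpow_nat_div a m hmne, div_self (by positivity : (m:ℝ) ≠ 0),
        Real.rpow_one] at h3
    have hcast : ((fib b).card : ℝ) ≤ y / (d / d.gcd b : ℕ) := by
      calc ((fib b).card : ℝ) ≤ ((⌊y⌋₊ / (d / d.gcd b) : ℕ) : ℝ) := by exact_mod_cast hcard
        _ ≤ (⌊y⌋₊ : ℝ) / ((d / d.gcd b : ℕ) : ℝ) := Nat.cast_div_le
        _ ≤ y / ((d / d.gcd b : ℕ) : ℝ) := by
            gcongr
            exact Nat.floor_le hy0
    have hd0cast : ((d / d.gcd b : ℕ) : ℝ) = (d:ℝ) / (d.gcd b : ℝ) :=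
      Nat.cast_div hgdvd (by positivity)
    have hyval : y = B ^ ((1:ℝ)/m) / (b:ℝ) ^ ((1:ℝ)/m) :=
      Real.div_rpow hB0.le (Nat.cast_nonneg b) _
    have hbrne : ((b:ℝ)) ^ ((1:ℝ)/m) ≠ 0 := by positivity
    calc ((fib b).card : ℝ) ≤ y / ((d / d.gcd b : ℕ):ℝ) := hcast
      _ = B ^ ((1:ℝ)/m) / d * ((d.gcd b : ℝ) * (b:ℝ) ^ e1) := by
          rw [hd0cast, hyval, he1, neg_div, Real.rpow_neg (Nat.cast_nonneg b)]
          field_simp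
  -- the weighted shape sum machinery
  set F : ℕ → ℝ := fun v => ((m - 1 : ℕ) : ℝ) ^ v.primeFactors.card * (v:ℝ) ^ e2 with hF
  have hFnn : ∀ v, 0 ≤ F v := fun v => by simp only [hF]; positivity
  set SS : ℝ := ∑ s ∈ Finset.Icc 1 N, F s with hSS
  have hSS0 : 0 ≤ SS := Finset.sum_nonneg fun s _ => hFnn s
  have hSSle : SS ≤ C₁ * KS := by
    have h1 : ∀ s ∈ Finset.Icc 1 N, F s ≤ C₁ * (s:ℝ) ^ km := by
      intro s hs
      rw [Finset.mem_Icc] at hs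
      have hs0 : s ≠ 0 := by omega
      have hsR : (0:ℝ) < s := by exact_mod_cast Nat.pos_of_ne_zero hs0
      have h2 := hC₁b s hs0
      have h3 : (s:ℝ) ^ ((1:ℝ)/(2*m)) * (s:ℝ) ^ e2 = (s:ℝ) ^ km := by
        rw [← Real.rpow_add hsR, hkm, he2]
        congr 1
        field_simp
        ring
      calc F s ≤ (C₁ * (s:ℝ) ^ ((1:ℝ)/(2*m))) * (s:ℝ) ^ e2 := by
            simp only [hF]
            exact mul_le_mul_of_nonneg_right h2 (Real.rpow_nonneg hsR.le _)
        _ = C₁ * ((s:ℝ) ^ ((1:ℝ)/(2*m)) * (s:ℝ) ^ e2) := by ring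
        _ = C₁ * (s:ℝ) ^ km := by rw [h3]
    calc SS ≤ ∑ s ∈ Finset.Icc 1 N, C₁ * (s:ℝ) ^ km := Finset.sum_le_sum h1
      _ = C₁ * ∑ s ∈ Finset.Icc 1 N, (s:ℝ) ^ km := by rw [Finset.mul_sum]
      _ ≤ C₁ * KS := by
          apply mul_le_mul_of_nonneg_left _ hC₁0.le
          exact hsum.sum_le_tsum _ (fun i _ => hKSnn i)
  -- bound for each gcd-fiber
  have hgbound : ∀ g ∈ d.divisors,
      ∑ b ∈ SF.filter (fun b => d.gcd b = g), (b:ℝ) ^ e1 ≤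
        ((m-1:ℕ):ℝ) ^ g.primeFactors.card * (g:ℝ) ^ e2 * SS := by
    intro g hgmem
    obtain ⟨hgdvd, -⟩ := Nat.mem_divisors.mp hgmem
    have hgsq : Squarefree g := hd.squarefree_of_dvd hgdvd
    have hg0 : g ≠ 0 := hgsq.ne_zero
    have hg1 : 1 ≤ g := Nat.pos_of_ne_zero hg0
    set SFg := SF.filter (fun b => d.gcd b = g) with hSFg
    set V : Finset ℕ := (Finset.Icc 1 N).filter (fun v => g ∣ v) with hV
    have hSFgmem : ∀ b ∈ SFg, Shape m b ∧ b ≤ N ∧ g ∣ b := by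
      intro b hb
      rw [hSFg, Finset.mem_filter, hSF, Finset.mem_filter, Finset.mem_Icc] at hb
      exact ⟨hb.1.2, hb.1.1.2, hb.2 ▸ Nat.gcd_dvd_right d b⟩
    have hVmaps : ∀ b ∈ SFg, Stmt7.rad b ∈ V := by
      intro b hb
      obtain ⟨hsh, hbN, hgb⟩ := hSFgmem b hb
      have hb0 : b ≠ 0 := hsh.1.ne'
      have hradb : Stmt7.rad b ∣ b := Stmt7.rad_dvd b
      have hgrad : g ∣ Stmt7.rad b := by
        refine Stmt7.sq_dvd hgsq (fun q hq hqg => ?_)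
        have hqb : q ∣ b := hqg.trans hgb
        have hmem : q ∈ b.primeFactors := Nat.mem_primeFactors.mpr ⟨hq, hqb, hb0⟩
        exact Finset.dvd_prod_of_mem _ hmem
      rw [hV, Finset.mem_filter, Finset.mem_Icc]
      exact ⟨⟨Stmt7.rad_pos b, (Nat.le_of_dvd (Nat.pos_of_ne_zero hb0) hradb).trans hbN⟩, hgrad⟩
    have hfiber : ∀ v ∈ V, ∑ b ∈ SFg.filter (fun b => Stmt7.rad b = v), (b:ℝ) ^ e1 ≤ F v := by
      intro v hv
      rcases (SFg.filter (fun b => Stmt7.rad b = v)).eq_empty_or_nonempty with he | hne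
      · rw [he, Finset.sum_empty]; exact hFnn v
      · obtain ⟨b0, hb0mem⟩ := hne
        have hb0f := Finset.mem_filter.mp hb0mem
        have hvrad : Stmt7.rad b0 = v := hb0f.2
        have hvsq : Squarefree v := hvrad ▸ Stmt7.rad_squarefree b0
        have hv0 : 0 < v := hvrad ▸ Stmt7.rad_pos b0
        have hcard : (SFg.filter (fun b => Stmt7.rad b = v)).card
            ≤ (m-1) ^ v.primeFactors.card := by
          have h1 : (SFg.filter (fun b => Stmt7.rad b = v)).card
              ≤ (v ^ (m-2)).divisors.card := by
            apply Finset.card_le_card_of_injOn (fun b => b / v ^ (m+1))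
            · intro b hb
              have hbf := Finset.mem_filter.mp hb
              obtain ⟨hsh, -, -⟩ := hSFgmem b hbf.1
              have hradv : Stmt7.rad b = v := hbf.2
              rw [Finset.mem_coe, Nat.mem_divisors]
              exact ⟨hradv ▸ Stmt7.cofactor_dvd hm hsh, pow_ne_zero _ hv0.ne'⟩
            · intro b hb c hc hbc
              simp only [Finset.mem_coe, Finset.mem_filter] at hb hc
              obtain ⟨hsh, -, -⟩ := hSFgmem b hb.1
              obtain ⟨hsh', -, -⟩ := hSFgmem c hc.1
              have hdb : v ^ (m+1) ∣ b := hb.2 ▸ Stmt7.rad_pow_dvd hsh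
              have hdc : v ^ (m+1) ∣ c := hc.2 ▸ Stmt7.rad_pow_dvd hsh'
              simp only at hbc
              calc b = v^(m+1) * (b / v^(m+1)) := (Nat.mul_div_cancel' hdb).symm
                _ = v^(m+1) * (c / v^(m+1)) := by rw [hbc]
                _ = c := Nat.mul_div_cancel' hdc
          calc (SFg.filter (fun b => Stmt7.rad b = v)).card
              ≤ (v ^ (m-2)).divisors.card := h1
            _ ≤ (m - 2 + 1) ^ v.primeFactors.card := Stmt7.card_divisors_pow_le hvsq
            _ = (m-1) ^ v.primeFactors.card := by congr 1; omega
        have hterm : ∀ b ∈ SFg.filter (fun b => Stmt7.rad b = v),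
            (b:ℝ) ^ e1 ≤ (v:ℝ) ^ e2 := by
          intro b hb
          have hbf := Finset.mem_filter.mp hb
          obtain ⟨hsh, -, -⟩ := hSFgmem b hbf.1
          have h := Stmt7.term_bound hm hv0 hsh.1 (hbf.2 ▸ Stmt7.rad_pow_dvd hsh)
          rw [he1, he2]
          exact h
        calc ∑ b ∈ SFg.filter (fun b => Stmt7.rad b = v), (b:ℝ) ^ e1
            ≤ (SFg.filter (fun b => Stmt7.rad b = v)).card • ((v:ℝ) ^ e2) :=
              Finset.sum_le_card_nsmul _ _ _ hterm
          _ = ((SFg.filter (fun b => Stmt7.rad b = v)).card : ℝ) * (v:ℝ) ^ e2 := by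
              rw [nsmul_eq_mul]
          _ ≤ ((m-1:ℕ):ℝ) ^ v.primeFactors.card * (v:ℝ) ^ e2 := by
              apply mul_le_mul_of_nonneg_right _ (Real.rpow_nonneg (Nat.cast_nonneg v) _)
              exact_mod_cast hcard
          _ = F v := by simp only [hF]
    have hsum1 : ∑ b ∈ SFg, (b:ℝ) ^ e1 ≤ ∑ v ∈ V, F v := by
      rw [← Finset.sum_fiberwise_of_maps_to hVmaps (fun b => (b:ℝ) ^ e1)]
      exact Finset.sum_le_sum hfiber
    have hsum2 : ∑ v ∈ V, F v ≤ ((m-1:ℕ):ℝ) ^ g.primeFactors.card * (g:ℝ) ^ e2 * SS := by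
      have hinj : ∀ v ∈ V, ∀ v' ∈ V, v / g = v' / g → v = v' := by
        intro v hv v' hv' hvv
        have h1 : g ∣ v := (Finset.mem_filter.mp hv).2
        have h2 : g ∣ v' := (Finset.mem_filter.mp hv').2
        calc v = g * (v / g) := (Nat.mul_div_cancel' h1).symm
          _ = g * (v' / g) := by rw [hvv]
          _ = v' := Nat.mul_div_cancel' h2
      have himg : ∑ v ∈ V, F v = ∑ s ∈ V.image (· / g), F (g * s) := by
        rw [Finset.sum_image hinj]
        apply Finset.sum_congr rfl
        intro v hv
        rw [Nat.mul_div_cancel' (Finset.mem_filter.mp hv).2]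
      have hsubset : V.image (· / g) ⊆ Finset.Icc 1 N := by
        intro t ht
        obtain ⟨v, hv, hvs⟩ := Finset.mem_image.mp ht
        rw [Finset.mem_filter, Finset.mem_Icc] at hv
        obtain ⟨⟨hv1, hvN⟩, hgv⟩ := hv
        rw [Finset.mem_Icc, ← hvs]
        exact ⟨(Nat.one_le_div_iff (by omega)).mpr (Nat.le_of_dvd (by omega) hgv),
          (Nat.div_le_self v g).trans hvN⟩
      have hF2 : ∀ t ∈ Finset.Icc 1 N,
          F (g * t) ≤ (((m-1:ℕ):ℝ) ^ g.primeFactors.card * (g:ℝ) ^ e2) * F t := by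
        intro t ht
        rw [Finset.mem_Icc] at ht
        have ht0 : t ≠ 0 := by omega
        have homg : (g * t).primeFactors.card
            ≤ g.primeFactors.card + t.primeFactors.card := by
          rw [Nat.primeFactors_mul hg0 ht0]
          exact Finset.card_union_le _ _
        have hpow : ((m-1:ℕ):ℝ) ^ (g*t).primeFactors.card ≤
            ((m-1:ℕ):ℝ) ^ (g.primeFactors.card + t.primeFactors.card) :=
          pow_le_pow_right₀ hK1 homg
        have hrpoweq : ((g*t : ℕ):ℝ) ^ e2 = (g:ℝ) ^ e2 * (t:ℝ) ^ e2 := by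
          push_cast
          exact Real.mul_rpow (Nat.cast_nonneg g) (Nat.cast_nonneg t)
        simp only [hF]
        calc ((m-1:ℕ):ℝ) ^ (g*t).primeFactors.card * ((g*t:ℕ):ℝ) ^ e2
            ≤ ((m-1:ℕ):ℝ) ^ (g.primeFactors.card + t.primeFactors.card)
                * ((g*t:ℕ):ℝ) ^ e2 :=
              mul_le_mul_of_nonneg_right hpow (Real.rpow_nonneg (by positivity) _)
          _ = (((m-1:ℕ):ℝ) ^ g.primeFactors.card * (g:ℝ) ^ e2) *
              (((m-1:ℕ):ℝ) ^ t.primeFactors.card * (t:ℝ) ^ e2) := by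
              rw [hrpoweq, pow_add]; ring
      calc ∑ v ∈ V, F v = ∑ t ∈ V.image (· / g), F (g * t) := himg
        _ ≤ ∑ t ∈ Finset.Icc 1 N, F (g * t) :=
            Finset.sum_le_sum_of_subset_of_nonneg hsubset (fun t _ _ => hFnn (g*t))
        _ ≤ ∑ t ∈ Finset.Icc 1 N, (((m-1:ℕ):ℝ) ^ g.primeFactors.card * (g:ℝ) ^ e2) * F t :=
            Finset.sum_le_sum hF2
        _ = ((m-1:ℕ):ℝ) ^ g.primeFactors.card * (g:ℝ) ^ e2 * SS := by
            rw [← Finset.mul_sum]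
    exact hsum1.trans hsum2
  -- total weighted sum over SF
  have hwsum : ∑ b ∈ SF, (d.gcd b : ℝ) * (b:ℝ) ^ e1 ≤ C₂ * (d:ℝ) ^ ε * (C₁ * KS) := by
    have hmapsg : ∀ b ∈ SF, d.gcd b ∈ d.divisors := fun b _ =>
      Nat.mem_divisors.mpr ⟨Nat.gcd_dvd_left d b, hd0⟩
    rw [← Finset.sum_fiberwise_of_maps_to hmapsg (fun b => (d.gcd b : ℝ) * (b:ℝ) ^ e1)]
    have hinner : ∀ g ∈ d.divisors,
        ∑ b ∈ SF.filter (fun b => d.gcd b = g), (d.gcd b:ℝ) * (b:ℝ)^e1 ≤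
          ((m-1:ℕ):ℝ) ^ d.primeFactors.card * (C₁ * KS) := by
      intro g hgmem
      obtain ⟨hgdvd, -⟩ := Nat.mem_divisors.mp hgmem
      have hgpos : 0 < g := Nat.pos_of_mem_divisors hgmem
      have hgR : (0:ℝ) < g := by exact_mod_cast hgpos
      have hgR1 : (1:ℝ) ≤ g := by exact_mod_cast hgpos
      have heq : ∀ b ∈ SF.filter (fun b => d.gcd b = g),
          (d.gcd b:ℝ) * (b:ℝ)^e1 = (g:ℝ) * (b:ℝ)^e1 := by
        intro b hb
        rw [(Finset.mem_filter.mp hb).2]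
      rw [Finset.sum_congr rfl heq, ← Finset.mul_sum]
      have hsum0 : (0:ℝ) ≤ ∑ b ∈ SF.filter (fun b => d.gcd b = g), (b:ℝ)^e1 :=
        Finset.sum_nonneg fun b _ => Real.rpow_nonneg (Nat.cast_nonneg b) _
      have hg1e : (g:ℝ) * (g:ℝ)^e2 ≤ 1 := by
        have hge : (g:ℝ) * (g:ℝ)^e2 = (g:ℝ)^(1+e2) := by
          rw [Real.rpow_add hgR, Real.rpow_one]
        rw [hge]
        apply Real.rpow_le_one_of_one_le_of_nonpos hgR1
        have hdiv : (1:ℝ) ≤ ((m:ℝ)+1)/m := by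
          rw [le_div_iff₀ hmR]; linarith
        rw [he2]; rw [neg_div]; linarith
      have hps : ((m-1:ℕ):ℝ) ^ g.primeFactors.card
          ≤ ((m-1:ℕ):ℝ) ^ d.primeFactors.card :=
        pow_le_pow_right₀ hK1
          (Finset.card_le_card (Nat.primeFactors_mono hgdvd hd0))
      calc (g:ℝ) * ∑ b ∈ SF.filter (fun b => d.gcd b = g), (b:ℝ)^e1
          ≤ (g:ℝ) * (((m-1:ℕ):ℝ) ^ g.primeFactors.card * (g:ℝ) ^ e2 * SS) :=
            mul_le_mul_of_nonneg_left (hgbound g hgmem) hgR.le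
        _ = ((m-1:ℕ):ℝ) ^ g.primeFactors.card * ((g:ℝ) * (g:ℝ)^e2) * SS := by ring
        _ ≤ ((m-1:ℕ):ℝ) ^ d.primeFactors.card * 1 * (C₁ * KS) := by
            refine mul_le_mul (mul_le_mul hps hg1e (by positivity) (by positivity))
              hSSle hSS0 (by positivity)
        _ = ((m-1:ℕ):ℝ) ^ d.primeFactors.card * (C₁ * KS) := by ring
    have hτ : d.divisors.card ≤ 2 ^ d.primeFactors.card := by
      have h := Stmt7.card_divisors_pow_le (v := d) (k := 1) hd
      simpa using h
    calc ∑ g ∈ d.divisors, ∑ b ∈ SF.filter (fun b => d.gcd b = g),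
          (d.gcd b:ℝ) * (b:ℝ)^e1
        ≤ ∑ g ∈ d.divisors, ((m-1:ℕ):ℝ) ^ d.primeFactors.card * (C₁ * KS) :=
          Finset.sum_le_sum hinner
      _ = (d.divisors.card : ℝ) * (((m-1:ℕ):ℝ) ^ d.primeFactors.card * (C₁*KS)) := by
          rw [Finset.sum_const, nsmul_eq_mul]
      _ ≤ C₂ * (d:ℝ)^ε * (C₁ * KS) := by
          have h2 : ((d.divisors.card:ℝ) * ((m-1:ℕ):ℝ)^d.primeFactors.card)
              ≤ C₂ * (d:ℝ)^ε := by
            calc (d.divisors.card:ℝ) * ((m-1:ℕ):ℝ)^d.primeFactors.card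
                ≤ (2:ℝ)^d.primeFactors.card * ((m-1:ℕ):ℝ)^d.primeFactors.card := by
                  apply mul_le_mul_of_nonneg_right _ (by positivity)
                  exact_mod_cast hτ
              _ = ((2*(m-1):ℕ):ℝ) ^ d.primeFactors.card := by
                  push_cast
                  rw [mul_pow]
              _ ≤ C₂ * (d:ℝ)^ε := hC₂b d hd0
          calc (d.divisors.card : ℝ) * (((m-1:ℕ):ℝ)^d.primeFactors.card * (C₁*KS))
              = ((d.divisors.card:ℝ) * ((m-1:ℕ):ℝ)^d.primeFactors.card) * (C₁*KS) := by
                ring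
            _ ≤ (C₂*(d:ℝ)^ε) * (C₁*KS) := mul_le_mul_of_nonneg_right h2 (by positivity)
            _ = C₂ * (d:ℝ)^ε * (C₁*KS) := by ring
  -- assemble everything
  have hA' : ((Nat.card {x : ℕ // 0 < x ∧ (x : ℝ) ≤ B ∧ IsMFull m x ∧ d ∣ x}):ℝ)
      ≤ (T.card:ℝ) := by exact_mod_cast hstepA
  refine hA'.trans ?_
  have hexp : (d:ℝ)^(-1+ε : ℝ) ≤ (d:ℝ)^(-(m:ℝ)/(m+1)+ε) := by
    apply Real.rpow_le_rpow_of_exponent_le hdR1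
    have h1 : (m:ℝ)/((m:ℝ)+1) ≤ 1 := by
      rw [div_le_one (by positivity)]; linarith
    rw [neg_div]
    linarith
  calc (T.card:ℝ) ≤ ((∑ b ∈ SF, (fib b).card : ℕ):ℝ) := by exact_mod_cast hTle
    _ = ∑ b ∈ SF, ((fib b).card : ℝ) := by push_cast; rfl
    _ ≤ ∑ b ∈ SF, B^((1:ℝ)/m)/d * ((d.gcd b:ℝ) * (b:ℝ)^e1) := Finset.sum_le_sum hstepC
    _ = B^((1:ℝ)/m)/d * ∑ b ∈ SF, (d.gcd b:ℝ)*(b:ℝ)^e1 := by rw [← Finset.mul_sum]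
    _ ≤ B^((1:ℝ)/m)/d * (C₂ * (d:ℝ)^ε * (C₁*KS)) := by
        apply mul_le_mul_of_nonneg_left hwsum (by positivity)
    _ = (C₁*KS*C₂) * ((d:ℝ)^(-1+ε : ℝ)) * B^((1:ℝ)/m) := by
        rw [Real.rpow_add hdR, Real.rpow_neg_one]
        field_simp
    _ ≤ (C₁*KS*C₂) * (d:ℝ)^(-(m:ℝ)/(m+1)+ε) * B^((1:ℝ)/m) := by
        apply mul_le_mul_of_nonneg_right _ (by positivity)
        exact mul_le_mul_of_nonneg_left hexp (by positivity)
end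

section
/- Let m ≥ 2 be an integer and k a real number with k > 1/m. Then the sum over m-full positive integers x of x^{-k} converges. -/
lemma exp_decomp (m : ℕ) (hm0 : 0 < m) (e : ℕ) (he : m ≤ e) :
    ∃ t : Fin m → ℕ, ∑ i : Fin m, (m + (i : ℕ)) * t i = e := by
  set q := e / m with hq
  set r := e % m with hr
  have hq1 : 1 ≤ q := (Nat.one_le_div_iff hm0).2 he
  have hrm : r < m := Nat.mod_lt _ hm0
  refine ⟨Pi.single (⟨0, hm0⟩ : Fin m) (q - 1) + Pi.single (⟨r, hrm⟩ : Fin m) 1, ?_⟩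
  have h1 : ∀ (j : Fin m) (c : ℕ),
      ∑ i : Fin m, (m + (i : ℕ)) * (Pi.single j c : Fin m → ℕ) i = (m + (j : ℕ)) * c := by
    intro j c
    rw [Finset.sum_eq_single j]
    · simp
    · intro b _ hb; simp [Pi.single_eq_of_ne hb]
    · simp
  simp only [Pi.add_apply, Nat.mul_add, Finset.sum_add_distrib, h1]
  have hdm := Nat.div_add_mod e m
  rw [← hq, ← hr] at hdm
  have h2 : m * (q - 1) + m * 1 = m * q := by rw [← Nat.mul_add]; congr 1; omega
  simp only [Nat.add_zero, mul_one] at *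
  omega

lemma mfull_decomp (m x : ℕ) (hm0 : 0 < m) (hx : 0 < x) (h : IsMFull m x) :
    ∃ a : Fin m → ℕ, (∀ i, 0 < a i) ∧ ∏ i : Fin m, a i ^ (m + (i : ℕ)) = x := by
  classical
  have hfac : ∀ p ∈ x.primeFactors, m ≤ x.factorization p := by
    intro p hp
    have hpp : p.Prime := Nat.prime_of_mem_primeFactors hp
    exact (Nat.Prime.pow_dvd_iff_le_factorization hpp hx.ne').1
      (h p hpp (Nat.dvd_of_mem_primeFactors hp))
  choose t ht using fun p : x.primeFactors =>
    exp_decomp m hm0 (x.factorization p) (hfac p p.2)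
  refine ⟨fun i => ∏ p ∈ x.primeFactors.attach, (p : ℕ) ^ t p i, ?_, ?_⟩
  · intro i
    exact Finset.prod_pos fun p _ => pow_pos (Nat.prime_of_mem_primeFactors p.2).pos _
  · have : ∏ i : Fin m, (∏ p ∈ x.primeFactors.attach, (p : ℕ) ^ t p i) ^ (m + (i : ℕ))
        = ∏ p ∈ x.primeFactors.attach, (p : ℕ) ^ x.factorization p := by
      simp only [← Finset.prod_pow, ← pow_mul]
      rw [Finset.prod_comm]
      refine Finset.prod_congr rfl fun p _ => ?_
      rw [Finset.prod_pow_eq_pow_sum, ← ht p]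
      congr 1
      exact Finset.sum_congr rfl fun i _ => mul_comm _ _
    rw [this, Finset.prod_attach x.primeFactors (fun p => p ^ x.factorization p)]
    rw [← Nat.support_factorization]
    exact Nat.factorization_prod_pow_eq_self hx.ne'

lemma summable_pnat_rpow {c : ℝ} (hc : 1 < c) :
    Summable (fun a : ℕ+ => ((a : ℕ) : ℝ) ^ (-c)) :=
  (Real.summable_nat_rpow.2 (by linarith)).comp_injective PNat.coe_injective

lemma summable_pi (n : ℕ) (c : Fin n → ℝ) (hc : ∀ i, 1 < c i) :
    Summable (fun a : Fin n → ℕ+ => ∏ i, ((a i : ℕ) : ℝ) ^ (-(c i))) := by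
  induction n with
  | zero => exact .of_finite
  | succ n ih =>
    have h := Summable.mul_of_nonneg (summable_pnat_rpow (hc 0))
      (ih (fun i => c i.succ) (fun i => hc i.succ))
      (fun _ => Real.rpow_nonneg (by positivity) _)
      (fun a => Finset.prod_nonneg fun i _ => Real.rpow_nonneg (by positivity) _)
    rw [← (Fin.consEquiv (fun _ : Fin (n + 1) => ℕ+)).summable_iff]
    refine h.congr fun p => ?_
    simp [Fin.consEquiv, Function.comp, Fin.prod_univ_succ]

/-- for `m ≥ 2` and `k > 1/m`, the series `∑ x^{-k}` over `m`-full
positive integers `x` converges. -/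
theorem stmt_8 (m : ℕ) (hm : 2 ≤ m) (k : ℝ) (hk : 1 / (m : ℝ) < k) :
    Summable (fun x : {x : ℕ // 0 < x ∧ IsMFull m x} => ((x : ℕ) : ℝ) ^ (-k)) := by
  classical
  have hm0 : 0 < m := by omega
  have hmR : (0 : ℝ) < m := by exact_mod_cast hm0
  have hk0 : 0 < k := lt_trans (by positivity) hk
  have hmk : 1 < (m : ℝ) * k := by
    rw [div_lt_iff₀ hmR] at hk; linarith [hk]
  choose a ha hprod using fun x : {x : ℕ // 0 < x ∧ IsMFull m x} =>
    mfull_decomp m x.1 hm0 x.2.1 x.2.2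
  set F : {x : ℕ // 0 < x ∧ IsMFull m x} → (Fin m → ℕ+) :=
    fun x i => ⟨a x i, ha x i⟩ with hF
  have hFinj : Function.Injective F := by
    intro x y hxy
    apply Subtype.ext
    rw [← hprod x, ← hprod y]
    refine Finset.prod_congr rfl fun i _ => ?_
    have h1 : F x i = F y i := by rw [hxy]
    have : a x i = a y i := congrArg (fun z : ℕ+ => (z : ℕ)) h1
    rw [this]
  have hsum : Summable (fun b : Fin m → ℕ+ =>
      ∏ i : Fin m, ((b i : ℕ) : ℝ) ^ (-(((m : ℝ) + (i : ℕ)) * k))) := by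
    refine summable_pi m _ fun i => ?_
    have : (m : ℝ) * k ≤ ((m : ℝ) + (i : ℕ)) * k := by
      have : (0 : ℝ) ≤ (i : ℕ) := by positivity
      nlinarith
    linarith
  have hcomp := hsum.comp_injective hFinj
  refine hcomp.congr fun x => ?_
  show ∏ i : Fin m, ((a x i : ℕ) : ℝ) ^ (-(((m : ℝ) + (i : ℕ)) * k)) = _
  rw [← hprod x]
  push_cast
  rw [← Real.finset_prod_rpow _ _ (fun i _ => by positivity) (-k)]
  refine Finset.prod_congr rfl fun i _ => ?_
  rw [← Real.rpow_natCast ((a x i : ℝ)) (m + (i : ℕ)), ← Real.rpow_mul (by positivity)]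
  push_cast
  ring_nf
end

section
/- With notation as in the Möbius function associated to a fan: let μ : I_K^s → ℤ be the multiplicative function with ∑_{d} μ(d) χ_d = χ, where χ is the characteristic function of tuples (b_1,...,b_s) of ideals with ∑_{σ ∈ Σ_max} ∏_{i ∈ I_σ} b_i = O_K. If for some prime ideal p and exponents (e_1,...,e_s) some e_i ≥ 2, then μ(p^{e_1},...,p^{e_s}) = 0. -/
open scoped Classical

/-- let `μ` be the multiplicative Möbius-type function on
`s`-tuples of nonzero ideals of `𝓞 K`, associated to the family
`{I_σ}_{σ ∈ Smax}` of subsets of `{1,…,s}`: it satisfies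
`χ(b) = ∑_{d ⊇ b componentwise} μ(d)` where `χ(b) = 1` iff
`∑_σ ∏_{i ∈ I_σ} b_i = 𝓞 K`. Then `μ(p^{e_1},…,p^{e_s}) = 0` whenever some
`e_i ≥ 2`. -/
theorem stmt_11 (K : Type*) [Field K] [NumberField K] (s : ℕ)
    (Smax : Finset (Finset (Fin s))) (hS : Smax.Nonempty)
    (μ : (Fin s → Ideal (NumberField.RingOfIntegers K)) → ℤ)
    (hmul : ∀ a b : Fin s → Ideal (NumberField.RingOfIntegers K),
      (∏ i, a i) ⊔ (∏ i, b i) = ⊤ → μ (fun i => a i * b i) = μ a * μ b)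
    (hinv : ∀ b : Fin s → Ideal (NumberField.RingOfIntegers K),
      (∀ i, b i ≠ ⊥) →
      (if Smax.sup (fun σ => ∏ i ∈ σ, b i) = ⊤ then (1 : ℤ) else 0) =
        ∑ᶠ d : Fin s → Ideal (NumberField.RingOfIntegers K),
          Set.indicator {d | ∀ i, b i ≤ d i} μ d)
    (p : Ideal (NumberField.RingOfIntegers K)) (hp : p.IsPrime) (hp0 : p ≠ ⊥)
    (e : Fin s → ℕ) (he : ∃ i, 2 ≤ e i) :
    μ (fun i => p ^ e i) = 0 := by
  classical
  obtain ⟨i0, hi0⟩ := he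
  have hpT : p ≠ ⊤ := hp.ne_top
  have hprime : Prime p := Ideal.prime_of_isPrime hp0 hp
  have hinj : Function.Injective (fun n : ℕ => p ^ n) :=
    (Ideal.pow_right_strictAnti p hp0 hpT).injective
  have hinj2 : Function.Injective (fun g : Fin s → ℕ => (fun j => p ^ g j :
      Fin s → Ideal (NumberField.RingOfIntegers K))) := by
    intro a b hab
    funext j
    exact hinj (congrFun hab j)
  -- key identity
  have key : ∀ f : Fin s → ℕ,
      ∑ g ∈ Finset.Iic f, μ (fun j => p ^ g j)
        = (if ∃ σ ∈ Smax, ∀ j ∈ σ, f j = 0 then (1 : ℤ) else 0) := by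
    intro f
    have hpz : p ≠ 0 := by rwa [Ideal.zero_eq_bot]
    have h1 := hinv (fun j => p ^ f j) (fun j => by
      rw [← Ideal.zero_eq_bot]; exact pow_ne_zero _ hpz)
    set S : Set (Fin s → Ideal (NumberField.RingOfIntegers K)) :=
      {d | ∀ j, p ^ f j ≤ d j} with hSdef
    set T : Finset (Fin s → Ideal (NumberField.RingOfIntegers K)) :=
      (Finset.Iic f).image (fun g j => p ^ g j) with hTdef
    have hST : S ⊆ ↑T := by
      intro d hd
      have : ∀ j, ∃ g ≤ f j, d j = p ^ g := by
        intro j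
        have hdvd : d j ∣ p ^ f j := Ideal.dvd_iff_le.mpr (hd j)
        obtain ⟨g, hg, hassoc⟩ := (dvd_prime_pow hprime (f j)).mp hdvd
        exact ⟨g, hg, associated_iff_eq.mp hassoc⟩
      choose g hg hdg using this
      refine Finset.mem_coe.mpr (Finset.mem_image.mpr ⟨g, Finset.mem_Iic.mpr hg, ?_⟩)
      funext j
      exact (hdg j).symm
    have hsupp : Function.support (Set.indicator S μ) ⊆ ↑T :=
      fun d hd => hST (Set.mem_of_indicator_ne_zero hd)
    rw [finsum_eq_finset_sum_of_support_subset _ hsupp] at h1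
    have hTsum : ∑ d ∈ T, Set.indicator S μ d = ∑ g ∈ Finset.Iic f, μ (fun j => p ^ g j) := by
      rw [hTdef, Finset.sum_image (fun a _ b _ hab => hinj2 hab)]
      refine Finset.sum_congr rfl fun g hg => ?_
      have hmem : (fun j => p ^ g j) ∈ S := fun j =>
        Ideal.pow_le_pow_right (Finset.mem_Iic.mp hg j)
      rw [Set.indicator_of_mem hmem]
    rw [hTsum] at h1
    rw [← h1]
    congr 1
    -- iff of conditions
    have : Smax.sup (fun σ => ∏ j ∈ σ, p ^ f j) = ⊤ ↔ ∃ σ ∈ Smax, ∀ j ∈ σ, f j = 0 := by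
      constructor
      · intro htop
        set m := Smax.inf' hS (fun σ => ∑ j ∈ σ, f j) with hm
        have hle : Smax.sup (fun σ => ∏ j ∈ σ, p ^ f j) ≤ p ^ m := by
          refine Finset.sup_le fun σ hσ => ?_
          rw [Finset.prod_pow_eq_pow_sum]
          exact Ideal.pow_le_pow_right (Finset.inf'_le _ hσ)
        rw [htop] at hle
        have hm0 : m = 0 := by
          by_contra hm0
          have h1m : 1 ≤ m := Nat.one_le_iff_ne_zero.mpr hm0
          have : (⊤ : Ideal (NumberField.RingOfIntegers K)) ≤ p := by
            calc (⊤ : Ideal (NumberField.RingOfIntegers K)) ≤ p ^ m := hle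
            _ ≤ p ^ 1 := Ideal.pow_le_pow_right h1m
            _ = p := pow_one p
          exact hpT (top_le_iff.mp this)
        obtain ⟨σ, hσ, hσm⟩ := Finset.exists_mem_eq_inf' hS (fun σ => ∑ j ∈ σ, f j)
        refine ⟨σ, hσ, ?_⟩
        intro j hj
        have : ∑ j ∈ σ, f j = 0 := by rw [← hσm, ← hm, hm0]
        exact (Finset.sum_eq_zero_iff.mp this) j hj
      · rintro ⟨σ, hσ, hσ0⟩
        refine top_le_iff.mp ?_
        have : ∏ j ∈ σ, p ^ f j = ⊤ := by
          rw [Finset.prod_pow_eq_pow_sum, Finset.sum_eq_zero hσ0, pow_zero, Ideal.one_eq_top]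
        calc (⊤ : Ideal (NumberField.RingOfIntegers K)) = ∏ j ∈ σ, p ^ f j := this.symm
        _ ≤ _ := Finset.le_sup (f := fun σ => ∏ j ∈ σ, p ^ f j) hσ
    simp only [this]
  -- Claim A: partial sums over tuples with i-th coordinate equal to e i vanish
  have claimA : ∀ f : Fin s → ℕ, f i0 = e i0 →
      ∑ g ∈ (Finset.Iic f).filter (fun g => g i0 = e i0), μ (fun j => p ^ g j) = 0 := by
    intro f hfi
    have hfilter : (Finset.Iic f).filter (fun g => ¬ g i0 = e i0) = Finset.Iic (Function.update f i0 (e i0 - 1)) := by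
      ext g
      simp only [Finset.mem_filter, Finset.mem_Iic, Pi.le_def]
      constructor
      · rintro ⟨hg, hne⟩ j
        by_cases hj : j = i0
        · rw [hj, Function.update_self]
          have h1 := hg i0
          rw [hfi] at h1
          omega
        · rw [Function.update_of_ne hj]
          exact hg j
      · intro hg
        have hgi := hg i0
        rw [Function.update_self] at hgi
        constructor
        · intro j
          by_cases hj : j = i0
          · rw [hj]
            omega
          · have := hg j
            rwa [Function.update_of_ne hj] at this
        · omega
    have hiff : (∃ σ ∈ Smax, ∀ j ∈ σ, f j = 0) ↔ (∃ σ ∈ Smax, ∀ j ∈ σ, (Function.update f i0 (e i0 - 1)) j = 0) := by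
      have hcoord : ∀ j, f j = 0 ↔ (Function.update f i0 (e i0 - 1)) j = 0 := by
        intro j
        by_cases hj : j = i0
        · rw [hj, Function.update_self, hfi]
          omega
        · rw [Function.update_of_ne hj]
      constructor
      · rintro ⟨σ, h1, h2⟩
        exact ⟨σ, h1, fun j hj => (hcoord j).mp (h2 j hj)⟩
      · rintro ⟨σ, h1, h2⟩
        exact ⟨σ, h1, fun j hj => (hcoord j).mpr (h2 j hj)⟩
    have hceq : (if ∃ σ ∈ Smax, ∀ j ∈ σ, f j = 0 then (1:ℤ) else 0)
        = (if ∃ σ ∈ Smax, ∀ j ∈ σ, (Function.update f i0 (e i0 - 1)) j = 0 then (1:ℤ) else 0) := by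
      simp only [hiff]
    have hsplit := Finset.sum_filter_add_sum_filter_not (Finset.Iic f)
      (fun g => g i0 = e i0) (fun g => μ (fun j => p ^ g j))
    simp only [hfilter, key f, key (Function.update f i0 (e i0 - 1)), hceq] at hsplit
    linarith
  -- Claim B: strong induction on the total degree
  have claimB : ∀ n : ℕ, ∀ f : Fin s → ℕ, (∑ j, f j) = n → f i0 = e i0 →
      μ (fun j => p ^ f j) = 0 := by
    intro n
    induction n using Nat.strong_induction_on with
    | _ n ih =>
      intro f hn hfi
      have hA := claimA f hfi
      have hf_mem : f ∈ (Finset.Iic f).filter (fun g => g i0 = e i0) := by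
        simp [hfi]
      rw [← Finset.add_sum_erase _ _ hf_mem] at hA
      have hzero : ∀ g ∈ ((Finset.Iic f).filter (fun g => g i0 = e i0)).erase f,
          μ (fun j => p ^ g j) = 0 := by
        intro g hg
        obtain ⟨hgne, hgmem⟩ := Finset.mem_erase.mp hg
        obtain ⟨hgle, hgi⟩ := Finset.mem_filter.mp hgmem
        have hgle' : g ≤ f := Finset.mem_Iic.mp hgle
        obtain ⟨j, hj⟩ := Function.ne_iff.mp hgne
        have hlt : ∑ j, g j < ∑ j, f j := by
          refine Finset.sum_lt_sum (fun k _ => hgle' k) ⟨j, Finset.mem_univ j, ?_⟩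
          exact lt_of_le_of_ne (hgle' j) hj
        exact ih _ (hn ▸ hlt) g rfl hgi
      rw [Finset.sum_eq_zero hzero, add_zero] at hA
      exact hA
  exact claimB (∑ j, e j) e rfl rfl
end

section
/- Let μ be the multiplicative Möbius-type function on s-tuples of nonzero ideals of the ring of integers O_K of a number field K, associated to a finite family {I_σ}_{σ ∈ Σ_max} of subsets of {1,...,s}. For β = (β_1,...,β_s) ∈ ℝ_{≥0}^s, define f_β = min{ ∑_i β_i e_i : (e_1,...,e_s) ≠ 0 and μ(p^{e_1},...,p^{e_s}) ≠ 0 } (independent of the prime p). If f_β > 1, then the series ∑_{d ∈ I_K^s} μ(d) / ∏_{i=1}^s N(d_i)^{β_i} converges absolutely, where N denotes the ideal norm. -/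
/-!
Restricted to the powers `v ^ e` of one nonzero prime `v`, the inversion formula says that the
sum of `μ (v ^ m)` over the box `m ≤ n` is the indicator that some `σ ∈ Σ_max` avoids the support
of `n`. This determines `μ (v ^ e)` independently of `v`, and since the indicator only sees the
support of `n`, `μ (v ^ e)` vanishes unless `e ≤ 1`. Multiplicativity writes each term of the
series as a product, over the primes `v` dividing the tuple, of local factors
`|μ (v ^ e)| N(v)^{-β·e} ≤ |μ (p ^ e)| N(v)^{-f_β}`. These bounds are summable over pairs `(v, e)`,
because at most `[K : ℚ]` primes have a given norm and `f_β > 1`, and a nonnegative series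
dominated by products of a summable family over pairwise distinct finite index sets converges
(`∏ (1 + w) ≤ exp ∑ w`).
-/

open scoped Classical

open Finset

theorem Finset.eq_of_sum_Iic_eq {α M : Type*} [PartialOrder α] [LocallyFiniteOrderBot α]
    [WellFoundedLT α] [AddCancelCommMonoid M] {f g : α → M}
    (h : ∀ a, ∑ x ∈ Iic a, f x = ∑ x ∈ Iic a, g x) : f = g := by
  funext a
  induction a using WellFoundedLT.induction with
  | _ a ih =>
    have hsplit := h a
    rw [← Iio_insert, sum_insert notMem_Iio_self, sum_insert notMem_Iio_self,
      sum_congr rfl fun x hx => ih x (mem_Iio.mp hx)] at hsplit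
    exact add_right_cancel hsplit

theorem Finset.eq_zero_of_sum_Iic_eq_of_inf_eq {α M : Type*} [Lattice α] [LocallyFiniteOrderBot α]
    [WellFoundedLT α] [AddCancelCommMonoid M] {g χ : α → M} (c : α)
    (hg : ∀ a, ∑ x ∈ Iic a, g x = χ a) (hχ : ∀ a, χ (a ⊓ c) = χ a) {a : α} (ha : ¬ a ≤ c) :
    g a = 0 := by
  have htrunc : (fun x => if x ≤ c then g x else 0) = g := by
    refine eq_of_sum_Iic_eq fun b => ?_
    have hfilter : (Iic b).filter (· ≤ c) = Iic (b ⊓ c) := by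
      ext x
      simp only [mem_filter, mem_Iic, le_inf_iff]
    rw [← sum_filter, hfilter, hg, hg, hχ]
  rw [← htrunc]
  exact if_neg ha

theorem Real.prod_finsetProd_pow_rpow_neg {ι κ : Type*} [Fintype ι] (S : Finset κ) {x : κ → ℝ}
    (hx : ∀ k ∈ S, 0 < x k) (e : κ → ι → ℕ) (β : ι → ℝ) :
    ∏ i, (∏ k ∈ S, x k ^ e k i) ^ (-β i) = ∏ k ∈ S, x k ^ (-∑ i, β i * e k i) := by
  calc ∏ i, (∏ k ∈ S, x k ^ e k i) ^ (-β i)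
      = ∏ i, ∏ k ∈ S, x k ^ (-(β i * e k i)) := by
        refine prod_congr rfl fun i _ => ?_
        rw [← Real.finsetProd_rpow _ _ fun k hk => pow_nonneg (hx k hk).le _]
        refine prod_congr rfl fun k hk => ?_
        rw [← Real.rpow_natCast, ← Real.rpow_mul (hx k hk).le]
        ring_nf
    _ = ∏ k ∈ S, x k ^ (-∑ i, β i * e k i) := by
        rw [prod_comm]
        refine prod_congr rfl fun k hk => ?_
        rw [← sum_neg_distrib, Real.rpow_sum_of_pos (hx k hk)]

theorem summable_of_le_prod_support {α β M : Type*} [Zero M] {F : α → ℝ} {W : β × M → ℝ}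
    (E : α → β →₀ M) (hE : Function.Injective E) (hF : ∀ a, 0 ≤ F a) (hW0 : ∀ x, 0 ≤ W x)
    (hW : Summable W) (hle : ∀ a, F a ≤ ∏ b ∈ (E a).support, W (b, E a b)) : Summable F := by
  refine .of_nonneg_of_le hF (fun a => ?_)
    ((summable_finsetProd_of_summable_nonneg hW0 hW).comp_injective
      ((Finsupp.graph_injective β M).comp hE))
  dsimp only [Function.comp_apply, Finsupp.graph]
  rw [prod_map]
  exact hle a

theorem Ideal.finsetSup_prod_pow_eq_top_iff {R ι : Type*} [CommSemiring R] {q : Ideal R}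
    (hq : q ≠ ⊤) (S : Finset (Finset ι)) (n : ι → ℕ) :
    S.sup (fun σ => ∏ i ∈ σ, q ^ n i) = ⊤ ↔ ∃ σ ∈ S, ∀ i ∈ σ, n i = 0 := by
  simp_rw [prod_pow_eq_pow_sum]
  constructor
  · intro htop
    by_contra! hS
    refine hq (top_le_iff.mp (htop ▸ Finset.sup_le fun σ hσ => Ideal.pow_le_self ?_))
    obtain ⟨i, hi, hni⟩ := hS σ hσ
    exact fun h => hni (sum_eq_zero_iff.mp h i hi)
  · rintro ⟨σ, hσ, hzero⟩
    refine top_le_iff.mp (le_sup_of_le hσ ?_)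
    rw [sum_eq_zero hzero, pow_zero, Ideal.one_eq_top]

def IsCoprimeMultiplicative {R ι : Type*} [CommSemiring R] [Fintype ι]
    (μ : (ι → Ideal R) → ℤ) : Prop :=
  ∀ a b : ι → Ideal R, (∏ i, a i) ⊔ (∏ i, b i) = ⊤ → μ (fun i => a i * b i) = μ a * μ b

theorem IsCoprimeMultiplicative.map_finset_prod {R ι : Type*} [CommSemiring R] [Fintype ι]
    {μ : (ι → Ideal R) → ℤ}
    (hμ : IsCoprimeMultiplicative μ) (h1 : μ 1 = 1) {κ : Type*} (S : Finset κ)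
    (x : κ → ι → Ideal R)
    (hx : (S : Set κ).Pairwise fun a b => IsCoprime (∏ i, x a i) (∏ i, x b i)) :
    μ (fun i => ∏ k ∈ S, x k i) = ∏ k ∈ S, μ (x k) := by
  induction S using Finset.induction_on with
  | empty => simp only [prod_empty]; exact h1
  | insert a S haS ih =>
    have hcop : IsCoprime (∏ i, x a i) (∏ i, ∏ k ∈ S, x k i) := by
      rw [prod_comm]
      exact IsCoprime.prod_right fun k hk =>
        hx (mem_insert_self a S) (mem_insert_of_mem hk) (ne_of_mem_of_not_mem hk haS).symm
    simp_rw [prod_insert haS]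
    rw [hμ _ _ (Ideal.isCoprime_iff_sup_eq.mp hcop),
      ih (hx.mono (coe_subset.mpr (subset_insert a S)))]

namespace IsDedekindDomain.HeightOneSpectrum

variable {R : Type*} [CommRing R] [IsDedekindDomain R]

theorem isCoprime_asIdeal {v w : HeightOneSpectrum R} (hvw : v ≠ w) :
    IsCoprime v.asIdeal w.asIdeal := by
  have := v.isMaximal
  have := w.isMaximal
  exact Ideal.isCoprime_of_isMaximal fun h => hvw (HeightOneSpectrum.ext h)

theorem isCoprime_prod_pow {ι : Type*} [Fintype ι] {v w : HeightOneSpectrum R} (hvw : v ≠ w)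
    (a b : ι → ℕ) : IsCoprime (∏ i, v.asIdeal ^ a i) (∏ i, w.asIdeal ^ b i) := by
  simp_rw [prod_pow_eq_pow_sum]
  exact (isCoprime_asIdeal hvw).pow

theorem pow_right_injective (v : HeightOneSpectrum R) :
    Function.Injective (v.asIdeal ^ · : ℕ → Ideal R) :=
  (Ideal.pow_right_strictAnti _ v.ne_bot v.isPrime.ne_top).injective

theorem setOf_pow_le_eq_image {ι : Type*} [Fintype ι] (v : HeightOneSpectrum R) (n : ι → ℕ) :
    {d : ι → Ideal R | ∀ i, v.asIdeal ^ n i ≤ d i} =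
      (Iic n).image (fun m i => v.asIdeal ^ m i) := by
  ext d
  simp only [Set.mem_ofPred_eq, coe_image, Set.mem_image, mem_coe, mem_Iic, ← Ideal.dvd_iff_le,
    dvd_prime_pow v.prime, associated_iff_eq]
  constructor
  · intro hd
    choose m hmn hm using hd
    exact ⟨m, hmn, funext fun i => (hm i).symm⟩
  · rintro ⟨m, hmn, rfl⟩ i
    exact ⟨m i, hmn i, rfl⟩

section MultiplicityVector

variable {ι : Type*} [Finite ι]

theorem finite_support_multiplicity (d : ι → {I : Ideal R // I ≠ ⊥}) :
    (Function.support fun (v : HeightOneSpectrum R) i => multiplicity v.asIdeal (d i).1).Finite :=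
  (Set.finite_iUnion fun i => Ideal.finite_factors (d i).2).subset fun _ hv =>
    let ⟨i, hi⟩ := Function.ne_iff.mp hv
    Set.mem_iUnion.mpr ⟨i, not_not.mp (mt multiplicity_eq_zero.mpr hi)⟩

noncomputable def multiplicityVector (d : ι → {I : Ideal R // I ≠ ⊥}) :
    HeightOneSpectrum R →₀ (ι → ℕ) :=
  Finsupp.ofSupportFinite _ (finite_support_multiplicity d)

theorem prod_pow_multiplicityVector (d : ι → {I : Ideal R // I ≠ ⊥}) (i : ι) :
    ∏ v ∈ (multiplicityVector d).support, v.asIdeal ^ multiplicityVector d v i = (d i).1 := by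
  refine (finprod_eq_prod_of_mulSupport_subset _ fun v hv => ?_).symm.trans
    (Ideal.finprod_heightOneSpectrum_pow_multiplicity (d i).2)
  rw [mem_coe, Finsupp.mem_support_iff]
  exact fun h => hv (by simp only [h, Pi.zero_apply, pow_zero])

theorem multiplicityVector_injective :
    Function.Injective (multiplicityVector : (ι → {I : Ideal R // I ≠ ⊥}) → _) := by
  intro d d' h
  funext i
  rw [Subtype.ext_iff, ← prod_pow_multiplicityVector d, ← prod_pow_multiplicityVector d', h]

end MultiplicityVector

section AbsNorm

variable [Module.Free ℤ R] [Module.Finite ℤ R]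

theorem card_le_finrank_of_absNorm_eq {n : ℕ} {V : Finset (HeightOneSpectrum R)}
    (hV : ∀ v ∈ V, Ideal.absNorm v.asIdeal = n) : #V ≤ Module.finrank ℤ R := by
  obtain rfl | ⟨v₀, hv₀⟩ := V.eq_empty_or_nonempty
  · simp
  have hn : 1 < n := hV v₀ hv₀ ▸ NumberField.HeightOneSpectrum.one_lt_absNorm v₀
  -- the distinct primes of norm `n` all contain `n`, whose norm is `n ^ [R : ℤ]`
  have hdvd : ∏ v ∈ V, v.asIdeal ∣ Ideal.span {(n : R)} := by
    refine prod_dvd_of_coprime (fun v _ w _ hvw => isCoprime_asIdeal hvw) fun v hv => ?_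
    rw [Ideal.dvd_span_singleton, ← hV v hv]
    exact Ideal.absNorm_mem _
  have hnorm := map_dvd Ideal.absNorm hdvd
  rw [map_prod, prod_congr rfl hV, prod_const, Ideal.absNorm_span_singleton,
    ← map_natCast (algebraMap ℤ R), Algebra.norm_algebraMap, Int.natAbs_pow,
    Int.natAbs_natCast] at hnorm
  exact (Nat.pow_dvd_pow_iff_le_right hn).mp hnorm

theorem summable_absNorm_rpow_neg {t : ℝ} (ht : 1 < t) :
    Summable fun v : HeightOneSpectrum R => (Ideal.absNorm v.asIdeal : ℝ) ^ (-t) := by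
  have hζ : Summable fun n : ℕ => (n : ℝ) ^ (-t) := Real.summable_nat_rpow.mpr (by linarith)
  refine summable_of_sum_le (c := Module.finrank ℤ R * ∑' n : ℕ, (n : ℝ) ^ (-t))
    (fun v => by positivity) fun V => ?_
  rw [sum_comp (fun n : ℕ => (n : ℝ) ^ (-t))]
  calc _ ≤ ∑ n ∈ V.image (Ideal.absNorm ·.asIdeal), (Module.finrank ℤ R : ℝ) * (n : ℝ) ^ (-t) :=
        sum_le_sum fun n _ => by
          rw [nsmul_eq_mul]
          gcongr
          exact_mod_cast card_le_finrank_of_absNorm_eq fun v hv => (mem_filter.mp hv).2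
    _ ≤ _ := by
        rw [← mul_sum]
        gcongr
        exact hζ.sum_le_tsum _ fun _ _ => by positivity

end AbsNorm

end IsDedekindDomain.HeightOneSpectrum

open IsDedekindDomain HeightOneSpectrum

namespace IsCoprimeMultiplicative

variable {R ι : Type*} [CommRing R] [IsDedekindDomain R] [Fintype ι] {μ : (ι → Ideal R) → ℤ}
  (hμ : IsCoprimeMultiplicative μ) (h1 : μ 1 = 1)
include hμ h1

theorem map_eq_prod_multiplicityVector (d : ι → {I : Ideal R // I ≠ ⊥}) :
    μ (fun i => (d i).1) = ∏ v ∈ (multiplicityVector d).support,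
      μ (fun i => v.asIdeal ^ multiplicityVector d v i) := by
  simp_rw [← prod_pow_multiplicityVector d]
  exact hμ.map_finset_prod h1 _ _ fun v _ w _ hvw => isCoprime_prod_pow hvw _ _

theorem abs_mul_prod_absNorm_rpow_eq [Module.Free ℤ R] [Module.Finite ℤ R]
    (d : ι → {I : Ideal R // I ≠ ⊥}) (β : ι → ℝ) :
    |(μ (fun i => (d i).1) : ℝ)| * ∏ i, (Ideal.absNorm (d i).1 : ℝ) ^ (-β i) =
      ∏ v ∈ (multiplicityVector d).support,
        |(μ (fun i => v.asIdeal ^ multiplicityVector d v i) : ℝ)| *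
          (Ideal.absNorm v.asIdeal : ℝ) ^ (-∑ i, β i * multiplicityVector d v i) := by
  have hnorm : ∀ i, (Ideal.absNorm (d i).1 : ℝ) = ∏ v ∈ (multiplicityVector d).support,
      (Ideal.absNorm v.asIdeal : ℝ) ^ multiplicityVector d v i := fun i => by
    conv_lhs => rw [← prod_pow_multiplicityVector d i]
    push_cast [map_prod, map_pow]
    rfl
  rw [prod_mul_distrib, hμ.map_eq_prod_multiplicityVector h1, Int.cast_prod, abs_prod]
  simp_rw [hnorm]
  rw [Real.prod_finsetProd_pow_rpow_neg _ fun v _ => by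
    exact_mod_cast (NumberField.HeightOneSpectrum.one_lt_absNorm v).trans' zero_lt_one]

end IsCoprimeMultiplicative

def IsMobiusOfCover {R ι : Type*} [CommRing R] [Fintype ι] (Smax : Finset (Finset ι))
    (μ : (ι → Ideal R) → ℤ) : Prop :=
  ∀ b : ι → Ideal R, (∀ i, b i ≠ ⊥) →
    (if Smax.sup (fun σ => ∏ i ∈ σ, b i) = ⊤ then (1 : ℤ) else 0) =
      ∑ᶠ d : ι → Ideal R, Set.indicator {d | ∀ i, b i ≤ d i} μ d

namespace IsMobiusOfCover

variable {R ι : Type*} [CommRing R] [IsDedekindDomain R] [Fintype ι]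
  {Smax : Finset (Finset ι)} {μ : (ι → Ideal R) → ℤ} (hμ : IsMobiusOfCover Smax μ)
include hμ

theorem sum_Iic_pow (v : HeightOneSpectrum R) (n : ι → ℕ) :
    ∑ m ∈ Iic n, μ (fun i => v.asIdeal ^ m i) =
      if ∃ σ ∈ Smax, ∀ i ∈ σ, n i = 0 then 1 else 0 := by
  have hinj : Set.InjOn (fun m i => v.asIdeal ^ m i : (ι → ℕ) → ι → Ideal R) (Iic n) :=
    fun m _ m' _ h => funext fun i => v.pow_right_injective (congrFun h i)
  have h := hμ _ fun i => pow_ne_zero (n i) v.ne_bot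
  simp only [Ideal.finsetSup_prod_pow_eq_top_iff v.isPrime.ne_top] at h
  rw [h, ← finsum_mem_def, setOf_pow_le_eq_image, finsum_mem_coe_finset, sum_image hinj]

theorem map_pow_eq (v w : HeightOneSpectrum R) (n : ι → ℕ) :
    μ (fun i => v.asIdeal ^ n i) = μ (fun i => w.asIdeal ^ n i) :=
  congrFun (eq_of_sum_Iic_eq (f := fun n => μ fun i => v.asIdeal ^ n i)
    (g := fun n => μ fun i => w.asIdeal ^ n i) fun n => by simp only [hμ.sum_Iic_pow]) n

theorem map_pow_eq_zero (v : HeightOneSpectrum R) {n : ι → ℕ} (hn : ¬ n ≤ 1) :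
    μ (fun i => v.asIdeal ^ n i) = 0 := by
  refine eq_zero_of_sum_Iic_eq_of_inf_eq 1 (hμ.sum_Iic_pow v) (fun n => ?_) hn
  have hzero : ∀ i, (n ⊓ 1) i = 0 ↔ n i = 0 := fun i => by simp
  simp only [hzero]

theorem map_one (hS : Smax.Nonempty) (v : HeightOneSpectrum R) : μ 1 = 1 := by
  have h := hμ.sum_Iic_pow v 0
  rw [if_pos (hS.elim fun σ hσ => ⟨σ, hσ, fun _ _ => rfl⟩),
    show Iic (0 : ι → ℕ) = {0} from Iic_bot, sum_singleton] at h
  simpa only [Pi.zero_apply, pow_zero, Pi.one_def] using h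

theorem summable_abs_map_pow (v : HeightOneSpectrum R) :
    Summable fun e : ι → ℕ => |(μ (fun i => v.asIdeal ^ e i) : ℝ)| :=
  summable_of_ne_finset_zero (s := Iic 1) fun e he => by
    rw [hμ.map_pow_eq_zero v (by simpa using he), Int.cast_zero, abs_zero]

end IsMobiusOfCover

/-- let `μ` be the multiplicative Möbius-type function on
`s`-tuples of nonzero ideals of `𝓞 K` associated to a family `{I_σ}` of subsets
of `{1,…,s}`, and let `f_β = min{∑ β_i e_i : e ≠ 0, μ(p^{e}) ≠ 0}`. If
`f_β > 1`, then `∑_d μ(d)/∏ N(d_i)^{β_i}` converges absolutely. -/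
theorem stmt_12 (K : Type*) [Field K] [NumberField K] (s : ℕ)
    (Smax : Finset (Finset (Fin s))) (hS : Smax.Nonempty)
    (μ : (Fin s → Ideal (NumberField.RingOfIntegers K)) → ℤ)
    (hmul : ∀ a b : Fin s → Ideal (NumberField.RingOfIntegers K),
      (∏ i, a i) ⊔ (∏ i, b i) = ⊤ → μ (fun i => a i * b i) = μ a * μ b)
    (hinv : ∀ b : Fin s → Ideal (NumberField.RingOfIntegers K),
      (∀ i, b i ≠ ⊥) →
      (if Smax.sup (fun σ => ∏ i ∈ σ, b i) = ⊤ then (1 : ℤ) else 0) =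
        ∑ᶠ d : Fin s → Ideal (NumberField.RingOfIntegers K),
          Set.indicator {d | ∀ i, b i ≤ d i} μ d)
    (β : Fin s → ℝ) (hβ : ∀ i, 0 ≤ β i)
    (p : Ideal (NumberField.RingOfIntegers K)) (hp : p.IsPrime) (hp0 : p ≠ ⊥)
    (hfβ : 1 < sInf {x : ℝ | ∃ e : Fin s → ℕ, e ≠ 0 ∧
      μ (fun i => p ^ e i) ≠ 0 ∧ x = ∑ i, β i * e i}) :
    Summable (fun d : Fin s → {I : Ideal (NumberField.RingOfIntegers K) // I ≠ ⊥} =>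
      |(μ (fun i => (d i).1) : ℝ)| *
        ∏ i, (Ideal.absNorm (d i).1 : ℝ) ^ (-(β i))) := by
  have hμinv : IsMobiusOfCover Smax μ := hinv
  have hμmul : IsCoprimeMultiplicative μ := hmul
  let 𝔭 : HeightOneSpectrum (NumberField.RingOfIntegers K) := ⟨p, hp, hp0⟩
  set t := sInf {x : ℝ | ∃ e : Fin s → ℕ, e ≠ 0 ∧
      μ (fun i => p ^ e i) ≠ 0 ∧ x = ∑ i, β i * e i}
  have hexp : ∀ e : Fin s → ℕ, e ≠ 0 → μ (fun i => p ^ e i) ≠ 0 → t ≤ ∑ i, β i * e i :=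
    fun e he hμe => csInf_le ⟨0, by
      rintro _ ⟨e, -, -, rfl⟩
      exact sum_nonneg fun i _ => mul_nonneg (hβ i) (Nat.cast_nonneg _)⟩ ⟨e, he, hμe, rfl⟩
  refine summable_of_le_prod_support multiplicityVector multiplicityVector_injective
    (fun d => by positivity) (fun x => by positivity)
    ((summable_absNorm_rpow_neg hfβ).mul_of_nonneg (hμinv.summable_abs_map_pow 𝔭)
      (fun _ => by positivity) fun _ => by positivity) fun d => ?_
  rw [hμmul.abs_mul_prod_absNorm_rpow_eq (hμinv.map_one hS 𝔭)]
  refine prod_le_prod (fun v _ => by positivity) fun v hv => ?_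
  set e := multiplicityVector d v
  rw [hμinv.map_pow_eq v 𝔭, mul_comm]
  by_cases hμe : μ (fun i => 𝔭.asIdeal ^ e i) = 0
  · simp [hμe]
  · gcongr
    · exact_mod_cast (NumberField.HeightOneSpectrum.one_lt_absNorm v).le
    · exact hexp e (Finsupp.mem_support_iff.mp hv) hμe
end
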